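/- arXiv:2104.08516 — 8 statements merged into one kernel-verified Lean document; each statement's English description precedes it below -/
import Mathlib

section
/- The exponential generating function identity Σ_{n≥0} L_n^{(α)}(x) t^n/n! = (1+t)^{-(α+1)} e^{x t/(1+t)} holds as an identity of formal power series in t, where L_n^{(α)}(x) = Σ_{k=0}^n (-1)^{n-k} C(n,k) (α+1+k)^{rising (n-k)} x^k. -/
/-!
Writing `x t / (1 + t) = x t (1 + t)^{-1}`, the law of exponents
`(1 + t)^a (1 + t)^b = (1 + t)^{a + b}` (coefficientwise the Chu–Vandermonde identity for falling
factorials) turns the right-hand side into `Σ_m x^m / m! · t^m (1 + t)^{-(α + 1 + m)}`; since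
`x t / (1 + t)` has no constant term, only `m ≤ n` contributes to the coefficient of `t^n`. The
coefficient of `t^{n - k}` in `(1 + t)^{-(α + 1 + k)}` is
`(-1)^{n-k} (α + 1 + k)^{rising (n - k)} / (n - k)!`, so summing over `k ≤ n` gives
`L_n^{(α)}(x) / n!`.
-/

open Finset PowerSeries

/-- `L_n^{(α)}(x) = Σ_{k=0}^n (-1)^{n-k} C(n,k) (α+1+k)^{rising (n-k)} x^k`. -/
noncomputable def laguerreVal (α x : ℝ) (n : ℕ) : ℝ :=
  ∑ k ∈ Finset.range (n + 1),
    (-1 : ℝ) ^ (n - k) * (n.choose k : ℝ) *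
      (∏ j ∈ Finset.range (n - k), (α + 1 + (k : ℝ) + (j : ℝ))) * x ^ k

/-- The binomial series `(1+t)^c = Σ_n c(c-1)···(c-n+1)/n! · t^n`. -/
noncomputable def binomialSeries' (c : ℝ) : PowerSeries ℝ :=
  PowerSeries.mk fun n => (∏ i ∈ Finset.range n, (c - (i : ℝ))) / (n.factorial : ℝ)

/-- The exponential `exp g = Σ_m g^m/m!` of a formal power series `g`
(with zero constant term); the coefficient of `t^n` only involves `g^m` for `m ≤ n`. -/
noncomputable def expSeries (g : PowerSeries ℝ) : PowerSeries ℝ :=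
  PowerSeries.mk fun n =>
    PowerSeries.coeff n (∑ m ∈ Finset.range (n + 1), ((m.factorial : ℝ)⁻¹) • g ^ m)

open scoped Nat

lemma descPochhammer_smeval_eq_prod_range {R : Type*} [CommRing R] (r : R) (n : ℕ) :
    (descPochhammer ℤ n).smeval r = ∏ j ∈ range n, (r - j) := by
  rw [← Polynomial.aeval_eq_smeval, ← Polynomial.eval_map_algebraMap, descPochhammer_map,
    descPochhammer_eval_eq_prod_range]

lemma prod_range_add_sub_eq_sum_antidiagonal {R : Type*} [CommRing R] (a b : R) (n : ℕ) :
    ∏ i ∈ range n, (a + b - i) = ∑ ij ∈ antidiagonal n,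
      n.choose ij.1 * ((∏ i ∈ range ij.1, (a - i)) * ∏ i ∈ range ij.2, (b - i)) := by
  simpa [descPochhammer_smeval_eq_prod_range] using
    Ring.descPochhammer_smeval_add (r := a) (s := b) n (Commute.all a b)

lemma binomialSeries'_mul (a b : ℝ) :
    binomialSeries' a * binomialSeries' b = binomialSeries' (a + b) := by
  ext n
  simp only [coeff_mul, binomialSeries', coeff_mk]
  rw [prod_range_add_sub_eq_sum_antidiagonal, sum_div]
  refine sum_congr rfl fun ij hij => ?_
  obtain rfl : ij.1 + ij.2 = n := mem_antidiagonal.mp hij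
  rw [Nat.cast_choose ℝ (Nat.le_add_right _ _), Nat.add_sub_cancel_left]
  field_simp

lemma binomialSeries'_zero : binomialSeries' 0 = 1 := by
  ext (_ | n)
  · simp [binomialSeries']
  · simp [binomialSeries', prod_range_succ']

lemma binomialSeries'_one : binomialSeries' 1 = 1 + X := by
  ext (_ | _ | n)
  · simp [binomialSeries']
  · simp [binomialSeries']
  · simp [binomialSeries', prod_range_succ', coeff_X]

lemma inv_one_add_X_eq_binomialSeries' : (1 + X : ℝ⟦X⟧)⁻¹ = binomialSeries' (-1) := by
  rw [PowerSeries.inv_eq_iff_mul_eq_one (by simp), ← binomialSeries'_one, binomialSeries'_mul,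
    neg_add_cancel, binomialSeries'_zero]

lemma binomialSeries'_neg_one_pow (m : ℕ) :
    binomialSeries' (-1) ^ m = binomialSeries' (-m) := by
  induction m with
  | zero => simp [binomialSeries'_zero]
  | succ m ih =>
    rw [pow_succ, ih, binomialSeries'_mul]
    congr 1
    push_cast
    ring

lemma coeff_binomialSeries'_neg (c : ℝ) (n : ℕ) :
    coeff n (binomialSeries' (-c)) = (-1) ^ n * (∏ i ∈ range n, (c + i)) / n ! := by
  have h (i : ℕ) : -c - i = -1 * (c + i) := by ring
  simp only [binomialSeries', coeff_mk, h, prod_mul_distrib, prod_const, card_range]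

lemma coeff_pow_eq_zero_of_lt {R : Type*} [CommSemiring R] {g : R⟦X⟧} (hg : constantCoeff g = 0)
    {n m : ℕ} (h : n < m) : coeff n (g ^ m) = 0 :=
  X_pow_dvd_iff.mp (pow_dvd_pow_of_dvd (X_dvd_iff.mpr hg) m) n h

lemma trunc_expSeries {g : ℝ⟦X⟧} (hg : constantCoeff g = 0) (n : ℕ) :
    trunc (n + 1) (expSeries g) = trunc (n + 1) (∑ m ∈ range (n + 1), (m ! : ℝ)⁻¹ • g ^ m) := by
  ext q
  simp only [coeff_trunc]
  split_ifs with hq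
  · rw [expSeries, coeff_mk, map_sum, map_sum]
    refine sum_subset (range_subset_range.mpr hq) fun m _ hm => ?_
    rw [map_smul, coeff_pow_eq_zero_of_lt hg (by simpa using hm), smul_zero]
  · rfl

lemma smul_X_mul_inv_one_add_X_pow (x : ℝ) (m : ℕ) :
    (x • (X * (1 + X : ℝ⟦X⟧)⁻¹)) ^ m = x ^ m • (X ^ m * binomialSeries' (-m)) := by
  rw [smul_pow, mul_pow, inv_one_add_X_eq_binomialSeries', binomialSeries'_neg_one_pow]

lemma laguerreVal_div_factorial (α x : ℝ) (n : ℕ) :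
    laguerreVal α x n / n ! = ∑ k ∈ range (n + 1),
      x ^ k / k ! * coeff (n - k) (binomialSeries' (-(α + 1 + k))) := by
  rw [laguerreVal, sum_div]
  refine sum_congr rfl fun k hk => ?_
  rw [coeff_binomialSeries'_neg, Nat.cast_choose ℝ (mem_range_succ_iff.mp hk)]
  field_simp

/-- the exponential generating function identity
`Σ_{n≥0} L_n^{(α)}(x) t^n/n! = (1+t)^{-(α+1)} e^{x t/(1+t)}`
as formal power series in `t`. -/
theorem laguerre_egf (α x : ℝ) :
    (PowerSeries.mk fun n => laguerreVal α x n / (n.factorial : ℝ))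
      = binomialSeries' (-(α + 1)) *
        expSeries (x • (PowerSeries.X * (1 + PowerSeries.X : PowerSeries ℝ)⁻¹)) := by
  ext n
  have hg : constantCoeff (x • (X * (1 + X : ℝ⟦X⟧)⁻¹)) = 0 := by simp
  rw [coeff_mk, coeff_mul_eq_coeff_trunc_mul_trunc _ _ n.lt_succ_self, trunc_expSeries hg,
    ← coeff_mul_eq_coeff_trunc_mul_trunc _ _ n.lt_succ_self, laguerreVal_div_factorial, mul_sum,
    map_sum]
  refine sum_congr rfl fun k hk => ?_
  rw [smul_X_mul_inv_one_add_X_pow, smul_smul, mul_smul_comm, mul_left_comm, binomialSeries'_mul,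
    ← neg_add, map_smul, coeff_X_pow_mul', if_pos (mem_range_succ_iff.mp hk), smul_eq_mul]
  ring
end

section
/- Let LD_n denote the set of Laguerre digraphs on the vertex set [n] = {1,...,n}: digraphs in which each vertex has out-degree at most 1 and in-degree at most 1. For G ∈ LD_n let pa(G) be the number of path components and cyc(G) the number of cycle components of G. Then Σ_{G ∈ LD_n} x^{pa(G)} (α+1)^{cyc(G)} = Σ_{k=0}^n C(n,k) (α+1+k)^{rising (n-k)} x^k. -/
set_option linter.unusedSectionVars false

namespace LD

variable {V : Type*} [Fintype V] [DecidableEq V]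

def IsLaguerre (E : Finset (V × V)) : Prop :=
  (∀ a b c : V, (a, b) ∈ E → (a, c) ∈ E → b = c) ∧
  (∀ a b c : V, (a, c) ∈ E → (b, c) ∈ E → a = b)

instance : DecidablePred (IsLaguerre (V := V)) := fun _ => by
  unfold IsLaguerre; infer_instance

def Adj (E : Finset (V × V)) (a b : V) : Prop := (a, b) ∈ E ∨ (b, a) ∈ E

def Component (E : Finset (V × V)) (v : V) : Set V :=
  {w | Relation.ReflTransGen (Adj E) v w}

def IsCycleSet (E : Finset (V × V)) (S : Set V) : Prop :=
  S.Nonempty ∧ (∀ v ∈ S, ∃ w ∈ S, (v, w) ∈ E) ∧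
  ∀ T ⊆ S, T.Nonempty → (∀ v ∈ T, ∃ w ∈ T, (v, w) ∈ E) → T = S

noncomputable def cyc (E : Finset (V × V)) : ℕ :=
  Set.ncard {S : Set V | IsCycleSet E S}

noncomputable def pa (E : Finset (V × V)) : ℕ :=
  Set.ncard {C : Set V | (∃ v, C = Component E v) ∧ ∃ v ∈ C, ∀ w, (v, w) ∉ E}

end LD

open Finset

namespace LDP
open LD

variable {V : Type*} [Fintype V] [DecidableEq V]
variable {E E' : Finset (V × V)}

noncomputable def nxt (E : Finset (V × V)) (a : V) : Option V :=
  if h : ∃ b, (a, b) ∈ E then some h.choose else none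

noncomputable def F (E : Finset (V × V)) : Option V → Option V := fun o => o.bind (nxt E)

@[simp] lemma F_none : F E none = none := rfl
@[simp] lemma F_some (a : V) : F E (some a) = nxt E a := rfl

lemma F_iter_none (k : ℕ) : (F E)^[k] none = none := by
  induction k with
  | zero => rfl
  | succ k ih => rw [Function.iterate_succ_apply, F_none, ih]

lemma nxt_mem {a b : V} (h : nxt E a = some b) : (a, b) ∈ E := by
  unfold nxt at h
  split_ifs at h with hex
  · rw [← Option.some.inj h]; exact hex.choose_spec

lemma nxt_none {a : V} (h : ∀ b, (a, b) ∉ E) : nxt E a = none := by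
  unfold nxt
  exact dif_neg (by rintro ⟨b, hb⟩; exact h b hb)

lemma mem_nxt (hL : IsLaguerre E) {a b : V} (h : (a, b) ∈ E) : nxt E a = some b := by
  have hex : ∃ c, (a, c) ∈ E := ⟨b, h⟩
  unfold nxt
  rw [dif_pos hex]
  exact congrArg some (hL.1 a hex.choose b hex.choose_spec h)

lemma F_inj (hL : IsLaguerre E) {p q : Option V} {c : V}
    (hp : F E p = some c) (hq : F E q = some c) : p = q := by
  cases p with
  | none => simp at hp
  | some a =>
    cases q with
    | none => simp at hq
    | some b =>
      exact congrArg some (hL.2 a b c (nxt_mem hp) (nxt_mem hq))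

lemma F_iter_inj (hL : IsLaguerre E) : ∀ {k : ℕ} {p q : Option V} {c : V},
    (F E)^[k] p = some c → (F E)^[k] q = some c → p = q := by
  intro k
  induction k with
  | zero => intro p q c hp hq; rw [Function.iterate_zero_apply] at hp hq; rw [hp, hq]
  | succ k ih =>
    intro p q c hp hq
    rw [Function.iterate_succ_apply] at hp hq
    have h1 : F E p = F E q := by
      have hpn : F E p ≠ none := by
        intro h; rw [h, F_iter_none] at hp; exact nomatch hp
      obtain ⟨d, hd⟩ := Option.ne_none_iff_exists'.mp hpn
      have := ih hp hq
      rw [hd] at this ⊢; rw [this]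
    have hpn : F E p ≠ none := by
      intro h; rw [h, F_iter_none] at hp; exact nomatch hp
    obtain ⟨d, hd⟩ := Option.ne_none_iff_exists'.mp hpn
    exact F_inj hL hd (h1 ▸ hd)

lemma iter_some_succ {k : ℕ} {a c : V} (h : (F E)^[k+1] (some a) = some c) :
    ∃ b, nxt E a = some b ∧ (F E)^[k] (some b) = some c := by
  rw [Function.iterate_succ_apply, F_some] at h
  cases hn : nxt E a with
  | none => rw [hn, F_iter_none] at h; exact nomatch h
  | some b => rw [hn] at h; exact ⟨b, rfl, h⟩

lemma iter_some_succ' {k : ℕ} {a c : V} (h : (F E)^[k+1] (some a) = some c) :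
    ∃ b, (F E)^[k] (some a) = some b ∧ nxt E b = some c := by
  rw [Function.iterate_succ_apply'] at h
  cases hn : (F E)^[k] (some a) with
  | none => rw [hn, F_none] at h; exact nomatch h
  | some b => rw [hn] at h; exact ⟨b, rfl, h⟩

lemma reach_rtg : ∀ {k : ℕ} {a b : V}, (F E)^[k] (some a) = some b →
    Relation.ReflTransGen (Adj E) a b := by
  intro k
  induction k with
  | zero => intro a b h; rw [Function.iterate_zero_apply] at h
            rw [Option.some.inj h]
  | succ k ih =>
    intro a b h
    obtain ⟨c, hc, hcb⟩ := iter_some_succ h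
    exact Relation.ReflTransGen.head (Or.inl (nxt_mem hc)) (ih hcb)

def Rch (E : Finset (V × V)) (a b : V) : Prop :=
  ∃ (i j : ℕ) (c : V), (F E)^[i] (some a) = some c ∧ (F E)^[j] (some b) = some c

lemma rch_refl (a : V) : Rch E a a := ⟨0, 0, a, rfl, rfl⟩

lemma rch_trans {a b c : V} (h1 : Rch E a b) (h2 : Rch E b c) : Rch E a c := by
  obtain ⟨i, j, d, hi, hj⟩ := h1
  obtain ⟨k, l, e, hk, hl⟩ := h2
  rcases le_or_gt j k with hjk | hjk
  · refine ⟨i + (k - j), l, e, ?_, hl⟩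
    calc (F E)^[i + (k-j)] (some a) = (F E)^[k-j] ((F E)^[i] (some a)) := by
            rw [add_comm, Function.iterate_add_apply]
      _ = (F E)^[k-j] ((F E)^[j] (some b)) := by rw [hi, hj]
      _ = (F E)^[k] (some b) := by rw [← Function.iterate_add_apply, Nat.sub_add_cancel hjk]
      _ = some e := hk
  · refine ⟨i, l + (j - k), d, hi, ?_⟩
    calc (F E)^[l + (j-k)] (some c) = (F E)^[j-k] ((F E)^[l] (some c)) := by
            rw [add_comm, Function.iterate_add_apply]
      _ = (F E)^[j-k] ((F E)^[k] (some b)) := by rw [hl, hk]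
      _ = (F E)^[j] (some b) := by rw [← Function.iterate_add_apply, Nat.sub_add_cancel hjk.le]
      _ = some d := hj

lemma adj_rch (hL : IsLaguerre E) {a b : V} (h : Adj E a b) : Rch E a b := by
  rcases h with h | h
  · exact ⟨1, 0, b, by simp [mem_nxt hL h], rfl⟩
  · exact ⟨0, 1, a, rfl, by simp [mem_nxt hL h]⟩

lemma rtg_rch (hL : IsLaguerre E) {a b : V} (h : Relation.ReflTransGen (Adj E) a b) :
    Rch E a b := by
  induction h with
  | refl => exact rch_refl a
  | tail _ hadj ih => exact rch_trans ih (adj_rch hL hadj)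

lemma sink_iter {v c : V} {i : ℕ} (hv : ∀ w, (v, w) ∉ E)
    (h : (F E)^[i] (some v) = some c) : c = v := by
  cases i with
  | zero => exact (Option.some.inj h).symm
  | succ i =>
    rw [Function.iterate_succ_apply, F_some, nxt_none hv, F_iter_none] at h
    exact nomatch h

lemma pa_eq (hL : IsLaguerre E) :
    pa E = (univ.filter (fun v => ∀ w, (v, w) ∉ E)).card := by
  have hsymm : Symmetric (Adj E) := fun a b h => Or.symm h
  have hset : {C : Set V | (∃ v, C = Component E v) ∧ ∃ v ∈ C, ∀ w, (v, w) ∉ E}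
      = (Component E) '' {v : V | ∀ w, (v, w) ∉ E} := by
    ext C
    constructor
    · rintro ⟨⟨u, rfl⟩, v, hvC, hvsink⟩
      refine ⟨v, hvsink, ?_⟩
      have hvC' : Relation.ReflTransGen (Adj E) u v := hvC
      ext w
      constructor
      · intro hw
        have hw' : Relation.ReflTransGen (Adj E) v w := hw
        exact hvC'.trans hw'
      · intro hw
        have hw' : Relation.ReflTransGen (Adj E) u w := hw
        exact ((@Relation.ReflTransGen.symmetric V (Adj E) ⟨fun a b h => hsymm h⟩).symm _ _ hvC').trans hw'
    · rintro ⟨v, hv, rfl⟩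
      exact ⟨⟨v, rfl⟩, v, Relation.ReflTransGen.refl, hv⟩
  have hinj : Set.InjOn (Component E) {v : V | ∀ w, (v, w) ∉ E} := by
    intro v hv v' hv' heq
    have hvv' : v' ∈ Component E v := by
      rw [heq]; exact Relation.ReflTransGen.refl
    obtain ⟨i, j, c, hi, hj⟩ := rtg_rch hL (show Relation.ReflTransGen (Adj E) v v' from hvv')
    exact (sink_iter hv hi).symm.trans (sink_iter hv' hj)
  rw [pa, hset, Set.ncard_image_of_injOn hinj]
  have : {v : V | ∀ w, (v, w) ∉ E} = ↑(univ.filter (fun v => ∀ w, (v, w) ∉ E)) := by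
    ext v; simp
  rw [this, Set.ncard_coe_finset]

def Orb (E : Finset (V × V)) (v : V) : Set V := {u | ∃ k, (F E)^[k] (some v) = some u}

lemma orb_self (v : V) : v ∈ Orb E v := ⟨0, rfl⟩

lemma fwd_closed (hL : IsLaguerre E) {T : Set V} (hT : ∀ u ∈ T, ∃ w ∈ T, (u, w) ∈ E)
    {v : V} (hv : v ∈ T) : ∀ k u, (F E)^[k] (some v) = some u → u ∈ T := by
  intro k
  induction k with
  | zero => intro u h; rw [← Option.some.inj h]; exact hv
  | succ k ih =>
    intro u h
    obtain ⟨b, hb, hnb⟩ := iter_some_succ' h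
    have hbT : b ∈ T := ih b hb
    obtain ⟨w, hwT, hbw⟩ := hT b hbT
    have : nxt E b = some w := mem_nxt hL hbw
    rw [this] at hnb
    rw [← Option.some.inj hnb]; exact hwT

lemma cycleSet_eq_orb (hL : IsLaguerre E) {S : Set V} (hS : IsCycleSet E S) {v : V}
    (hv : v ∈ S) : S = Orb E v := by
  have hsub : Orb E v ⊆ S := by
    rintro u ⟨k, hk⟩
    exact fwd_closed hL hS.2.1 hv k u hk
  have hclosed : ∀ u ∈ Orb E v, ∃ w ∈ Orb E v, (u, w) ∈ E := by
    rintro u ⟨k, hk⟩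
    obtain ⟨w, hwS, huw⟩ := hS.2.1 u (hsub ⟨k, hk⟩)
    refine ⟨w, ⟨k + 1, ?_⟩, huw⟩
    rw [Function.iterate_succ_apply', hk, F_some, mem_nxt hL huw]
  exact (hS.2.2 (Orb E v) hsub ⟨v, orb_self v⟩ hclosed).symm

lemma iter_mul_periodic {d : ℕ} {u : V} (h : (F E)^[d] (some u) = some u) :
    ∀ a : ℕ, (F E)^[a * d] (some u) = some u := by
  intro a
  induction a with
  | zero => simp
  | succ a ih =>
    rw [Nat.succ_mul, Function.iterate_add_apply, h, ih]

lemma iter_some_of_periodic {d : ℕ} {u : V} (hd : 1 ≤ d)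
    (h : (F E)^[d] (some u) = some u) (k : ℕ) : ∃ z, (F E)^[k] (some u) = some z := by
  have hk : k ≤ k * d := Nat.le_mul_of_pos_right k hd
  cases hz : (F E)^[k] (some u) with
  | none =>
    have := iter_mul_periodic h k
    rw [← Nat.sub_add_cancel hk, Function.iterate_add_apply, hz, F_iter_none] at this
    exact nomatch this
  | some z => exact ⟨z, rfl⟩

lemma orb_isCycleSet (hL : IsLaguerre E) {m : ℕ} {w0 : V} (hm : 1 ≤ m)
    (hper : (F E)^[m] (some w0) = some w0) : IsCycleSet E (Orb E w0) := by
  refine ⟨⟨w0, orb_self w0⟩, ?_, ?_⟩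
  · rintro u ⟨k, hk⟩
    obtain ⟨z, hz⟩ := iter_some_of_periodic hm hper (k + 1)
    rw [Function.iterate_succ_apply', hk, F_some] at hz
    exact ⟨z, ⟨k + 1, by rw [Function.iterate_succ_apply', hk, F_some, hz]⟩, nxt_mem hz⟩
  · rintro T hTsub ⟨u, huT⟩ hT
    have hfwd := fwd_closed hL hT huT
    obtain ⟨k, hk⟩ := hTsub huT
    have hw0T : w0 ∈ T := by
      have hkle : k ≤ (k + 1) * m := le_trans (Nat.le_succ k) (Nat.le_mul_of_pos_right _ hm)
      have hmul : (F E)^[(k+1) * m] (some w0) = some w0 := iter_mul_periodic hper (k+1)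
      rw [← Nat.sub_add_cancel hkle, Function.iterate_add_apply, hk] at hmul
      exact hfwd _ _ hmul
    have hfwd0 := fwd_closed hL hT hw0T
    apply Set.Subset.antisymm hTsub
    rintro z ⟨k', hk'⟩
    exact hfwd0 k' z hk'

lemma periodic_of_mem_cycleSet (hL : IsLaguerre E) {S : Set V} (hS : IsCycleSet E S)
    {w0 : V} (hw : w0 ∈ S) : ∃ m, 1 ≤ m ∧ (F E)^[m] (some w0) = some w0 := by
  have hsome : ∀ k : ℕ, ∃ u, (F E)^[k] (some w0) = some u := by
    intro k
    induction k with
    | zero => exact ⟨w0, rfl⟩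
    | succ k ih =>
      obtain ⟨u, hu⟩ := ih
      have huS : u ∈ S := fwd_closed hL hS.2.1 hw k u hu
      obtain ⟨w, hwS, huw⟩ := hS.2.1 u huS
      exact ⟨w, by rw [Function.iterate_succ_apply', hu, F_some, mem_nxt hL huw]⟩
  choose s hs using hsome
  obtain ⟨i, j, hij, hsij⟩ := Finite.exists_ne_map_eq_of_infinite s
  have key : ∀ i j : ℕ, i < j → s i = s j → ∃ m, 1 ≤ m ∧ (F E)^[m] (some w0) = some w0 := by
    intro i j hlt heq
    refine ⟨j - i, by omega, ?_⟩
    have h1 : (F E)^[i] ((F E)^[j - i] (some w0)) = some (s i) := by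
      rw [← Function.iterate_add_apply, Nat.add_sub_cancel' hlt.le, hs j, heq]
    have h2 : (F E)^[i] (some w0) = some (s i) := hs i
    exact F_iter_inj hL h1 h2
  rcases hij.lt_or_gt with hlt | hlt
  · exact key i j hlt hsij
  · exact key j i hlt hsij.symm

section Insert

variable {w0 v0 : V}

lemma laguerre_insert (hL' : IsLaguerre E') (hdom : ∀ b, (w0, b) ∉ E')
    (him : ∀ a, (a, v0) ∉ E') : IsLaguerre (insert (w0, v0) E') := by
  constructor
  · intro a b c hab hac
    rcases Finset.mem_insert.mp hab with h1 | h1 <;>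
      rcases Finset.mem_insert.mp hac with h2 | h2
    · exact congrArg Prod.snd (h1.trans h2.symm)
    · have ha : a = w0 := congrArg Prod.fst h1
      rw [ha] at h2; exact absurd h2 (hdom c)
    · have ha : a = w0 := congrArg Prod.fst h2
      rw [ha] at h1; exact absurd h1 (hdom b)
    · exact hL'.1 a b c h1 h2
  · intro a b c hac hbc
    rcases Finset.mem_insert.mp hac with h1 | h1 <;>
      rcases Finset.mem_insert.mp hbc with h2 | h2
    · exact congrArg Prod.fst (h1.trans h2.symm)
    · have hc : c = v0 := congrArg Prod.snd h1
      rw [hc] at h2; exact absurd h2 (him b)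
    · have hc : c = v0 := congrArg Prod.snd h2
      rw [hc] at h1; exact absurd h1 (him a)
    · exact hL'.2 a b c h1 h2

lemma chain_up (hL : IsLaguerre (insert (w0, v0) E')) :
    ∀ {k : ℕ} {a b : V}, (F E')^[k] (some a) = some b →
    (F (insert (w0, v0) E'))^[k] (some a) = some b := by
  intro k
  induction k with
  | zero => intro a b h; exact h
  | succ k ih =>
    intro a b h
    obtain ⟨c, hc, hcb⟩ := iter_some_succ h
    have : nxt (insert (w0, v0) E') a = some c :=
      mem_nxt hL (Finset.mem_insert_of_mem (nxt_mem hc))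
    rw [Function.iterate_succ_apply, F_some, this]
    exact ih hcb

lemma chain_down (hL' : IsLaguerre E') :
    ∀ {k : ℕ} {a : V}, (F (insert (w0, v0) E'))^[k] (some a) = some w0 →
    ∃ k', (F E')^[k'] (some a) = some w0 := by
  intro k
  induction k with
  | zero => intro a h; exact ⟨0, h⟩
  | succ k ih =>
    intro a h
    by_cases ha : a = w0
    · exact ⟨0, by simp [ha]⟩
    · obtain ⟨c, hc, hcb⟩ := iter_some_succ h
      have hacE : (a, c) ∈ insert (w0, v0) E' := nxt_mem hc
      have hacE' : (a, c) ∈ E' := by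
        rcases Finset.mem_insert.mp hacE with h1 | h1
        · exact absurd (congrArg Prod.fst h1) ha
        · exact h1
      obtain ⟨k', hk'⟩ := ih hcb
      exact ⟨k' + 1, by rw [Function.iterate_succ_apply, F_some, mem_nxt hL' hacE']; exact hk'⟩

lemma not_per_of_nodom (hdom : ∀ b, (w0, b) ∉ E') :
    ∀ m, 1 ≤ m → (F E')^[m] (some w0) ≠ some w0 := by
  intro m hm h
  obtain ⟨b, hb, _⟩ := iter_some_succ (k := m - 1) (by rw [Nat.sub_add_cancel hm]; exact h)
  exact hdom b (nxt_mem hb)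

lemma per_insert_iff (hL' : IsLaguerre E') (hdom : ∀ b, (w0, b) ∉ E')
    (him : ∀ a, (a, v0) ∉ E') :
    (∃ m, 1 ≤ m ∧ (F (insert (w0, v0) E'))^[m] (some w0) = some w0) ↔
      (∃ k, (F E')^[k] (some v0) = some w0) := by
  have hL : IsLaguerre (insert (w0, v0) E') := laguerre_insert hL' hdom him
  have hnxtw0 : nxt (insert (w0, v0) E') w0 = some v0 :=
    mem_nxt hL (Finset.mem_insert_self _ _)
  constructor
  · rintro ⟨m, hm, hper⟩
    rw [← Nat.sub_add_cancel hm, Function.iterate_succ_apply, F_some, hnxtw0] at hper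
    exact chain_down hL' hper
  · rintro ⟨k, hk⟩
    exact ⟨k + 1, by omega, by
      rw [Function.iterate_succ_apply, F_some, hnxtw0]; exact chain_up hL hk⟩

lemma cycleSet_insert_iff {S : Set V} (hw0S : w0 ∉ S) :
    IsCycleSet (insert (w0, v0) E') S ↔ IsCycleSet E' S := by
  constructor
  · rintro ⟨hne, hcl, hmin⟩
    refine ⟨hne, ?_, ?_⟩
    · intro u huS
      obtain ⟨w, hwS, huw⟩ := hcl u huS
      rcases Finset.mem_insert.mp huw with h1 | h1
      · have hu : u = w0 := congrArg Prod.fst h1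
        exact absurd (hu ▸ huS) hw0S
      · exact ⟨w, hwS, h1⟩
    · intro T hTS hTne hTcl
      exact hmin T hTS hTne fun u huT =>
        (hTcl u huT).imp fun w hw => ⟨hw.1, Finset.mem_insert_of_mem hw.2⟩
  · rintro ⟨hne, hcl, hmin⟩
    refine ⟨hne, ?_, ?_⟩
    · intro u huS
      exact (hcl u huS).imp fun w hw => ⟨hw.1, Finset.mem_insert_of_mem hw.2⟩
    · intro T hTS hTne hTcl
      refine hmin T hTS hTne ?_
      intro u huT
      obtain ⟨w, hwT, huw⟩ := hTcl u huT
      rcases Finset.mem_insert.mp huw with h1 | h1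
      · have hu : u = w0 := congrArg Prod.fst h1
        exact absurd (hu ▸ hTS huT) hw0S
      · exact ⟨w, hwT, h1⟩

lemma cyc_insert_of_closing (hL' : IsLaguerre E') (hdom : ∀ b, (w0, b) ∉ E')
    (him : ∀ a, (a, v0) ∉ E') (hcl : ∃ k, (F E')^[k] (some v0) = some w0) :
    cyc (insert (w0, v0) E') = cyc E' + 1 := by
  have hL : IsLaguerre (insert (w0, v0) E') := laguerre_insert hL' hdom him
  obtain ⟨m, hm, hper⟩ := (per_insert_iff hL' hdom him).mpr hcl
  have hw0_notin : ∀ S : Set V, IsCycleSet E' S → w0 ∉ S := by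
    intro S hS hw0S
    obtain ⟨m', hm', hper'⟩ := periodic_of_mem_cycleSet hL' hS hw0S
    exact not_per_of_nodom hdom m' hm' hper'
  have hset : {S : Set V | IsCycleSet (insert (w0, v0) E') S}
      = insert (Orb (insert (w0, v0) E') w0) {S : Set V | IsCycleSet E' S} := by
    ext S
    simp only [Set.mem_setOf_eq, Set.mem_insert_iff]
    constructor
    · intro hS
      by_cases hw0S : w0 ∈ S
      · exact Or.inl (cycleSet_eq_orb hL hS hw0S)
      · exact Or.inr ((cycleSet_insert_iff hw0S).mp hS)
    · rintro (rfl | hS)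
      · exact orb_isCycleSet hL hm hper
      · exact (cycleSet_insert_iff (hw0_notin S hS)).mpr hS
  have hni : Orb (insert (w0, v0) E') w0 ∉ {S : Set V | IsCycleSet E' S} := fun hmem =>
    hw0_notin _ hmem (orb_self w0)
  rw [cyc, hset, Set.ncard_insert_of_notMem hni (Set.toFinite _), cyc]

lemma cyc_insert_of_not_closing (hL' : IsLaguerre E') (hdom : ∀ b, (w0, b) ∉ E')
    (him : ∀ a, (a, v0) ∉ E') (hcl : ¬ ∃ k, (F E')^[k] (some v0) = some w0) :
    cyc (insert (w0, v0) E') = cyc E' := by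
  have hL : IsLaguerre (insert (w0, v0) E') := laguerre_insert hL' hdom him
  have hw0_notin : ∀ S : Set V, IsCycleSet E' S → w0 ∉ S := by
    intro S hS hw0S
    obtain ⟨m', hm', hper'⟩ := periodic_of_mem_cycleSet hL' hS hw0S
    exact not_per_of_nodom hdom m' hm' hper'
  have hset : {S : Set V | IsCycleSet (insert (w0, v0) E') S}
      = {S : Set V | IsCycleSet E' S} := by
    ext S
    simp only [Set.mem_setOf_eq]
    constructor
    · intro hS
      by_cases hw0S : w0 ∈ S
      · exfalso
        obtain ⟨m, hm, hper⟩ := periodic_of_mem_cycleSet hL hS hw0S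
        exact hcl ((per_insert_iff hL' hdom him).mp ⟨m, hm, hper⟩)
      · exact (cycleSet_insert_iff hw0S).mp hS
    · intro hS
      exact (cycleSet_insert_iff (hw0_notin S hS)).mpr hS
  rw [cyc, hset, cyc]

end Insert

def domF (E : Finset (V × V)) : Finset V := univ.filter fun a => ∃ b, (a, b) ∈ E
def imF (E : Finset (V × V)) : Finset V := univ.filter fun b => ∃ a, (a, b) ∈ E

lemma mem_domF {a : V} : a ∈ domF E ↔ ∃ b, (a, b) ∈ E := by simp [domF]
lemma mem_imF {b : V} : b ∈ imF E ↔ ∃ a, (a, b) ∈ E := by simp [imF]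

lemma card_domF (hL : IsLaguerre E) : (domF E).card = E.card := by
  have : domF E = E.image Prod.fst := by
    ext a
    simp only [mem_domF, Finset.mem_image, Prod.exists]
    constructor
    · rintro ⟨b, hb⟩; exact ⟨a, b, hb, rfl⟩
    · rintro ⟨a', b, hb, rfl⟩; exact ⟨b, hb⟩
  rw [this]
  apply Finset.card_image_of_injOn
  intro p hp q hq hpq
  have := hL.1 p.1 p.2 q.2 (by rw [Prod.mk.eta]; exact hp) (by rw [hpq, Prod.mk.eta]; exact hq)
  exact Prod.ext hpq this

lemma card_imF (hL : IsLaguerre E) : (imF E).card = E.card := by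
  have : imF E = E.image Prod.snd := by
    ext b
    simp only [mem_imF, Finset.mem_image, Prod.exists]
    constructor
    · rintro ⟨a, ha⟩; exact ⟨a, b, ha, rfl⟩
    · rintro ⟨a, b', hb, rfl⟩; exact ⟨a, hb⟩
  rw [this]
  apply Finset.card_image_of_injOn
  intro p hp q hq hpq
  have := hL.2 p.1 q.1 p.2 (by rw [Prod.mk.eta]; exact hp) (by rw [hpq, Prod.mk.eta]; exact hq)
  exact Prod.ext this hpq

lemma pa_eq_sub (hL : IsLaguerre E) : pa E = Fintype.card V - (domF E).card := by
  rw [pa_eq hL]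
  have : univ.filter (fun v => ∀ w, (v, w) ∉ E) = (domF E)ᶜ := by
    ext v
    simp [domF, mem_compl]
  rw [this, Finset.card_compl]

section Closing

variable {w0 : V}

lemma exists_unique_closing (hL' : IsLaguerre E') (hdom : ∀ b, (w0, b) ∉ E') :
    ∃! u : V, u ∉ imF E' ∧ ∃ k, (F E')^[k] (some u) = some w0 := by
  have peel : ∀ {d : ℕ} {u u' : V}, (F E')^[d] (some u') = some u → d ≠ 0 → u ∈ imF E' := by
    intro d u u' h hd
    obtain ⟨b, hb, hnb⟩ := iter_some_succ' (k := d - 1)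
      (by rw [Nat.sub_add_cancel (Nat.one_le_iff_ne_zero.mpr hd)]; exact h)
    exact mem_imF.mpr ⟨b, nxt_mem hnb⟩
  have half : ∀ (u u' : V) (k k' : ℕ), k ≤ k' → u ∉ imF E' →
      (F E')^[k] (some u) = some w0 → (F E')^[k'] (some u') = some w0 → u = u' := by
    intro u u' k k' hle hu hk hk'
    have h1 : (F E')^[k] ((F E')^[k' - k] (some u')) = some w0 := by
      rw [← Function.iterate_add_apply, Nat.add_sub_cancel' hle]
      exact hk'
    have h2 : (F E')^[k' - k] (some u') = some u := F_iter_inj hL' h1 hk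
    rcases Nat.eq_or_lt_of_le hle with heq | hlt
    · rw [heq, Nat.sub_self] at h2
      exact (Option.some.inj h2).symm
    · exact absurd (peel h2 (by omega)) hu
  have hnotall : ∃ k : ℕ, ¬ ∃ u : V, (F E')^[k] (some u) = some w0 := by
    by_contra hall
    push_neg at hall
    choose u hu using hall
    have key : ∀ i j : ℕ, i < j → u i = u j → False := by
      intro i j hlt heq
      have h1 : (F E')^[i] ((F E')^[j - i] (some (u i))) = some w0 := by
        rw [← Function.iterate_add_apply, Nat.add_sub_cancel' hlt.le, heq]
        exact hu j
      have h2 : (F E')^[j - i] (some (u i)) = some (u i) := F_iter_inj hL' h1 (hu i)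
      obtain ⟨z, hz⟩ := iter_some_of_periodic (by omega) h2 (i + 1)
      rw [Function.iterate_succ_apply', hu i, F_some] at hz
      exact hdom z (nxt_mem hz)
    obtain ⟨i, j, hij, heq⟩ := Finite.exists_ne_map_eq_of_infinite u
    rcases hij.lt_or_gt with hlt | hlt
    · exact key i j hlt heq
    · exact key j i hlt heq.symm
  classical
  set k0 := Nat.find hnotall with hk0def
  have hk0 : ¬ ∃ u : V, (F E')^[k0] (some u) = some w0 := Nat.find_spec hnotall
  have hk0ne : k0 ≠ 0 := by
    intro h
    exact hk0 ⟨w0, by rw [h]; rfl⟩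
  have hpred : ∃ u : V, (F E')^[k0 - 1] (some u) = some w0 := by
    have := Nat.find_min hnotall (show k0 - 1 < k0 by omega)
    exact of_not_not this
  obtain ⟨ustar, hustar⟩ := hpred
  have hustar_nim : ustar ∉ imF E' := by
    intro hmem
    obtain ⟨a, ha⟩ := mem_imF.mp hmem
    refine hk0 ⟨a, ?_⟩
    have : k0 = (k0 - 1) + 1 := by omega
    rw [this, Function.iterate_succ_apply, F_some, mem_nxt hL' ha]
    exact hustar
  refine ⟨ustar, ⟨hustar_nim, k0 - 1, hustar⟩, ?_⟩
  rintro u' ⟨hu'nim, k', hk'⟩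
  rcases le_total k' (k0 - 1) with hle | hle
  · exact half u' ustar k' (k0 - 1) hle hu'nim hk' hustar
  · exact (half ustar u' (k0 - 1) k' hle hustar_nim hustar hk').symm

end Closing

lemma laguerre_subset (hsub : E' ⊆ E) (hL : IsLaguerre E) : IsLaguerre E' :=
  ⟨fun a b c h1 h2 => hL.1 a b c (hsub h1) (hsub h2),
   fun a b c h1 h2 => hL.2 a b c (hsub h1) (hsub h2)⟩

lemma domF_insert {w0 v0 : V} : domF (insert (w0, v0) E') = insert w0 (domF E') := by
  ext a
  simp only [mem_domF, Finset.mem_insert]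
  constructor
  · rintro ⟨b, h1 | h1⟩
    · exact Or.inl (congrArg Prod.fst h1)
    · exact Or.inr ⟨b, h1⟩
  · rintro (rfl | ⟨b, hb⟩)
    · exact ⟨v0, Or.inl rfl⟩
    · exact ⟨b, Or.inr hb⟩

lemma filter_insert_ne {w0 v0 : V} (hE'w0 : ∀ b, (w0, b) ∉ E') :
    (insert (w0, v0) E').filter (fun q => q.1 ≠ w0) = E' := by
  ext q
  simp only [Finset.mem_filter, Finset.mem_insert]
  constructor
  · rintro ⟨h1 | h1, h2⟩
    · exact absurd (congrArg Prod.fst h1) h2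
    · exact h1
  · intro hq
    refine ⟨Or.inr hq, ?_⟩
    intro h
    exact hE'w0 q.2 (by rw [← h, Prod.mk.eta]; exact hq)

lemma step_sum (α : ℝ) (w0 : V) (W' : Finset V) (hw0 : w0 ∉ W') :
    ∑ E ∈ univ.filter (fun E : Finset (V × V) => IsLaguerre E ∧ domF E = insert w0 W'),
        (α + 1) ^ cyc E
    = ((α + 1) + (((Fintype.card V - W'.card : ℕ) : ℝ) - 1))
        * ∑ E' ∈ univ.filter (fun E' : Finset (V × V) => IsLaguerre E' ∧ domF E' = W'),
            (α + 1) ^ cyc E' := by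
  classical
  have hWlt : W'.card < Fintype.card V := by
    have h1 : (insert w0 W').card ≤ Fintype.card V := by
      simpa using Finset.card_le_univ (insert w0 W')
    rw [Finset.card_insert_of_notMem hw0] at h1; omega
  have hbij : ∑ E ∈ univ.filter (fun E : Finset (V × V) => IsLaguerre E ∧ domF E = insert w0 W'),
        (α + 1) ^ cyc E
      = ∑ p ∈ (univ.filter (fun E' : Finset (V × V) => IsLaguerre E' ∧ domF E' = W')).sigma
            (fun E' => (imF E')ᶜ),
          (α + 1) ^ cyc (insert (w0, p.2) p.1) := by
    apply Finset.sum_nbij'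
      (i := fun E => (⟨E.filter (fun q => q.1 ≠ w0), (nxt E w0).getD w0⟩ : Σ _ : Finset (V × V), V))
      (j := fun p => insert (w0, p.2) p.1)
    · -- hi : maps into sigma
      intro E hE
      rw [Finset.mem_filter] at hE
      obtain ⟨-, hL, hdom⟩ := hE
      have hw0dom : w0 ∈ domF E := by rw [hdom]; exact Finset.mem_insert_self _ _
      obtain ⟨b, hbE⟩ := mem_domF.mp hw0dom
      have hnxt : nxt E w0 = some b := mem_nxt hL hbE
      have htgt : (nxt E w0).getD w0 = b := by rw [hnxt]; rfl
      rw [Finset.mem_sigma]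
      constructor
      · rw [Finset.mem_filter]
        refine ⟨Finset.mem_univ _, laguerre_subset (Finset.filter_subset _ _) hL, ?_⟩
        ext a
        simp only [domF, Finset.mem_filter, Finset.mem_univ, true_and]
        constructor
        · rintro ⟨c, hc, hcne⟩
          have : a ∈ domF E := mem_domF.mpr ⟨c, hc⟩
          rw [hdom] at this
          rcases Finset.mem_insert.mp this with h1 | h1
          · exact absurd h1 hcne
          · exact h1
        · intro ha
          have : a ∈ domF E := by rw [hdom]; exact Finset.mem_insert_of_mem ha
          obtain ⟨c, hc⟩ := mem_domF.mp this
          exact ⟨c, hc, fun h => hw0 (h ▸ ha)⟩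
      · rw [htgt, Finset.mem_compl]
        intro hmem
        obtain ⟨a, ha⟩ := mem_imF.mp hmem
        rw [Finset.mem_filter] at ha
        exact ha.2 (hL.2 a w0 b ha.1 hbE)
    · -- hj : maps back
      rintro ⟨E', v⟩ hp
      rw [Finset.mem_sigma] at hp
      obtain ⟨hE', hv⟩ := hp
      rw [Finset.mem_filter] at hE'
      obtain ⟨-, hL', hdom'⟩ := hE'
      have hdomw0 : ∀ b, (w0, b) ∉ E' := by
        intro b hb
        exact hw0 (hdom' ▸ mem_domF.mpr ⟨b, hb⟩)
      have him : ∀ a, (a, v) ∉ E' := by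
        intro a ha
        exact (Finset.mem_compl.mp hv) (mem_imF.mpr ⟨a, ha⟩)
      rw [Finset.mem_filter]
      refine ⟨Finset.mem_univ _, laguerre_insert hL' hdomw0 him, ?_⟩
      rw [domF_insert, hdom']
    · -- left_inv
      intro E hE
      rw [Finset.mem_filter] at hE
      obtain ⟨-, hL, hdom⟩ := hE
      have hw0dom : w0 ∈ domF E := by rw [hdom]; exact Finset.mem_insert_self _ _
      obtain ⟨b, hbE⟩ := mem_domF.mp hw0dom
      have hnxt : nxt E w0 = some b := mem_nxt hL hbE
      have htgt : (nxt E w0).getD w0 = b := by rw [hnxt]; rfl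
      show insert (w0, (nxt E w0).getD w0) (E.filter (fun q => q.1 ≠ w0)) = E
      rw [htgt]
      ext q
      simp only [Finset.mem_insert, Finset.mem_filter]
      constructor
      · rintro (rfl | ⟨h1, -⟩)
        · exact hbE
        · exact h1
      · intro hq
        by_cases hq1 : q.1 = w0
        · left
          have : q.2 = b := hL.1 w0 q.2 b (by rw [← hq1, Prod.mk.eta]; exact hq) hbE
          rw [← hq1, ← this, Prod.mk.eta]
        · right; exact ⟨hq, hq1⟩
    · -- right_inv
      rintro ⟨E', v⟩ hp
      rw [Finset.mem_sigma] at hp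
      obtain ⟨hE', hv⟩ := hp
      rw [Finset.mem_filter] at hE'
      obtain ⟨-, hL', hdom'⟩ := hE'
      have hdomw0 : ∀ b, (w0, b) ∉ E' := by
        intro b hb
        exact hw0 (hdom' ▸ mem_domF.mpr ⟨b, hb⟩)
      have him : ∀ a, (a, v) ∉ E' := by
        intro a ha
        exact (Finset.mem_compl.mp hv) (mem_imF.mpr ⟨a, ha⟩)
      have hL : IsLaguerre (insert (w0, v) E') := laguerre_insert hL' hdomw0 him
      have h1 : (insert (w0, v) E').filter (fun q => q.1 ≠ w0) = E' := filter_insert_ne hdomw0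
      have h2 : (nxt (insert (w0, v) E') w0).getD w0 = v := by
        rw [mem_nxt hL (Finset.mem_insert_self _ _)]; rfl
      exact Sigma.ext h1 (heq_of_eq (by rw [h2]))
    · -- values
      intro E hE
      rw [Finset.mem_filter] at hE
      obtain ⟨-, hL, hdom⟩ := hE
      have hw0dom : w0 ∈ domF E := by rw [hdom]; exact Finset.mem_insert_self _ _
      obtain ⟨b, hbE⟩ := mem_domF.mp hw0dom
      have hnxt : nxt E w0 = some b := mem_nxt hL hbE
      have htgt : (nxt E w0).getD w0 = b := by rw [hnxt]; rfl
      congr 1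
      apply congrArg
      rw [htgt]
      ext q
      simp only [Finset.mem_insert, Finset.mem_filter]
      constructor
      · intro hq
        by_cases hq1 : q.1 = w0
        · left
          have : q.2 = b := hL.1 w0 q.2 b (by rw [← hq1, Prod.mk.eta]; exact hq) hbE
          rw [← hq1, ← this, Prod.mk.eta]
        · right; exact ⟨hq, hq1⟩
      · rintro (rfl | ⟨h1, -⟩)
        · exact hbE
        · exact h1
  rw [hbij, Finset.sum_sigma]
  rw [Finset.sum_congr rfl (fun E' hE' => ?_), ← Finset.mul_sum]
  -- inner sum computation
  rw [Finset.mem_filter] at hE'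
  obtain ⟨-, hL', hdom'⟩ := hE'
  have hdomw0 : ∀ b, (w0, b) ∉ E' := by
    intro b hb
    exact hw0 (hdom' ▸ mem_domF.mpr ⟨b, hb⟩)
  obtain ⟨ustar, ⟨hustar_nim, hustar_cl⟩, huniq⟩ := exists_unique_closing hL' hdomw0
  have hustar_mem : ustar ∈ (imF E')ᶜ := Finset.mem_compl.mpr hustar_nim
  have hcardim : (imF E').card = W'.card := by
    rw [card_imF hL', ← card_domF hL', hdom']
  have hcardc : ((imF E')ᶜ).card = Fintype.card V - W'.card := by
    rw [Finset.card_compl, hcardim]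
  rw [← Finset.add_sum_erase _ _ hustar_mem]
  have hclose : cyc (insert (w0, ustar) E') = cyc E' + 1 := by
    apply cyc_insert_of_closing hL' hdomw0
    · intro a ha
      exact hustar_nim (mem_imF.mpr ⟨a, ha⟩)
    · exact hustar_cl
  have hother : ∀ v ∈ ((imF E')ᶜ).erase ustar,
      (α + 1) ^ cyc (insert (w0, v) E') = (α + 1) ^ cyc E' := by
    intro v hv
    obtain ⟨hvne, hvmem⟩ := Finset.mem_erase.mp hv
    have hvnim : v ∉ imF E' := Finset.mem_compl.mp hvmem
    have hncl : ¬ ∃ k, (F E')^[k] (some v) = some w0 := by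
      intro hcl
      exact hvne (huniq v ⟨hvnim, hcl⟩)
    rw [cyc_insert_of_not_closing hL' hdomw0
      (fun a ha => hvnim (mem_imF.mpr ⟨a, ha⟩)) hncl]
  rw [Finset.sum_congr rfl hother, Finset.sum_const, Finset.card_erase_of_mem hustar_mem,
    hcardc, hclose]
  have h1 : (1:ℕ) ≤ Fintype.card V - W'.card := by omega
  have hc1 : ((Fintype.card V - W'.card - 1 : ℕ) : ℝ)
      = ((Fintype.card V - W'.card : ℕ) : ℝ) - 1 := by
    push_cast [Nat.cast_sub h1]
    ring
  rw [nsmul_eq_mul, hc1, pow_succ]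
  ring

lemma S_formula (α : ℝ) (W : Finset V) :
    ∑ E ∈ univ.filter (fun E : Finset (V × V) => IsLaguerre E ∧ domF E = W), (α + 1) ^ cyc E
    = ∏ j ∈ range W.card, (α + 1 + ((Fintype.card V - W.card : ℕ) : ℝ) + j) := by
  induction W using Finset.induction_on with
  | empty =>
    have hset : univ.filter (fun E : Finset (V × V) => IsLaguerre E ∧ domF E = ∅) = {∅} := by
      ext E
      simp only [Finset.mem_filter, Finset.mem_univ, true_and, Finset.mem_singleton]
      constructor
      · rintro ⟨hL, hdom⟩
        ext q
        simp only [Finset.notMem_empty, iff_false]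
        intro hq
        have hmem : q.1 ∈ domF E := mem_domF.mpr ⟨q.2, by rw [Prod.mk.eta]; exact hq⟩
        rw [hdom] at hmem
        exact Finset.notMem_empty _ hmem
      · rintro rfl
        refine ⟨⟨fun a b c h => absurd h (Finset.notMem_empty _),
          fun a b c h => absurd h (Finset.notMem_empty _)⟩, ?_⟩
        ext a
        simp [mem_domF]
    rw [hset, Finset.sum_singleton]
    have hcyc : cyc (∅ : Finset (V × V)) = 0 := by
      rw [cyc]
      convert Set.ncard_empty (Set V) using 2
      ext S
      simp only [Set.mem_setOf_eq, Set.mem_empty_iff_false, iff_false]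
      rintro ⟨⟨v, hv⟩, hcl, -⟩
      obtain ⟨w, -, hw⟩ := hcl v hv
      exact Finset.notMem_empty _ hw
    rw [hcyc]
    simp
  | @insert w0 W' hw0 ih =>
    rw [step_sum α w0 W' hw0, ih]
    have hm1 : W'.card + 1 ≤ Fintype.card V := by
      have h := Finset.card_le_univ (insert w0 W')
      rwa [Finset.card_insert_of_notMem hw0] at h
    have h1 : 1 ≤ Fintype.card V - W'.card := by omega
    rw [Finset.card_insert_of_notMem hw0]
    have hc : ((Fintype.card V - (W'.card + 1) : ℕ) : ℝ)
        = ((Fintype.card V - W'.card : ℕ) : ℝ) - 1 := by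
      have h2 : Fintype.card V - (W'.card + 1) = (Fintype.card V - W'.card) - 1 := by omega
      rw [h2, Nat.cast_sub h1]
      simp
    rw [Finset.prod_range_succ', hc]
    have hprod : ∏ j ∈ range W'.card,
          (α + 1 + (((Fintype.card V - W'.card : ℕ) : ℝ) - 1) + ((j : ℕ) + 1 : ℕ))
        = ∏ j ∈ range W'.card,
          (α + 1 + ((Fintype.card V - W'.card : ℕ) : ℝ) + j) := by
      apply Finset.prod_congr rfl
      intro j _
      push_cast
      ring
    rw [hprod]
    push_cast
    ring

end LDP

open LD LDP

/-- Foata–Strehl combinatorial representation of the unsigned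
monic Laguerre polynomials:
`Σ_{G ∈ LD_n} x^{pa(G)} (α+1)^{cyc(G)} = Σ_{k=0}^n C(n,k) (α+1+k)^{rising (n-k)} x^k`. -/
theorem laguerre_digraph_model (n : ℕ) (x α : ℝ) :
    ∑ E ∈ Finset.univ.filter (fun E : Finset (Fin n × Fin n) => LD.IsLaguerre E),
        x ^ LD.pa E * (α + 1) ^ LD.cyc E
      = ∑ k ∈ Finset.range (n + 1),
          (n.choose k : ℝ) * (∏ j ∈ Finset.range (n - k), (α + 1 + (k : ℝ) + (j : ℝ))) * x ^ k := by
  classical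
  have hfib : ∀ E ∈ univ.filter (fun E : Finset (Fin n × Fin n) => IsLaguerre E),
      domF E ∈ (univ : Finset (Finset (Fin n))) := fun E _ => Finset.mem_univ _
  rw [← Finset.sum_fiberwise_of_maps_to hfib (fun E => x ^ pa E * (α + 1) ^ cyc E)]
  have hmain : ∀ W : Finset (Fin n),
      ∑ E ∈ (univ.filter (fun E : Finset (Fin n × Fin n) => IsLaguerre E)).filter
          (fun E => domF E = W), x ^ pa E * (α + 1) ^ cyc E
      = x ^ (n - W.card) * ∏ j ∈ range W.card, (α + 1 + ((n - W.card : ℕ) : ℝ) + j) := by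
    intro W
    rw [Finset.filter_filter]
    have hcg : ∀ E ∈ univ.filter (fun E : Finset (Fin n × Fin n) => IsLaguerre E ∧ domF E = W),
        x ^ pa E * (α + 1) ^ cyc E = x ^ (n - W.card) * (α + 1) ^ cyc E := by
      intro E hE
      rw [Finset.mem_filter] at hE
      obtain ⟨-, hL, hdom⟩ := hE
      rw [pa_eq_sub hL, hdom, Fintype.card_fin]
    rw [Finset.sum_congr rfl hcg, ← Finset.mul_sum, S_formula α W]
    simp only [Fintype.card_fin]
  rw [Finset.sum_congr rfl (fun W _ => hmain W)]
  rw [← Finset.powerset_univ, Finset.sum_powerset]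
  simp only [Finset.card_univ, Fintype.card_fin]
  have hinner : ∀ m ∈ range (n + 1),
      ∑ W ∈ Finset.powersetCard m (univ : Finset (Fin n)),
        (x ^ (n - W.card) * ∏ j ∈ range W.card, (α + 1 + ((n - W.card : ℕ) : ℝ) + j))
      = (n.choose m : ℝ) * (x ^ (n - m) * ∏ j ∈ range m, (α + 1 + ((n - m : ℕ) : ℝ) + j)) := by
    intro m hm
    have hW : ∀ W ∈ Finset.powersetCard m (univ : Finset (Fin n)),
        (x ^ (n - W.card) * ∏ j ∈ range W.card, (α + 1 + ((n - W.card : ℕ) : ℝ) + j))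
        = (x ^ (n - m) * ∏ j ∈ range m, (α + 1 + ((n - m : ℕ) : ℝ) + j)) := by
      intro W hWm
      rw [Finset.mem_powersetCard_univ.mp hWm]
    rw [Finset.sum_congr rfl hW, Finset.sum_const, Finset.card_powersetCard,
      Finset.card_univ, Fintype.card_fin, nsmul_eq_mul]
  rw [Finset.sum_congr rfl hinner, ← Finset.sum_range_reflect]
  apply Finset.sum_congr rfl
  intro k hk
  have hkn : k ≤ n := by
    rw [Finset.mem_range] at hk; omega
  simp only [Nat.add_sub_cancel]
  rw [Nat.sub_sub_self hkn, Nat.choose_symm hkn]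
  ring
end

section
/- The multivariate exponential generating function identity Σ_{n_1,...,n_r ≥ 0} L_n^{(α)}(x) t_1^{n_1}/n_1! ··· t_r^{n_r}/n_r! = (Π_{i=1}^r (1+t_i)^{-(α_i+1)}) · exp[x(1 - Π_{i=1}^r 1/(1+t_i))] holds as formal multivariate power series, where L_n^{(α)}(x) is defined by the explicit sum Σ_{k_1,...,k_r} (-1)^{|n|-|k|} (Π_i C(n_i,k_i)(α_i+1+k_1+···+k_i)^{rising(n_i-k_i)}) x^{|k|}. -/
open Finset

/-- The value at `x` of the multiple Laguerre polynomial
`L_n^{(α)}(x) = Σ_k (-1)^{|n|-|k|} (Π_i C(n_i,k_i)(α_i+1+k_1+···+k_i)^{rising(n_i-k_i)}) x^{|k|}`. -/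
noncomputable def multipleLaguerreVal (r : ℕ) (α : Fin r → ℝ) (n : Fin r → ℕ) (x : ℝ) : ℝ :=
  ∑ k ∈ Fintype.piFinset (fun i => Finset.range (n i + 1)),
    (-1 : ℝ) ^ ((∑ i, n i) - (∑ i, k i)) *
      (∏ i, (((n i).choose (k i) : ℝ) *
        ∏ j ∈ Finset.range (n i - k i),
          (α i + 1 + (∑ j' ∈ Finset.univ.filter (fun j' => j' ≤ i), (k j' : ℝ)) + (j : ℝ)))) *
      x ^ (∑ i, k i)

/-- The binomial series `(1+t_i)^c` in the single variable `t_i`, as a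
multivariate formal power series. -/
noncomputable def binomialSeriesMv (r : ℕ) (c : ℝ) (i : Fin r) : MvPowerSeries (Fin r) ℝ :=
  fun d => if ∀ j, j ≠ i → d j = 0
    then (∏ m ∈ Finset.range (d i), (c - (m : ℝ))) / ((d i).factorial : ℝ)
    else 0

/-- The exponential `exp g = Σ_m g^m/m!` of a multivariate formal power series
`g` (with zero constant term); the coefficient on a monomial `d` only involves
`g^m` for `m` at most the total degree of `d`. -/
noncomputable def expMv (r : ℕ) (g : MvPowerSeries (Fin r) ℝ) : MvPowerSeries (Fin r) ℝ :=
  fun d => MvPowerSeries.coeff d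
    (∑ m ∈ Finset.range ((d.sum fun _ e => e) + 1), ((m.factorial : ℝ)⁻¹) • g ^ m)

/-! Since `(-1)^m y^{rising m} / m!` is the coefficient of `t^m` in `(1+t)^{-y}`, the left side is
`∏_i (1+t_i)^{-(α_i+1)} · Σ_k x^{|k|} w^k / k!` with `w_j = t_j ∏_{i ≥ j} (1+t_i)⁻¹`: indeed
`∏_j (∏_{i ≥ j} (1+t_i)⁻¹)^{k_j} = ∏_i (1+t_i)^{-(k_1+⋯+k_i)}`. By the multinomial theorem
`Σ_k x^{|k|} w^k / k! = exp (x Σ_j w_j)`, and `Σ_j w_j = 1 - ∏_i (1+t_i)⁻¹` telescopes.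
The identity is checked coefficientwise: the coefficient of `t^d` only involves `k ≤ d` and the
powers of the exponent up to `|d|`. -/

section Binomial

variable {K : Type*} [Field K] [CharZero K]

theorem Ring.choose_eq_prod_range_div (c : K) (n : ℕ) :
    Ring.choose c n = (∏ m ∈ range n, (c - m)) / n.factorial := by
  rw [Ring.choose_eq_smul, ← Polynomial.aeval_eq_smeval, Polynomial.aeval_def,
    Polynomial.eval₂_eq_eval_map, descPochhammer_map, descPochhammer_eval_eq_prod_range,
    smul_eq_mul, inv_mul_eq_div]

theorem Ring.choose_neg_eq_prod_range_div (y : K) (n : ℕ) :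
    Ring.choose (-y) n = (-1) ^ n * (∏ m ∈ range n, (y + m)) / n.factorial := by
  have h : ∀ m ∈ range n, -y - (m : K) = -1 * (y + m) := fun m _ => by ring
  rw [Ring.choose_eq_prod_range_div, prod_congr rfl h, prod_mul_distrib, prod_const, card_range]

theorem neg_one_pow_mul_choose_mul_prod_range_div_factorial {n k : ℕ} (hk : k ≤ n) (y : K) :
    (-1) ^ (n - k) * ((n.choose k : K) * ∏ j ∈ range (n - k), (y + j)) / n.factorial
      = Ring.choose (-y) (n - k) / k.factorial := by
  have hn : (n.factorial : K) ≠ 0 := Nat.cast_ne_zero.mpr n.factorial_ne_zero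
  rw [Ring.choose_neg_eq_prod_range_div, Nat.cast_choose K hk]
  field_simp

end Binomial

theorem PowerSeries.binomialSeries_nsmul {R A : Type*} [CommRing R] [BinomialRing R] [Ring A]
    [Algebra R A] (n : ℕ) (r : R) : binomialSeries A (n • r) = binomialSeries A r ^ n := by
  induction n with
  | zero => simp
  | succ n ih => rw [succ_nsmul, binomialSeries_add, ih, pow_succ]

namespace Finset

theorem prod_pow_prod_filter_le {ι M : Type*} [Fintype ι] [Preorder ι] [DecidableLE ι]
    [CommMonoid M] (u : ι → M) (k : ι → ℕ) :
    ∏ j, (∏ i ∈ univ.filter (j ≤ ·), u i) ^ k j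
      = ∏ i, u i ^ ∑ j ∈ univ.filter (· ≤ i), k j := by
  simp_rw [← prod_pow, ← prod_pow_eq_pow_sum]
  exact prod_comm' (by simp)

theorem sum_range_sum_piAntidiag_eq_sum_piFinset {ι M : Type*} [Fintype ι] [DecidableEq ι]
    [AddCommMonoid M] (d : ι → ℕ) (F : (ι → ℕ) → M) (hF : ∀ k, (∃ i, d i < k i) → F k = 0) :
    ∑ m ∈ range (∑ i, d i + 1), ∑ k ∈ piAntidiag univ m, F k
      = ∑ k ∈ Fintype.piFinset fun i => range (d i + 1), F k := by
  have hbox : ∀ k ∈ Fintype.piFinset fun i => range (d i + 1), ∀ i, k i ≤ d i := fun k hk i =>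
    Nat.lt_add_one_iff.mp (mem_range.mp (Fintype.mem_piFinset.mp hk i))
  rw [← sum_fiberwise_of_maps_to (g := fun k => ∑ i, k i) (t := range (∑ i, d i + 1))
    fun k hk => mem_range.mpr (Nat.lt_succ_of_le (sum_le_sum (f := k) fun i _ => hbox k hk i))]
  refine sum_congr rfl fun m _ => (sum_subset (fun k hk => ?_) fun k hk hk' => hF k ?_).symm
  · rw [mem_filter] at hk
    exact mem_piAntidiag.mpr ⟨hk.2, fun i _ => mem_univ i⟩
  · by_contra! h
    refine hk' (mem_filter.mpr ⟨Fintype.mem_piFinset.mpr fun i => ?_, (mem_piAntidiag.mp hk).1⟩)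
    exact mem_range.mpr (Nat.lt_succ_of_le (h i))

theorem inv_factorial_smul_sum_pow {K ι A : Type*} [Field K] [CharZero K] [DecidableEq ι]
    [CommSemiring A] [Algebra K A] (s : Finset ι) (w : ι → A) (m : ℕ) :
    (m.factorial : K)⁻¹ • (∑ j ∈ s, w j) ^ m
      = ∑ k ∈ piAntidiag s m, (∏ j ∈ s, ((k j).factorial : K))⁻¹ • ∏ j ∈ s, w j ^ k j := by
  rw [sum_pow_eq_sum_piAntidiag, smul_sum]
  refine sum_congr rfl fun k hk => ?_
  have hspec : (Nat.multinomial s k : K) * ∏ j ∈ s, ((k j).factorial : K) = m.factorial := by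
    rw [← (mem_piAntidiag.mp hk).1, mul_comm]
    exact_mod_cast Nat.multinomial_spec s k
  have hne : (Nat.multinomial s k : K) ≠ 0 := Nat.cast_ne_zero.mpr (Nat.multinomial_pos s k).ne'
  rw [← nsmul_eq_mul, ← Nat.cast_smul_eq_nsmul K, ← hspec, smul_smul, mul_inv_rev,
    inv_mul_cancel_right₀ hne]

end Finset

theorem Fin.sum_mul_prod_filter_le_eq_one_sub_prod {R : Type*} [CommRing R] :
    ∀ {n : ℕ} (y u : Fin n → R), (∀ i, u i * (1 + y i) = 1) →
      ∑ j, y j * ∏ i ∈ univ.filter (j ≤ ·), u i = 1 - ∏ i, u i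
  | 0, _, _, _ => by simp
  | n + 1, y, u, hu => by
    have hhead : ∏ i ∈ univ.filter ((0 : Fin (n + 1)) ≤ ·), u i = u 0 * ∏ i : Fin n, u i.succ := by
      simp [Fin.prod_univ_succ]
    have htail : ∀ j : Fin n, ∏ i ∈ univ.filter (j.succ ≤ ·), u i
        = ∏ i ∈ univ.filter (j ≤ ·), u i.succ := fun j => by
      simp [prod_filter, Fin.prod_univ_succ, Fin.succ_le_succ_iff]
    rw [Fin.sum_univ_succ, Fin.prod_univ_succ, hhead]
    simp only [htail]
    rw [sum_mul_prod_filter_le_eq_one_sub_prod (fun i : Fin n => y i.succ)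
      (fun i : Fin n => u i.succ) fun i => hu i.succ]
    linear_combination (∏ i : Fin n, u i.succ) * hu 0

namespace MvPowerSeries

section OfVar

variable {σ R : Type*} [CommSemiring R]

noncomputable def ofVar (i : σ) : PowerSeries R →ₐ[R] MvPowerSeries σ R :=
  rename fun _ : Unit => i

theorem coeff_single_ofVar (i : σ) (f : PowerSeries R) (n : ℕ) :
    coeff (Finsupp.single i n) (ofVar i f) = PowerSeries.coeff n f := by
  let e : Unit ↪ σ := ⟨fun _ => i, fun _ _ _ => rfl⟩
  have he : Finsupp.embDomain e (Finsupp.single () n) = Finsupp.single i n :=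
    Finsupp.embDomain_single e () n
  rw [← he]
  exact coeff_embDomain_rename e f _

theorem coeff_ofVar_eq_zero {i : σ} (f : PowerSeries R) {d : σ →₀ ℕ}
    (hd : d ≠ Finsupp.single i (d i)) : coeff d (ofVar i f) = 0 := by
  refine coeff_rename_eq_zero _ _ ?_
  rintro ⟨v, rfl⟩
  rw [Finsupp.unique_single v, Finsupp.mapDomain_single, Finsupp.single_eq_same] at hd
  exact hd rfl

theorem ofVar_X (i : σ) : ofVar i (PowerSeries.X : PowerSeries R) = X i :=
  rename_X _ ()

theorem coeff_prod_ofVar [Fintype σ] [DecidableEq σ] (f : σ → PowerSeries R) (d : σ →₀ ℕ) :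
    coeff d (∏ i, ofVar i (f i)) = ∏ i, PowerSeries.coeff (d i) (f i) := by
  let l₀ : σ →₀ σ →₀ ℕ := Finsupp.equivFunOnFinite.symm fun i => Finsupp.single i (d i)
  have hl₀ : l₀ ∈ finsuppAntidiag univ d := by
    rw [mem_finsuppAntidiag]
    refine ⟨?_, fun i _ => mem_univ i⟩
    ext j
    simp [l₀]
  rw [coeff_prod, sum_eq_single_of_mem l₀ hl₀]
  · exact prod_congr rfl fun i _ => coeff_single_ofVar i (f i) (d i)
  · intro l hl hne
    by_contra hprod
    have hsingle : ∀ i, l i = Finsupp.single i (l i i) := fun i => by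
      by_contra h
      exact hprod (prod_eq_zero (mem_univ i) (coeff_ofVar_eq_zero (f i) h))
    refine hne (Finsupp.ext fun i => ?_)
    have hdi : l i i = d i := by
      rw [← (mem_finsuppAntidiag.mp hl).1, Finsupp.finsetSum_apply,
        sum_eq_single_of_mem i (mem_univ i)]
      intro j _ hji
      rw [hsingle j, Finsupp.single_eq_of_ne hji.symm]
    rw [hsingle i, hdi]
    rfl

end OfVar

theorem inv_one_add_X_eq_ofVar {σ K : Type*} [Field K] [CharZero K] (i : σ) :
    (1 + X i : MvPowerSeries σ K)⁻¹ = ofVar i (PowerSeries.binomialSeries K (-1 : K)) := by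
  have hunit : PowerSeries.binomialSeries K (-1 : K) * (1 + PowerSeries.X) = 1 := by
    rw [← pow_one (1 + PowerSeries.X), ← PowerSeries.binomialSeries_nat (R := K),
      ← PowerSeries.binomialSeries_add]
    simp
  rw [MvPowerSeries.inv_eq_iff_mul_eq_one (by simp), ← ofVar_X, ← map_one (ofVar (R := K) i),
    ← map_add, ← map_mul, hunit, map_one]

theorem coeff_pow_eq_zero_of_degree_lt {σ R : Type*} [CommSemiring R] {g : MvPowerSeries σ R}
    (hg : constantCoeff g = 0) {d : σ →₀ ℕ} {m : ℕ} (h : d.degree < m) :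
    coeff d (g ^ m) = 0 :=
  coeff_of_lt_order
    ((ENat.natCast_lt_natCast.mpr h).trans_le (le_order_pow_of_constantCoeff_eq_zero m hg))

section TruncExp

variable {σ K : Type*} [Field K]

noncomputable def truncExp (N : ℕ) (g : MvPowerSeries σ K) : MvPowerSeries σ K :=
  ∑ m ∈ range (N + 1), (m.factorial : K)⁻¹ • g ^ m

theorem coeff_truncExp_of_degree_le {g : MvPowerSeries σ K} (hg : constantCoeff g = 0)
    {d : σ →₀ ℕ} {M N : ℕ} (hM : d.degree ≤ M) (hMN : M ≤ N) :
    coeff d (truncExp M g) = coeff d (truncExp N g) := by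
  simp only [truncExp, map_sum, coeff_smul]
  refine sum_subset (range_subset_range.mpr (by omega)) fun m _ hm => ?_
  rw [coeff_pow_eq_zero_of_degree_lt hg (by simp at hm; omega), mul_zero]

theorem coeff_mul_truncExp_smul_sum [CharZero K] {ι : Type*} [Fintype ι] [DecidableEq ι]
    (A : MvPowerSeries σ K) (w : ι → MvPowerSeries σ K) (x : K) (N : ℕ) (d : σ →₀ ℕ) :
    coeff d (A * truncExp N (x • ∑ j, w j))
      = ∑ m ∈ range (N + 1), ∑ k ∈ piAntidiag univ m,
          x ^ (∑ j, k j) * (∏ j, ((k j).factorial : K))⁻¹ * coeff d (A * ∏ j, w j ^ k j) := by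
  simp only [truncExp, mul_sum, map_sum]
  refine sum_congr rfl fun m _ => ?_
  rw [smul_pow, smul_comm, inv_factorial_smul_sum_pow, smul_sum, mul_sum, map_sum]
  refine sum_congr rfl fun k hk => ?_
  rw [(mem_piAntidiag.mp hk).1, smul_smul, mul_smul_comm, coeff_smul]

end TruncExp

end MvPowerSeries

open MvPowerSeries

theorem binomialSeriesMv_eq_ofVar (r : ℕ) (c : ℝ) (i : Fin r) :
    binomialSeriesMv r c i = ofVar i (PowerSeries.binomialSeries ℝ c) := by
  ext d
  show (if _ then _ else _) = _
  split_ifs with h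
  · have hd : d = Finsupp.single i (d i) := Finsupp.ext fun j => by
      by_cases hj : j = i
      · subst hj; simp
      · rw [h j hj, Finsupp.single_eq_of_ne hj]
    conv_rhs => rw [hd, coeff_single_ofVar]
    simp [Ring.choose_eq_prod_range_div]
  · refine (coeff_ofVar_eq_zero _ fun hd => h fun j hj => ?_).symm
    rw [hd, Finsupp.single_eq_of_ne hj]

theorem coeff_mul_expMv {r : ℕ} (A : MvPowerSeries (Fin r) ℝ) {g : MvPowerSeries (Fin r) ℝ}
    (hg : constantCoeff g = 0) (d : Fin r →₀ ℕ) :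
    coeff d (A * expMv r g) = coeff d (A * truncExp d.degree g) := by
  rw [coeff_mul, coeff_mul]
  refine sum_congr rfl fun p hp => ?_
  have hdeg : p.2.degree ≤ d.degree := by
    rw [← mem_antidiagonal.mp hp, map_add]
    exact Nat.le_add_left _ _
  exact congrArg _ (coeff_truncExp_of_degree_le hg le_rfl hdeg)

noncomputable def laguerreVar {r : ℕ} (j : Fin r) : MvPowerSeries (Fin r) ℝ :=
  X j * ∏ i ∈ univ.filter (j ≤ ·), (1 + X i)⁻¹

theorem sum_laguerreVar (r : ℕ) :
    ∑ j, laguerreVar j = 1 - ∏ i : Fin r, (1 + X i : MvPowerSeries (Fin r) ℝ)⁻¹ :=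
  Fin.sum_mul_prod_filter_le_eq_one_sub_prod _ _ fun i =>
    MvPowerSeries.inv_mul_cancel _ (by simp)

theorem coeff_prod_binomialSeriesMv_mul_prod_laguerreVar_pow {r : ℕ} (α : Fin r → ℝ)
    (k : Fin r → ℕ) (d : Fin r →₀ ℕ) :
    coeff d ((∏ i, binomialSeriesMv r (-(α i + 1)) i) * ∏ j, laguerreVar j ^ k j)
      = ∏ i, if k i ≤ d i then
          Ring.choose (-(α i + 1 + ∑ j ∈ univ.filter (· ≤ i), (k j : ℝ))) (d i - k i) else 0 := by
  have hfactor : (∏ i, binomialSeriesMv r (-(α i + 1)) i) * ∏ j, laguerreVar j ^ k j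
      = ∏ i, ofVar i (PowerSeries.X ^ k i * PowerSeries.binomialSeries ℝ
          (-(α i + 1 + ∑ j ∈ univ.filter (· ≤ i), (k j : ℝ)))) := by
    simp only [laguerreVar, inv_one_add_X_eq_ofVar, binomialSeriesMv_eq_ofVar, mul_pow,
      prod_mul_distrib, prod_pow_prod_filter_le]
    simp only [← ofVar_X, ← map_pow, ← map_mul, ← prod_mul_distrib]
    refine prod_congr rfl fun i _ => congrArg _ ?_
    rw [← PowerSeries.binomialSeries_nsmul, mul_left_comm, ← PowerSeries.binomialSeries_add,
      nsmul_eq_mul, Nat.cast_sum]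
    ring_nf
  rw [hfactor, coeff_prod_ofVar]
  refine prod_congr rfl fun i _ => ?_
  rw [PowerSeries.coeff_X_pow_mul', PowerSeries.binomialSeries_coeff, smul_eq_mul, mul_one]

theorem multipleLaguerre_term_div_factorial {r : ℕ} (α : Fin r → ℝ) (x : ℝ) {d k : Fin r → ℕ}
    (hk : ∀ i, k i ≤ d i) :
    (-1 : ℝ) ^ ((∑ i, d i) - (∑ i, k i)) *
        (∏ i, (((d i).choose (k i) : ℝ) * ∏ j ∈ range (d i - k i),
          (α i + 1 + (∑ j' ∈ univ.filter (· ≤ i), (k j' : ℝ)) + (j : ℝ)))) *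
        x ^ (∑ i, k i) / ∏ i, ((d i).factorial : ℝ)
      = x ^ (∑ j, k j) * (∏ j, ((k j).factorial : ℝ))⁻¹ * ∏ i, if k i ≤ d i then
          Ring.choose (-(α i + 1 + ∑ j ∈ univ.filter (· ≤ i), (k j : ℝ))) (d i - k i) else 0 := by
  have hsign : (-1 : ℝ) ^ ((∑ i, d i) - (∑ i, k i)) = ∏ i, (-1) ^ (d i - k i) := by
    rw [prod_pow_eq_pow_sum, sum_tsub_distrib _ fun i _ => hk i]
  calc _ = x ^ (∑ j, k j) * ∏ i, ((-1) ^ (d i - k i) * (((d i).choose (k i) : ℝ) *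
          ∏ j ∈ range (d i - k i), (α i + 1 + (∑ j' ∈ univ.filter (· ≤ i), (k j' : ℝ)) + j))
          / (d i).factorial) := by
        simp only [hsign, prod_div_distrib, prod_mul_distrib]
        ring
    _ = x ^ (∑ j, k j) * ∏ i, (Ring.choose (-(α i + 1 + ∑ j ∈ univ.filter (· ≤ i), (k j : ℝ)))
          (d i - k i) / (k i).factorial) :=
        congrArg _ (prod_congr rfl fun i _ =>
          neg_one_pow_mul_choose_mul_prod_range_div_factorial (hk i) _)
    _ = _ := by
        rw [prod_div_distrib, prod_congr rfl fun i _ => if_pos (hk i)]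
        ring

/-- the multivariate exponential generating function identity
`Σ_{n_1,...,n_r ≥ 0} L_n^{(α)}(x) t_1^{n_1}/n_1! ··· t_r^{n_r}/n_r!
  = (Π_i (1+t_i)^{-(α_i+1)}) · exp[x (1 - Π_i 1/(1+t_i))]`
as formal power series in `t_1, ..., t_r`. -/
theorem multipleLaguerre_egf (r : ℕ) (α : Fin r → ℝ) (x : ℝ) :
    ((fun d => multipleLaguerreVal r α (fun i => d i) x / ∏ i, ((d i).factorial : ℝ)) :
        MvPowerSeries (Fin r) ℝ)
      = (∏ i, binomialSeriesMv r (-(α i + 1)) i) *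
        expMv r (x • ((1 : MvPowerSeries (Fin r) ℝ) -
          ∏ i, (1 + MvPowerSeries.X i : MvPowerSeries (Fin r) ℝ)⁻¹)) := by
  refine MvPowerSeries.ext fun d => ?_
  have hg : constantCoeff (x • ∑ j, laguerreVar (r := r) j) = 0 := by simp [laguerreVar]
  rw [← sum_laguerreVar, coeff_mul_expMv _ hg, coeff_mul_truncExp_smul_sum, Finsupp.degree_eq_sum,
    sum_range_sum_piAntidiag_eq_sum_piFinset]
  · show multipleLaguerreVal r α d x / _ = _
    rw [multipleLaguerreVal, sum_div]
    refine sum_congr rfl fun k hk => ?_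
    rw [coeff_prod_binomialSeriesMv_mul_prod_laguerreVar_pow]
    exact multipleLaguerre_term_div_factorial α x fun i =>
      Nat.lt_add_one_iff.mp (mem_range.mp (Fintype.mem_piFinset.mp hk i))
  · rintro k ⟨i, hi⟩
    rw [coeff_prod_binomialSeriesMv_mul_prod_laguerreVar_pow]
    exact mul_eq_zero_of_right _ (prod_eq_zero (mem_univ i) (if_neg (not_le.mpr hi)))
end

section
/- The multiple Laguerre polynomial L_n^{(α)}(x) is invariant under joint permutations of n = (n_1,...,n_r) and α = (α_1,...,α_r): for every permutation σ of {1,...,r}, L_{(n_{σ(1)},...,n_{σ(r)})}^{((α_{σ(1)},...,α_{σ(r)}))}(x) = L_{(n_1,...,n_r)}^{((α_1,...,α_r))}(x). -/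
open Finset

open Polynomial

noncomputable def M (c : ℝ) (p : ℝ[X]) : ℝ[X] := X * p - X * derivative p - C c * p

instance : LeftCommutative M := ⟨by
  intro c d p
  simp only [M, derivative_sub, derivative_mul, derivative_X, derivative_C, one_mul, zero_mul]
  ring⟩

lemma M_add (c : ℝ) (p q : ℝ[X]) : M c (p + q) = M c p + M c q := by
  simp only [M, derivative_add]; ring

lemma M_Cmul (c r : ℝ) (p : ℝ[X]) : M c (C r * p) = C r * M c p := by
  simp only [M, derivative_mul, derivative_C, zero_mul, zero_add]; ring

noncomputable def F (t : Multiset ℝ) (p : ℝ[X]) : ℝ[X] := t.foldr M p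

lemma F_add (t : Multiset ℝ) (p q : ℝ[X]) : F t (p + q) = F t p + F t q := by
  induction t using Multiset.induction_on with
  | empty => rfl
  | cons c t ih => simp [F, Multiset.foldr_cons] at ih ⊢; rw [ih, M_add]

lemma F_Cmul (t : Multiset ℝ) (r : ℝ) (p : ℝ[X]) : F t (C r * p) = C r * F t p := by
  induction t using Multiset.induction_on with
  | empty => rfl
  | cons c t ih => simp [F, Multiset.foldr_cons] at ih ⊢; rw [ih, M_Cmul]

lemma F_zero (t : Multiset ℝ) : F t 0 = 0 := by
  have := F_Cmul t 0 0; simpa using this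

lemma F_sub (t : Multiset ℝ) (p q : ℝ[X]) : F t (p - q) = F t p - F t q := by
  have h : p - q = p + C (-1) * q := by simp; ring
  rw [h, F_add, F_Cmul]; simp; ring

lemma F_sum {ι : Type*} (t : Multiset ℝ) (s : Finset ι) (f : ι → ℝ[X]) :
    F t (∑ i ∈ s, f i) = ∑ i ∈ s, F t (f i) := by
  classical
  induction s using Finset.induction_on with
  | empty => simpa using F_zero t
  | insert a s h ih => rw [Finset.sum_insert h, Finset.sum_insert h, F_add, ih]

lemma F_union (t u : Multiset ℝ) (p : ℝ[X]) : F (t + u) p = F t (F u p) := by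
  simp [F, Multiset.foldr_add]

lemma X_mul_deriv (s : ℕ) : X * derivative (X ^ s : ℝ[X]) = C (s : ℝ) * X ^ s := by
  cases s with
  | zero => simp
  | succ m =>
      rw [derivative_X_pow, Nat.add_sub_cancel]
      ring

lemma M_X_pow (c : ℝ) (s : ℕ) : M c (X ^ s) = X ^ (s + 1) - C ((s : ℝ) + c) * X ^ s := by
  simp only [M, X_mul_deriv, pow_succ, C_add]; ring

/-- the multiset of constants for a single index -/
noncomputable def blk (a : ℝ) (m : ℕ) : Multiset ℝ :=
  (Multiset.range m).map (fun j => a + 1 + (j : ℝ))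

lemma blk_cons (a : ℝ) (m : ℕ) : blk a (m + 1) = (a + 1 + (m : ℝ)) ::ₘ blk a m := by
  simp [blk, Multiset.range_succ]

lemma blk_succ (a : ℝ) (m : ℕ) : blk a (m + 1) = blk (a + 1) m + {a + 1} := by
  induction m generalizing a with
  | zero => simp [blk]
  | succ m ih =>
      rw [blk_cons, ih, blk_cons, Multiset.cons_add]
      congr 1
      push_cast; ring

lemma shuffle {R : Type*} [CommRing R] (m : ℕ) (f1 f2 g : ℕ → R)
    (htop : f2 (m + 1) = 0)
    (h0 : g 0 = - f2 0)
    (hstep : ∀ l, l < m + 1 → g (l + 1) = f1 l - f2 (l + 1)) :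
    (∑ l ∈ Finset.range (m + 1), f1 l) - (∑ l ∈ Finset.range (m + 1), f2 l)
      = ∑ l ∈ Finset.range (m + 1 + 1), g l := by
  have e1 : ∑ l ∈ Finset.range (m + 2), g l
      = (∑ l ∈ Finset.range (m + 1), (f1 l - f2 (l + 1))) + g 0 := by
    rw [Finset.sum_range_succ' g (m + 1)]
    congr 1
    exact Finset.sum_congr rfl fun l hl => hstep l (Finset.mem_range.mp hl)
  have e3 : ∑ l ∈ Finset.range (m + 1), f2 (l + 1) = ∑ l ∈ Finset.range m, f2 (l + 1) := by
    rw [Finset.sum_range_succ, htop, add_zero]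
  have e2 : ∑ l ∈ Finset.range (m + 1), f2 (l + 1)
      = ∑ l ∈ Finset.range (m + 1), f2 l - f2 0 := by
    rw [e3, Finset.sum_range_succ' f2 m]; ring
  rw [show m + 1 + 1 = m + 2 from rfl, e1, Finset.sum_sub_distrib, e2, h0]
  ring

lemma F_blk_X (m : ℕ) (a : ℝ) (s : ℕ) :
    F (blk a m) (X ^ s) =
      ∑ l ∈ range (m + 1),
        C ((-1 : ℝ) ^ (m - l) * ((m.choose l : ℝ)) *
            ∏ j ∈ range (m - l), (a + 1 + ((s : ℝ) + (l : ℝ)) + (j : ℝ))) * X ^ (s + l) := by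
  induction m generalizing a s with
  | zero => simp [blk, F]
  | succ m ih =>
      rw [blk_succ, F_union]
      have hsing : F {a + 1} (X ^ s) = M (a + 1) (X ^ s) := rfl
      rw [hsing, M_X_pow, F_sub, F_Cmul, ih, ih]
      rw [Finset.mul_sum]
      apply shuffle
      · -- htop
        simp [Nat.choose_succ_self]
      · -- h0
        simp only [Nat.sub_zero, Nat.cast_zero, add_zero, Nat.choose_zero_right, Nat.cast_one]
        rw [← mul_assoc, ← C_mul, ← neg_mul, ← C_neg]
        congr 1
        rw [Finset.prod_range_succ']
        have e : ∀ j : ℕ, (a + 1 + (s:ℝ) + ((j+1 : ℕ):ℝ)) = (a + 1 + 1 + (s:ℝ) + (j:ℝ)) :=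
          fun j => by push_cast; ring
        simp only [e]
        push_cast
        ring
      · -- hstep
        intro l hl
        rw [show s + 1 + l = s + (l + 1) from by omega]
        rw [← mul_assoc, ← C_mul, ← sub_mul, ← C_sub]
        congr 1
        rcases Nat.lt_succ_iff_lt_or_eq.mp hl with hlm | rfl
        · obtain ⟨d, rfl⟩ := Nat.exists_eq_add_of_lt hlm
          rw [show l + d + 1 + 1 - (l + 1) = d + 1 from by omega,
              show l + d + 1 - l = d + 1 from by omega,
              show l + d + 1 - (l + 1) = d from by omega]
          have e1 : ∀ j : ℕ, (a + 1 + ((s:ℝ) + ((l+1 : ℕ):ℝ)) + (j:ℝ))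
              = (a + (s:ℝ) + (l:ℝ) + 2 + (j:ℝ)) := fun j => by push_cast; ring
          have e2 : ∀ j : ℕ, (a + 1 + 1 + (((s+1 : ℕ):ℝ) + (l:ℝ)) + (j:ℝ))
              = (a + (s:ℝ) + (l:ℝ) + 3 + (j:ℝ)) := fun j => by push_cast; ring
          have e3 : ∀ j : ℕ, (a + 1 + 1 + ((s:ℝ) + ((l+1 : ℕ):ℝ)) + (j:ℝ))
              = (a + (s:ℝ) + (l:ℝ) + 3 + (j:ℝ)) := fun j => by push_cast; ring
          have e4 : ∀ j : ℕ, (a + (s:ℝ) + (l:ℝ) + 2 + ((j+1 : ℕ):ℝ))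
              = (a + (s:ℝ) + (l:ℝ) + 3 + (j:ℝ)) := fun j => by push_cast; ring
          simp only [e1, e2, e3]
          rw [Finset.prod_range_succ' (fun j : ℕ => (a + (s:ℝ) + (l:ℝ) + 2 + (j:ℝ))) d]
          simp only [e4]
          rw [Finset.prod_range_succ (fun j : ℕ => (a + (s:ℝ) + (l:ℝ) + 3 + (j:ℝ))) d]
          set P : ℝ := ∏ j ∈ range d, (a + (s:ℝ) + (l:ℝ) + 3 + (j:ℝ)) with hP
          have h1 : (((l+d+1).choose (l+1) : ℕ) : ℝ) * ((l:ℝ)+1)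
              = (((l+d+1).choose l : ℕ) : ℝ) * ((d:ℝ)+1) := by
            have h := Nat.choose_succ_right_eq (l+d+1) l
            rw [show l + d + 1 - l = d + 1 from by omega] at h
            exact_mod_cast h
          have h2 : (((l+d+1+1).choose (l+1) : ℕ) : ℝ)
              = (((l+d+1).choose l : ℕ) : ℝ) + (((l+d+1).choose (l+1) : ℕ) : ℝ) := by
            exact_mod_cast Nat.choose_succ_succ (l+d+1) l
          push_cast
          push_cast at h1 h2
          congr 1
          linear_combination ((-1:ℝ))^(d+1) * ((a + (s:ℝ) + (l:ℝ) + 2) * P * h2 + P * h1)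
        · -- l = m case
          simp [Nat.choose_succ_self, Nat.choose_self]

noncomputable def msum (r : ℕ) (α : Fin r → ℝ) (n : Fin r → ℕ) : Multiset ℝ :=
  ∑ i, blk (α i) (n i)

lemma pi_succ_sum {r : ℕ} {β : Type*} [AddCommMonoid β] (t : Fin (r+1) → Finset ℕ)
    (G : (Fin (r+1) → ℕ) → β) :
    ∑ k ∈ Fintype.piFinset t, G k
      = ∑ p ∈ (t 0) ×ˢ Fintype.piFinset (fun i : Fin r => t i.succ), G (Fin.cons p.1 p.2) := by
  apply Finset.sum_nbij' (fun k => ((k 0, Fin.tail k) : ℕ × (Fin r → ℕ)))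
      (fun p => Fin.cons p.1 p.2)
  · intro k hk
    rw [Finset.mem_product]
    refine ⟨(Fintype.mem_piFinset.mp hk) 0, Fintype.mem_piFinset.mpr fun i => ?_⟩
    exact (Fintype.mem_piFinset.mp hk) i.succ
  · intro p hp
    rw [Finset.mem_product] at hp
    refine Fintype.mem_piFinset.mpr fun i => ?_
    rcases i.eq_zero_or_eq_succ with rfl | ⟨j, rfl⟩
    · simpa using hp.1
    · simpa using (Fintype.mem_piFinset.mp hp.2) j
  · intro k _; exact Fin.cons_self_tail k
  · intro p _; simp
  · intro k _; rw [Fin.cons_self_tail]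

lemma partial_cons_zero {r : ℕ} (k0 : ℕ) (k' : Fin r → ℕ) :
    ∑ j' ∈ Finset.univ.filter (fun j' => j' ≤ (0 : Fin (r+1))), ((Fin.cons k0 k' : Fin (r+1) → ℕ) j' : ℝ)
      = (k0 : ℝ) := by
  rw [Finset.sum_filter, Fin.sum_univ_succ]
  simp [Fin.le_zero_iff, Fin.succ_ne_zero]

lemma partial_cons_succ {r : ℕ} (k0 : ℕ) (k' : Fin r → ℕ) (i : Fin r) :
    ∑ j' ∈ Finset.univ.filter (fun j' => j' ≤ i.succ), ((Fin.cons k0 k' : Fin (r+1) → ℕ) j' : ℝ)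
      = (k0 : ℝ) + ∑ j' ∈ Finset.univ.filter (fun j' => j' ≤ i), (k' j' : ℝ) := by
  rw [Finset.sum_filter, Fin.sum_univ_succ, Finset.sum_filter]
  simp [Fin.zero_le, Fin.succ_le_succ_iff]

lemma key (r : ℕ) (α : Fin r → ℝ) (n : Fin r → ℕ) (s : ℕ) :
    (∑ k ∈ Fintype.piFinset (fun i => Finset.range (n i + 1)),
      C ((-1 : ℝ) ^ ((∑ i, n i) - (∑ i, k i)) *
        ∏ i, (((n i).choose (k i) : ℝ) *
          ∏ j ∈ Finset.range (n i - k i),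
            (α i + 1 + ((s : ℝ) + ∑ j' ∈ Finset.univ.filter (fun j' => j' ≤ i), (k j' : ℝ)) + (j : ℝ)))) *
      X ^ (s + ∑ i, k i))
    = F (msum r α n) (X ^ s) := by
  induction r generalizing s with
  | zero =>
      simp [msum, F]
  | succ r ih =>
      rw [pi_succ_sum, Finset.sum_product]
      have hmsum : msum (r+1) α n
          = msum r (fun i => α i.succ) (fun i => n i.succ) + blk (α 0) (n 0) := by
        rw [msum, msum, Fin.sum_univ_succ, add_comm]
      rw [hmsum, F_union, F_blk_X, F_sum]
      apply Finset.sum_congr rfl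
      intro k0 hk0
      rw [F_Cmul, ← ih (fun i => α i.succ) (fun i => n i.succ) (s + k0), Finset.mul_sum]
      apply Finset.sum_congr rfl
      intro k' hk'
      dsimp only
      have hk0' : k0 ≤ n 0 := by simpa [Nat.lt_succ_iff] using hk0
      have hK : ∑ i : Fin r, k' i ≤ ∑ i : Fin r, n i.succ := by
        apply Finset.sum_le_sum
        intro i _
        have := (Fintype.mem_piFinset.mp hk') i
        simpa [Nat.lt_succ_iff] using this
      simp only [Fin.sum_univ_succ, Fin.cons_zero, Fin.cons_succ, Fin.prod_univ_succ,
        partial_cons_zero, partial_cons_succ]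
      have hexp : s + (k0 + ∑ i : Fin r, k' i) = (s + k0) + ∑ i : Fin r, k' i := by omega
      have hpow : ((-1 : ℝ)) ^ ((n 0 + ∑ i : Fin r, n i.succ) - (k0 + ∑ i : Fin r, k' i))
          = (-1 : ℝ) ^ (n 0 - k0) * (-1 : ℝ) ^ ((∑ i : Fin r, n i.succ) - (∑ i : Fin r, k' i)) := by
        rw [← pow_add]
        congr 1
        omega
      have etail : ∀ i : Fin r,
          (∏ j ∈ Finset.range (n i.succ - k' i),
            (α i.succ + 1 + ((s : ℝ) + ((k0 : ℝ) + ∑ j' ∈ Finset.univ.filter (fun j' => j' ≤ i), (k' j' : ℝ))) + (j : ℝ)))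
          = (∏ j ∈ Finset.range (n i.succ - k' i),
            (α i.succ + 1 + (((s + k0 : ℕ) : ℝ) + ∑ j' ∈ Finset.univ.filter (fun j' => j' ≤ i), (k' j' : ℝ)) + (j : ℝ))) := by
        intro i
        exact Finset.prod_congr rfl fun j _ => by push_cast; ring
      rw [hexp, hpow]
      simp only [etail]
      conv_rhs => rw [← mul_assoc, ← C_mul]
      congr 1
      congr 1
      ring

/-- The multiple Laguerre polynomial of the first kind of type II:
`L_n^{(α)}(x) = Σ_{k_1=0}^{n_1} ··· Σ_{k_r=0}^{n_r} (-1)^{|n|-|k|}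
  (Π_{i=1}^r C(n_i,k_i) (α_i+1+k_1+···+k_i)^{rising (n_i-k_i)}) x^{|k|}`. -/
noncomputable def multipleLaguerre (r : ℕ) (α : Fin r → ℝ) (n : Fin r → ℕ) : Polynomial ℝ :=
  ∑ k ∈ Fintype.piFinset (fun i => Finset.range (n i + 1)),
    Polynomial.C ((-1 : ℝ) ^ ((∑ i, n i) - (∑ i, k i)) *
        ∏ i, (((n i).choose (k i) : ℝ) *
          ∏ j ∈ Finset.range (n i - k i),
            (α i + 1 + (∑ j' ∈ Finset.univ.filter (fun j' => j' ≤ i), (k j' : ℝ)) + (j : ℝ)))) *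
      Polynomial.X ^ (∑ i, k i)

lemma multipleLaguerre_eq_fold (r : ℕ) (α : Fin r → ℝ) (n : Fin r → ℕ) :
    multipleLaguerre r α n = F (msum r α n) 1 := by
  have h := key r α n 0
  simp only [Nat.cast_zero, zero_add, pow_zero] at h
  rw [multipleLaguerre]
  exact h

/-- the multiple Laguerre polynomial is invariant under joint
permutations of `n = (n_1,...,n_r)` and `α = (α_1,...,α_r)`. -/
theorem multipleLaguerre_perm_invariant (r : ℕ) (α : Fin r → ℝ) (n : Fin r → ℕ)
    (σ : Equiv.Perm (Fin r)) :
    multipleLaguerre r (α ∘ σ) (n ∘ σ) = multipleLaguerre r α n := by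
  rw [multipleLaguerre_eq_fold, multipleLaguerre_eq_fold]
  congr 1
  exact Fintype.sum_equiv σ (fun i => blk ((α ∘ σ) i) ((n ∘ σ) i)) (fun i => blk (α i) (n i))
    (fun i => rfl)
end

section
/- For α > -1 and x ≥ 0, the unsigned monic Laguerre polynomials satisfy the Stieltjes moment representation ℒ_n^{(α)}(x) = e^{-x} ∫_0^∞ y^n · (Σ_{m≥0} (xy)^m / (m! (α+1)^{rising m})) · (1/Γ(α+1)) y^α e^{-y} dy for all n ≥ 0. -/
open Finset MeasureTheory

/-- The unsigned monic Laguerre polynomial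
`ℒ_n^{(α)}(x) = Σ_{k=0}^n C(n,k) (α+1+k)^{rising (n-k)} x^k`. -/
noncomputable def unsignedLaguerreVal (α x : ℝ) (n : ℕ) : ℝ :=
  ∑ k ∈ Finset.range (n + 1),
    (n.choose k : ℝ) * (∏ j ∈ Finset.range (n - k), (α + 1 + (k : ℝ) + (j : ℝ))) * x ^ k

noncomputable def risP (a : ℝ) (k : ℕ) : ℝ := ∏ j ∈ Finset.range k, (a + (j : ℝ))

lemma risP_pos {a : ℝ} (ha : 0 < a) (k : ℕ) : 0 < risP a k :=
  Finset.prod_pos fun j _ => by positivity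

lemma risP_add (a : ℝ) (m k : ℕ) : risP a (m + k) = risP a m * risP (a + m) k := by
  rw [risP, Finset.prod_range_add]
  congr 1
  exact Finset.prod_congr rfl fun j _ => by push_cast [risP]; ring

lemma risP_diff (a : ℝ) (k : ℕ) :
    risP (a + 1) k - risP a k = (k : ℝ) * risP (a + 1) (k - 1) := by
  cases k with
  | zero => simp [risP]
  | succ s =>
    have h1 : risP (a + 1) (s + 1) = risP (a + 1) s * (a + 1 + s) := by
      rw [risP, Finset.prod_range_succ]; rfl
    have h2 : risP a (s + 1) = a * risP (a + 1) s := by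
      rw [risP, Finset.prod_range_succ']
      simp only [Nat.cast_zero, add_zero]
      rw [mul_comm]
      congr 1
      exact Finset.prod_congr rfl fun j _ => by push_cast; ring
    rw [h1, h2]
    simp only [Nat.add_sub_cancel]
    push_cast; ring

lemma diffstep (f : ℕ → ℝ) (k : ℕ) :
    ∑ m ∈ Finset.range (k + 2), (-1 : ℝ) ^ m * ((k + 1).choose m) * f m
      = ∑ m ∈ Finset.range (k + 1), (-1 : ℝ) ^ m * (k.choose m) * (f m - f (m + 1)) := by
  set S1 := ∑ m ∈ Finset.range (k + 1), (-1 : ℝ) ^ m * (k.choose m) * f (m + 1) with hS1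
  set S2 := ∑ m ∈ Finset.range k, (-1 : ℝ) ^ m * (k.choose (m + 1)) * f (m + 1) with hS2
  have h2 : ∑ m ∈ Finset.range (k + 1), (-1 : ℝ) ^ m * (k.choose (m + 1)) * f (m + 1) = S2 := by
    rw [Finset.sum_range_succ]
    simp [Nat.choose_succ_self]
    exact hS2.symm
  have hA : ∑ m ∈ Finset.range (k + 2), (-1 : ℝ) ^ m * ((k + 1).choose m) * f m
      = -S1 - S2 + f 0 := by
    rw [Finset.sum_range_succ' (fun m => (-1 : ℝ) ^ m * ((k + 1).choose m) * f m) (k + 1)]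
    have hc : ∀ m ∈ Finset.range (k + 1), (-1 : ℝ) ^ (m + 1) * (((k + 1).choose (m + 1) : ℕ) : ℝ) * f (m + 1)
        = -((-1 : ℝ) ^ m * (k.choose m) * f (m + 1)) + -((-1 : ℝ) ^ m * (k.choose (m + 1)) * f (m + 1)) := by
      intro m _
      rw [Nat.choose_succ_succ]
      push_cast
      ring
    rw [Finset.sum_congr rfl hc, Finset.sum_add_distrib, Finset.sum_neg_distrib,
      Finset.sum_neg_distrib, h2, ← hS1]
    simp only [pow_zero, Nat.choose_zero_right, Nat.cast_one, one_mul]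
    ring
  have hB : ∑ m ∈ Finset.range (k + 1), (-1 : ℝ) ^ m * (k.choose m) * (f m - f (m + 1))
      = (-S2 + f 0) - S1 := by
    have hsplit : ∑ m ∈ Finset.range (k + 1), (-1 : ℝ) ^ m * (k.choose m) * (f m - f (m + 1))
        = (∑ m ∈ Finset.range (k + 1), (-1 : ℝ) ^ m * (k.choose m) * f m) - S1 := by
      rw [hS1, ← Finset.sum_sub_distrib]
      exact Finset.sum_congr rfl fun m _ => by ring
    have hm : ∑ m ∈ Finset.range (k + 1), (-1 : ℝ) ^ m * (k.choose m) * f m = -S2 + f 0 := by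
      rw [Finset.sum_range_succ' (fun m => (-1 : ℝ) ^ m * (k.choose m) * f m) k]
      have hc : ∀ m ∈ Finset.range k, (-1 : ℝ) ^ (m + 1) * ((k.choose (m + 1) : ℕ) : ℝ) * f (m + 1)
          = -((-1 : ℝ) ^ m * (k.choose (m + 1)) * f (m + 1)) := by
        intro m _; push_cast; ring
      rw [Finset.sum_congr rfl hc, Finset.sum_neg_distrib, ← hS2]
      simp
    rw [hsplit, hm]
  rw [hA, hB]
  ring

lemma findiff : ∀ (k n : ℕ) (a : ℝ),
    ∑ m ∈ Finset.range (k + 1), (-1 : ℝ) ^ m * (k.choose m) * risP (a + m) n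
      = (-1 : ℝ) ^ k * (∏ i ∈ Finset.range k, ((n : ℝ) - i)) * risP (a + k) (n - k) := by
  intro k
  induction k with
  | zero => intro n a; simp
  | succ k ih =>
    intro n a
    cases n with
    | zero =>
      have hL : ∑ m ∈ Finset.range (k + 1 + 1), (-1 : ℝ) ^ m * ((k + 1).choose m) * risP (a + m) 0
          = ∑ m ∈ Finset.range (k + 1 + 1), (-1 : ℝ) ^ m * ((k + 1).choose m) := by
        refine Finset.sum_congr rfl fun m _ => ?_
        simp [risP]
      rw [hL]
      have hz : ∑ m ∈ Finset.range (k + 1 + 1), (-1 : ℝ) ^ m * ((k + 1).choose m) = 0 := by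
        have := Int.alternating_sum_range_choose_of_ne (Nat.succ_ne_zero k)
        calc ∑ m ∈ Finset.range (k + 1 + 1), (-1 : ℝ) ^ m * ((k + 1).choose m)
            = ((∑ m ∈ Finset.range (k + 1 + 1), (-1 : ℤ) ^ m * ((k + 1).choose m) : ℤ) : ℝ) := by
              push_cast; ring
          _ = 0 := by rw [this]; simp
      rw [hz]
      have hp : (∏ i ∈ Finset.range (k + 1), (((0 : ℕ) : ℝ) - i)) = 0 := by
        apply Finset.prod_eq_zero (Finset.mem_range.2 (Nat.succ_pos k))
        simp
      rw [hp]
      ring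
    | succ s =>
      have hstep : ∑ m ∈ Finset.range (k + 2), (-1 : ℝ) ^ m * ((k + 1).choose m) * risP (a + m) (s + 1)
          = ∑ m ∈ Finset.range (k + 1), (-1 : ℝ) ^ m * (k.choose m) *
              (risP (a + m) (s + 1) - risP (a + (m + 1 : ℕ)) (s + 1)) :=
        diffstep (fun m => risP (a + m) (s + 1)) k
      have hterm : ∀ m ∈ Finset.range (k + 1),
          (-1 : ℝ) ^ m * (k.choose m) * (risP (a + m) (s + 1) - risP (a + (m + 1 : ℕ)) (s + 1))
            = (-(s + 1 : ℝ)) * ((-1 : ℝ) ^ m * (k.choose m) * risP ((a + 1) + m) s) := by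
        intro m _
        have hd := risP_diff (a + m) (s + 1)
        have harg : a + (m : ℝ) + 1 = (a + 1) + m := by ring
        rw [harg] at hd
        have harg2 : a + ((m + 1 : ℕ) : ℝ) = (a + 1) + m := by push_cast; ring
        rw [harg2]
        simp only [Nat.add_sub_cancel] at hd
        have : risP (a + m) (s + 1) - risP ((a + 1) + m) (s + 1) = -((s + 1 : ℝ) * risP ((a + 1) + m) s) := by
          push_cast at hd ⊢
          linarith
        rw [this]
        ring
      rw [hstep, Finset.sum_congr rfl hterm, ← Finset.mul_sum, ih s (a + 1)]
      have hnsub : (s + 1) - (k + 1) = s - k := Nat.succ_sub_succ s k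
      have hargs : (a + 1) + (k : ℝ) = a + ((k + 1 : ℕ) : ℝ) := by push_cast; ring
      rw [hnsub.symm] at *
      have hprod : ∏ i ∈ Finset.range (k + 1), (((s + 1 : ℕ) : ℝ) - i)
          = (∏ i ∈ Finset.range k, ((s : ℝ) - i)) * ((s : ℝ) + 1) := by
        rw [Finset.prod_range_succ' (fun i => (((s + 1 : ℕ) : ℝ) - i)) k]
        have h1 : ∀ i ∈ Finset.range k, (((s + 1 : ℕ) : ℝ) - ((i + 1 : ℕ) : ℝ)) = (s : ℝ) - i :=
          fun i _ => by push_cast; ring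
        rw [Finset.prod_congr rfl h1]
        push_cast
        ring
      rw [hprod, hargs, hnsub]
      push_cast
      ring

lemma fall_eq_choose : ∀ (k n : ℕ),
    (∏ i ∈ Finset.range k, ((n : ℝ) - i)) = (k.factorial : ℝ) * (n.choose k) := by
  intro k
  induction k with
  | zero => intro n; simp
  | succ k ih =>
    intro n
    rw [Finset.prod_range_succ, ih n]
    rcases lt_or_ge k n with h | h
    · have hc : (n.choose (k + 1) : ℝ) * (k + 1) = (n.choose k : ℝ) * ((n : ℝ) - k) := by
        have := Nat.choose_succ_right_eq n k
        have hcast : ((n - k : ℕ) : ℝ) = (n : ℝ) - k := by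
          rw [Nat.cast_sub h.le]
        calc (n.choose (k + 1) : ℝ) * (k + 1) = ((n.choose (k + 1) * (k + 1) : ℕ) : ℝ) := by push_cast; ring
          _ = ((n.choose k * (n - k) : ℕ) : ℝ) := by rw [this]
          _ = (n.choose k : ℝ) * ((n : ℝ) - k) := by push_cast [hcast]; ring
      push_cast [Nat.factorial_succ]
      nlinarith [hc]
    · rcases eq_or_lt_of_le h with rfl | h'
      · simp
      · rw [Nat.choose_eq_zero_of_lt h', Nat.choose_eq_zero_of_lt (h'.trans (Nat.lt_succ_self k))]
        simp

lemma Gamma_risP {a : ℝ} (ha : 0 < a) : ∀ k : ℕ, Real.Gamma (a + k) = risP a k * Real.Gamma a := by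
  intro k
  induction k with
  | zero => simp [risP]
  | succ k ih =>
    have h : a + ((k + 1 : ℕ) : ℝ) = (a + k) + 1 := by push_cast; ring
    have hpos : a + (k : ℝ) ≠ 0 := by positivity
    rw [h, Real.Gamma_add_one hpos, ih]
    have : risP a (k + 1) = risP a k * (a + k) := by
      rw [risP, Finset.prod_range_succ]; rfl
    rw [this]
    ring

lemma summable_t {α x : ℝ} (hα : 0 < α + 1) (hx : 0 ≤ x) (n : ℕ) :
    Summable (fun m : ℕ => x ^ m * risP (α + 1 + m) n / m.factorial) := by
  set B := α + 2 + (n : ℝ) with hB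
  have hB1 : 1 ≤ B := by have : (0:ℝ) ≤ (n:ℝ) := Nat.cast_nonneg n; linarith
  have hB0 : 0 < B := lt_of_lt_of_le one_pos hB1
  set C := ∑' j : ℕ, (2 * x) ^ j / j.factorial with hC
  have hCsum := Real.summable_pow_div_factorial (2 * x)
  have hCle : ∀ m : ℕ, (2 * x) ^ m / m.factorial ≤ C := fun m =>
    Summable.le_tsum hCsum m (fun j _ => by positivity)
  have hC0 : 0 ≤ C := le_trans (by positivity) (hCle 0)
  have hg : Summable (fun m : ℕ => ((m : ℝ) + 1) ^ n * (1 / 2 : ℝ) ^ m) := by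
    have h0 : Summable (fun m : ℕ => ((m : ℝ)) ^ n * (1 / 2 : ℝ) ^ m) :=
      summable_pow_mul_geometric_of_norm_lt_one n (by rw [Real.norm_eq_abs]; rw [abs_of_pos] <;> norm_num)
    have h1 : Summable (fun m : ℕ => (((m + 1 : ℕ) : ℝ)) ^ n * (1 / 2 : ℝ) ^ (m + 1)) :=
      (summable_nat_add_iff (f := fun m : ℕ => ((m : ℝ)) ^ n * (1 / 2 : ℝ) ^ m) 1).2 h0
    have h2 := h1.mul_left 2
    refine h2.congr fun m => ?_
    push_cast
    ring
  apply Summable.of_nonneg_of_le (f := fun m : ℕ => (C * B ^ n) * (((m : ℝ) + 1) ^ n * (1 / 2 : ℝ) ^ m))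
    (fun m => by have := (risP_pos (show (0:ℝ) < α+1+m by have : (0:ℝ) ≤ (m:ℝ) := Nat.cast_nonneg m; linarith) n).le; positivity) ?_ (hg.mul_left (C * B ^ n))
  intro m
  have hrpos : (0:ℝ) < α + 1 + m := by have : (0:ℝ) ≤ (m:ℝ) := Nat.cast_nonneg m; linarith
  have hrnn : 0 ≤ risP (α + 1 + m) n := (risP_pos hrpos n).le
  have hrisP_le : risP (α + 1 + m) n ≤ (B * ((m : ℝ) + 1)) ^ n := by
    rw [risP]
    have hbd : ∀ j ∈ Finset.range n, α + 1 + (m : ℝ) + j ≤ B * ((m : ℝ) + 1) := by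
      intro j hj
      have hjn : (j : ℝ) < n := by exact_mod_cast Finset.mem_range.1 hj
      have hm0 : (0:ℝ) ≤ (m : ℝ) := Nat.cast_nonneg m
      have hn0 : (0:ℝ) ≤ (n : ℝ) := Nat.cast_nonneg n
      rw [hB]
      nlinarith
    calc ∏ j ∈ Finset.range n, (α + 1 + (m : ℝ) + j)
        ≤ ∏ j ∈ Finset.range n, (B * ((m : ℝ) + 1)) := by
          apply Finset.prod_le_prod (fun j _ => by positivity) ?hbd
          intro j hj
          have := hbd j hj
          linarith [hbd j hj]
      _ = (B * ((m : ℝ) + 1)) ^ n := by rw [Finset.prod_const, Finset.card_range]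
  have hx2 : x ^ m / m.factorial ≤ C * (1 / 2 : ℝ) ^ m := by
    have hxe : x ^ m = (2 * x) ^ m * (1 / 2 : ℝ) ^ m := by
      rw [← mul_pow]
      congr 1
      ring
    calc x ^ m / m.factorial = (2 * x) ^ m / m.factorial * (1 / 2 : ℝ) ^ m := by
          rw [hxe]; ring
      _ ≤ C * (1 / 2 : ℝ) ^ m :=
          mul_le_mul_of_nonneg_right (hCle m) (by positivity)
  calc x ^ m * risP (α + 1 + m) n / m.factorial
      = (x ^ m / m.factorial) * risP (α + 1 + m) n := by ring
    _ ≤ (C * (1 / 2 : ℝ) ^ m) * (B * ((m : ℝ) + 1)) ^ n := by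
        apply mul_le_mul hx2 hrisP_le hrnn (by positivity)
    _ = (C * B ^ n) * (((m : ℝ) + 1) ^ n * (1 / 2 : ℝ) ^ m) := by
        rw [mul_pow]; ring

lemma coeff_eq {α x : ℝ} (k n : ℕ) :
    ∑ j ∈ Finset.range (k + 1),
        ((-x) ^ j / j.factorial) * (x ^ (k - j) * risP (α + 1 + (k - j : ℕ)) n / (k - j).factorial)
      = (n.choose k : ℝ) * risP (α + 1 + k) (n - k) * x ^ k := by
  have hterm : ∀ j ∈ Finset.range (k + 1),
      ((-x) ^ j / j.factorial) * (x ^ (k - j) * risP (α + 1 + (k - j : ℕ)) n / (k - j).factorial)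
        = (x ^ k / k.factorial) * ((-1 : ℝ) ^ k *
            ((-1 : ℝ) ^ (k - j) * ((k.choose (k - (k - j))) : ℝ) * risP ((α + 1) + (k - j : ℕ)) n)) := by
    intro j hj
    have hjk : j ≤ k := Nat.lt_succ_iff.1 (Finset.mem_range.1 hj)
    have hxp : x ^ j * x ^ (k - j) = x ^ k := by
      rw [← pow_add, Nat.add_sub_cancel' hjk]
    have hsign : (-1 : ℝ) ^ (k - j) * (-1 : ℝ) ^ j = (-1 : ℝ) ^ k := by
      rw [← pow_add, Nat.sub_add_cancel hjk]
    have hneg : (-x) ^ j = (-1 : ℝ) ^ j * x ^ j := by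
      rw [neg_pow]
    have hkk : k - (k - j) = j := Nat.sub_sub_self hjk
    have hfact : ((k.choose j : ℕ) : ℝ) * (j.factorial : ℝ) * ((k - j).factorial : ℝ)
        = (k.factorial : ℝ) := by
      exact_mod_cast congrArg (Nat.cast : ℕ → ℝ) (Nat.choose_mul_factorial_mul_factorial hjk)
    rw [hkk, hneg]
    set R := risP (α + 1 + ((k - j : ℕ) : ℝ)) n with hR
    have hsq : (-1 : ℝ) ^ (k - j) * (-1 : ℝ) ^ (k - j) = 1 := by
      rw [← mul_pow]; norm_num
    have hk2 : (-1 : ℝ) ^ k * (-1 : ℝ) ^ (k - j) = (-1 : ℝ) ^ j := by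
      calc (-1 : ℝ) ^ k * (-1 : ℝ) ^ (k - j)
          = ((-1 : ℝ) ^ (k - j) * (-1 : ℝ) ^ j) * (-1 : ℝ) ^ (k - j) := by rw [hsign]
        _ = (-1 : ℝ) ^ j * ((-1 : ℝ) ^ (k - j) * (-1 : ℝ) ^ (k - j)) := by ring
        _ = (-1 : ℝ) ^ j := by rw [hsq]; ring
    have hj0 : (0:ℝ) < j.factorial := by exact_mod_cast j.factorial_pos
    have hkj0 : (0:ℝ) < (k - j).factorial := by exact_mod_cast (k - j).factorial_pos
    have hk0 : (0:ℝ) < k.factorial := by exact_mod_cast k.factorial_pos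
    have hrhs : (x ^ k / k.factorial) * ((-1 : ℝ) ^ k *
          ((-1 : ℝ) ^ (k - j) * ((k.choose j) : ℝ) * R))
        = x ^ k * ((-1 : ℝ) ^ j * (k.choose j) * R) / k.factorial := by
      rw [div_mul_eq_mul_div]
      congr 1
      calc x ^ k * ((-1 : ℝ) ^ k * ((-1 : ℝ) ^ (k - j) * ((k.choose j) : ℝ) * R))
          = ((-1 : ℝ) ^ k * (-1 : ℝ) ^ (k - j)) * (x ^ k * ((k.choose j) : ℝ) * R) := by ring
        _ = x ^ k * ((-1 : ℝ) ^ j * (k.choose j) * R) := by rw [hk2]; ring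
    rw [hrhs]
    rw [div_mul_div_comm]
    have hlhs : (-1 : ℝ) ^ j * x ^ j * (x ^ (k - j) * R) = (-1 : ℝ) ^ j * x ^ k * R := by
      calc (-1 : ℝ) ^ j * x ^ j * (x ^ (k - j) * R)
          = (-1 : ℝ) ^ j * (x ^ j * x ^ (k - j)) * R := by ring
        _ = (-1 : ℝ) ^ j * x ^ k * R := by rw [hxp]
    rw [hlhs, div_eq_div_iff (by positivity) hk0.ne']
    linear_combination (-((-1 : ℝ) ^ j * x ^ k * R)) * hfact
  rw [Finset.sum_congr rfl hterm, ← Finset.mul_sum, ← Finset.mul_sum]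
  have hrefl : (∑ j ∈ Finset.range (k + 1),
        ((-1 : ℝ) ^ (k - j) * ((k.choose (k - (k - j))) : ℝ) * risP ((α + 1) + ((k - j : ℕ) : ℝ)) n))
      = ∑ m ∈ Finset.range (k + 1),
        ((-1 : ℝ) ^ m * ((k.choose (k - m)) : ℝ) * risP ((α + 1) + (m : ℝ)) n) := by
    have h := Finset.sum_range_reflect
      (fun m => (-1 : ℝ) ^ m * ((k.choose (k - m)) : ℝ) * risP ((α + 1) + (m : ℝ)) n) (k + 1)
    simp only [Nat.add_sub_cancel] at h
    exact h
  rw [hrefl]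
  have hsym : ∀ m ∈ Finset.range (k + 1),
      (-1 : ℝ) ^ m * ((k.choose (k - m)) : ℝ) * risP ((α + 1) + (m : ℝ)) n
        = (-1 : ℝ) ^ m * ((k.choose m) : ℝ) * risP ((α + 1) + (m : ℝ)) n := by
    intro m hm
    rw [Nat.choose_symm (Nat.lt_succ_iff.1 (Finset.mem_range.1 hm))]
  rw [Finset.sum_congr rfl hsym, findiff k n (α + 1), fall_eq_choose k n]
  have hsq : (-1 : ℝ) ^ k * (-1 : ℝ) ^ k = 1 := by rw [← mul_pow]; norm_num
  have hk0 : ((k.factorial : ℕ) : ℝ) ≠ 0 := by exact_mod_cast k.factorial_pos.ne'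
  have harg : α + 1 + (k : ℝ) = (α + 1) + (k : ℝ) := by ring
  calc (x ^ k / k.factorial) * ((-1 : ℝ) ^ k *
        (((-1 : ℝ) ^ k * ((k.factorial : ℝ) * (n.choose k))) * risP ((α + 1) + (k : ℝ)) (n - k)))
      = ((-1 : ℝ) ^ k * (-1 : ℝ) ^ k) *
          ((x ^ k / k.factorial) * ((k.factorial : ℝ) * (n.choose k) * risP ((α + 1) + (k : ℝ)) (n - k))) := by
        ring
    _ = (n.choose k : ℝ) * risP (α + 1 + k) (n - k) * x ^ k := by
        rw [hsq, harg]
        field_simp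

lemma series_side {α x : ℝ} (hα : 0 < α + 1) (hx : 0 ≤ x) (n : ℕ) :
    Real.exp (-x) * ∑' m : ℕ, x ^ m * risP (α + 1 + m) n / m.factorial
      = ∑ k ∈ Finset.range (n + 1),
          (n.choose k : ℝ) * risP (α + 1 + k) (n - k) * x ^ k := by
  have hexp : Real.exp (-x) = ∑' j : ℕ, (-x) ^ j / j.factorial := by
    rw [Real.exp_eq_exp_ℝ, NormedSpace.exp_eq_tsum_div]
  have hf_norm : Summable fun j : ℕ => ‖(-x) ^ j / j.factorial‖ := by
    refine (Real.summable_pow_div_factorial |x|).congr fun j => ?_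
    rw [norm_div, norm_pow, norm_neg, Real.norm_eq_abs, Real.norm_eq_abs,
      Nat.abs_cast]
  have hg_norm : Summable fun m : ℕ => ‖x ^ m * risP (α + 1 + m) n / m.factorial‖ := by
    refine ((summable_t hα hx n).abs).congr fun m => ?_
    rw [Real.norm_eq_abs]
  rw [hexp, tsum_mul_tsum_eq_tsum_sum_range_of_summable_norm hf_norm hg_norm]
  have hco : ∀ k : ℕ, (∑ j ∈ Finset.range (k + 1),
        ((-x) ^ j / j.factorial) * (x ^ (k - j) * risP (α + 1 + ((k - j : ℕ) : ℝ)) n / (k - j).factorial))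
      = (n.choose k : ℝ) * risP (α + 1 + k) (n - k) * x ^ k := fun k => coeff_eq k n
  rw [tsum_congr hco]
  refine tsum_eq_sum fun k hk => ?_
  have hnk : n < k := by
    by_contra h
    exact hk (Finset.mem_range.2 (Nat.lt_succ_iff.2 (not_lt.1 h)))
  rw [Nat.choose_eq_zero_of_lt hnk]
  simp

lemma integral_side {α x : ℝ} (hα : 0 < α + 1) (hx : 0 ≤ x) (n : ℕ) :
    (∫ y in Set.Ioi (0 : ℝ),
        y ^ n *
          (∑' m : ℕ, (x * y) ^ m /
            ((m.factorial : ℝ) * ∏ j ∈ Finset.range m, (α + 1 + (j : ℝ)))) *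
          ((Real.Gamma (α + 1))⁻¹ * y ^ α * Real.exp (-y)))
      = ∑' m : ℕ, x ^ m * risP (α + 1 + m) n / m.factorial := by
  have hΓpos : 0 < Real.Gamma (α + 1) := Real.Gamma_pos_of_pos hα
  set F : ℕ → ℝ → ℝ := fun m y =>
    y ^ n * (((x * y) ^ m / ((m.factorial : ℝ) * risP (α + 1) m)) *
      ((Real.Gamma (α + 1))⁻¹ * y ^ α * Real.exp (-y))) with hF
  have hpt : ∀ y : ℝ,
      y ^ n * (∑' m : ℕ, (x * y) ^ m / ((m.factorial : ℝ) * ∏ j ∈ Finset.range m, (α + 1 + (j : ℝ)))) *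
        ((Real.Gamma (α + 1))⁻¹ * y ^ α * Real.exp (-y))
      = ∑' m : ℕ, F m y := by
    intro y
    rw [mul_assoc, ← tsum_mul_right, ← tsum_mul_left]
    rfl
  -- per-index data
  have hPpos : ∀ m : ℕ, 0 < risP (α + 1) m := fun m => risP_pos hα m
  have hkey : ∀ m : ℕ,
      (∫ y in Set.Ioi (0 : ℝ), F m y) = x ^ m * risP (α + 1 + m) n / m.factorial
      ∧ IntegrableOn (F m) (Set.Ioi (0 : ℝ)) := by
    intro m
    set N := n + m with hN
    set s : ℝ := α + 1 + (N : ℝ) with hs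
    have hspos : 0 < s := by
      have : (0:ℝ) ≤ (N:ℝ) := Nat.cast_nonneg N
      simp only [hs]; linarith
    set c : ℝ := x ^ m / ((m.factorial : ℝ) * risP (α + 1) m) * (Real.Gamma (α + 1))⁻¹ with hc
    have heq : ∀ y ∈ Set.Ioi (0 : ℝ), F m y = c * (Real.exp (-y) * y ^ (s - 1)) := by
      intro y hy
      have hy0 : (0:ℝ) < y := hy
      have hyy : y ^ n * y ^ m * y ^ α = y ^ (s - 1) := by
        have h1 : y ^ n * y ^ m = y ^ ((N : ℕ) : ℝ) := by
          rw [← pow_add, ← Real.rpow_natCast y N]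
        have h2 : y ^ ((N : ℕ) : ℝ) * y ^ α = y ^ ((N : ℝ) + α) := (Real.rpow_add hy0 _ _).symm
        rw [h1, h2]
        congr 1
        simp only [hs]
        ring
      have hmp : (x * y) ^ m = x ^ m * y ^ m := mul_pow x y m
      rw [hF]
      simp only
      rw [hmp, hc]
      rw [← hyy]
      ring
    have hG : IntegrableOn (fun y => Real.exp (-y) * y ^ (s - 1)) (Set.Ioi (0 : ℝ)) :=
      Real.GammaIntegral_convergent hspos
    have hae : F m =ᵐ[volume.restrict (Set.Ioi (0 : ℝ))]
        fun y => c * (Real.exp (-y) * y ^ (s - 1)) :=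
      (ae_restrict_iff' measurableSet_Ioi).2 (Filter.Eventually.of_forall fun y hy => heq y hy)
    have hInt : IntegrableOn (F m) (Set.Ioi (0 : ℝ)) :=
      ((hG.const_mul c).congr hae.symm)
    refine ⟨?_, hInt⟩
    rw [integral_congr_ae hae, MeasureTheory.integral_const_mul, ← Real.Gamma_eq_integral hspos]
    have hΓs : Real.Gamma s = risP (α + 1) N * Real.Gamma (α + 1) := Gamma_risP hα N
    have hsplit : risP (α + 1) N = risP (α + 1) m * risP (α + 1 + m) n := by
      rw [hN, Nat.add_comm n m, risP_add]
    rw [hΓs, hsplit, hc]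
    have h1 : risP (α + 1) m ≠ 0 := (hPpos m).ne'
    have h2 : Real.Gamma (α + 1) ≠ 0 := hΓpos.ne'
    have h3 : ((m.factorial : ℕ) : ℝ) ≠ 0 := by exact_mod_cast m.factorial_pos.ne'
    field_simp
  have hF_int : ∀ m : ℕ, Integrable (F m) (volume.restrict (Set.Ioi (0 : ℝ))) := fun m =>
    (hkey m).2
  have hF_nonneg : ∀ m : ℕ, ∀ y ∈ Set.Ioi (0 : ℝ), 0 ≤ F m y := by
    intro m y hy
    have hy0 : (0:ℝ) < y := hy
    have hP := hPpos m
    have hr : (0:ℝ) ≤ y ^ α := Real.rpow_nonneg hy0.le α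
    rw [hF]
    simp only
    have : (0:ℝ) ≤ (x * y) ^ m := pow_nonneg (by positivity) m
    positivity
  have hF_sum : Summable fun m : ℕ => ∫ y in Set.Ioi (0 : ℝ), ‖F m y‖ := by
    refine (summable_t hα hx n).congr fun m => ?_
    have hae2 : (fun y => ‖F m y‖) =ᵐ[volume.restrict (Set.Ioi (0 : ℝ))] F m :=
      (ae_restrict_iff' measurableSet_Ioi).2
        (Filter.Eventually.of_forall fun y hy => by
          show ‖F m y‖ = F m y
          rw [Real.norm_eq_abs, abs_of_nonneg (hF_nonneg m y hy)])
    rw [integral_congr_ae hae2, (hkey m).1]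
  have hmain := integral_tsum_of_summable_integral_norm hF_int hF_sum
  calc (∫ y in Set.Ioi (0 : ℝ),
        y ^ n * (∑' m : ℕ, (x * y) ^ m /
          ((m.factorial : ℝ) * ∏ j ∈ Finset.range m, (α + 1 + (j : ℝ)))) *
          ((Real.Gamma (α + 1))⁻¹ * y ^ α * Real.exp (-y)))
      = ∫ y in Set.Ioi (0 : ℝ), ∑' m : ℕ, F m y := by
        refine integral_congr_ae (Filter.Eventually.of_forall fun y => hpt y)
    _ = ∑' m : ℕ, ∫ y in Set.Ioi (0 : ℝ), F m y := hmain.symm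
    _ = ∑' m : ℕ, x ^ m * risP (α + 1 + m) n / m.factorial := by
        exact tsum_congr fun m => (hkey m).1

/-- for `α > -1` and `x ≥ 0`, the Stieltjes moment representation
`ℒ_n^{(α)}(x) = e^{-x} ∫_0^∞ y^n · ₀F₁(α+1; xy) · y^α e^{-y}/Γ(α+1) dy`,
where `₀F₁(α+1; z) = Σ_{m≥0} z^m/(m! (α+1)^{rising m})`. -/
theorem unsignedLaguerre_stieltjes (α : ℝ) (hα : -1 < α) (x : ℝ) (hx : 0 ≤ x) (n : ℕ) :
    unsignedLaguerreVal α x n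
      = Real.exp (-x) *
        ∫ y in Set.Ioi (0 : ℝ),
          y ^ n *
            (∑' m : ℕ, (x * y) ^ m /
              ((m.factorial : ℝ) * ∏ j ∈ Finset.range m, (α + 1 + (j : ℝ)))) *
            ((Real.Gamma (α + 1))⁻¹ * y ^ α * Real.exp (-y)) := by
  have hα1 : 0 < α + 1 := by linarith
  have h1 : unsignedLaguerreVal α x n
      = ∑ k ∈ Finset.range (n + 1), (n.choose k : ℝ) * risP (α + 1 + k) (n - k) * x ^ k := rfl
  rw [integral_side hα1 hx n]
  exact h1.trans (series_side hα1 hx n).symm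
end

section
/- For α_1,...,α_r > -1 and x ≥ 0, the unsigned monic multiple Laguerre polynomials satisfy ℒ_n^{(α)}(x) = ∫_{[0,∞)^r} y_1^{n_1}···y_r^{n_r} dμ_{α,x}(y) for all n ∈ ℕ^r, where dμ_{α,x}(y) = e^{-x} (Σ_{m≥0} (x y_1···y_r)^m / (m! Π_i (α_i+1)^{rising m})) Π_{i=1}^r (1/Γ(α_i+1)) y_i^{α_i} e^{-y_i} dy_i is a positive measure on [0,∞)^r. -/
open Finset MeasureTheory

/-- The unsigned monic multiple Laguerre polynomial value
`ℒ_n^{(α)}(x) = (-1)^{|n|} L_n^{(α)}(-x)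
  = Σ_k (Π_i C(n_i,k_i)(α_i+1+k_1+···+k_i)^{rising(n_i-k_i)}) x^{|k|}`. -/
noncomputable def unsignedMultipleLaguerreVal (r : ℕ) (α : Fin r → ℝ) (n : Fin r → ℕ)
    (x : ℝ) : ℝ :=
  ∑ k ∈ Fintype.piFinset (fun i => Finset.range (n i + 1)),
    (∏ i, (((n i).choose (k i) : ℝ) *
      ∏ j ∈ Finset.range (n i - k i),
        (α i + 1 + (∑ j' ∈ Finset.univ.filter (fun j' => j' ≤ i), (k j' : ℝ)) + (j : ℝ)))) *
      x ^ (∑ i, k i)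


lemma rise_succ' (b : ℝ) (p : ℕ) :
    ∏ j ∈ Finset.range (p+1), (b + j) = b * ∏ j ∈ Finset.range p, (b + 1 + j) := by
  rw [Finset.prod_range_succ']
  push_cast
  rw [add_zero, mul_comm]
  congr 1
  exact Finset.prod_congr rfl fun j _ => by ring

lemma pascal_real (n k : ℕ) (b : ℝ) (hk : k < n) :
    ((n+1).choose (k+1) : ℝ) * (b + 1 + k) = b * (n.choose (k+1)) + (n.choose k) * (b + n + 1) := by
  have h1 : ((n+1).choose (k+1) : ℝ) = n.choose k + n.choose (k+1) := by
    rw [Nat.choose_succ_succ]; push_cast; ring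
  have h2 : (n.choose (k+1) : ℝ) * (k+1) = (n.choose k) * ((n:ℝ) - k) := by
    have h := Nat.choose_succ_right_eq n k
    have hc : ((n.choose (k+1) * (k+1) : ℕ) : ℝ) = ((n.choose k * (n - k) : ℕ) : ℝ) := by
      rw [h]
    push_cast [Nat.cast_sub hk.le] at hc
    linarith [hc]
  linear_combination (b + 1 + (k:ℝ)) * h1 + h2

lemma expand1 (t : ℝ) : ∀ (n : ℕ) (a : ℝ) (s : ℕ),
    (∏ j ∈ Finset.range s, (t - (j:ℝ))) * ∏ j ∈ Finset.range n, (a + t + j)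
    = ∑ k ∈ Finset.range (n+1), ((n.choose k : ℝ) *
        ∏ j ∈ Finset.range (n-k), (a + s + k + j)) * ∏ j ∈ Finset.range (s+k), (t - j) := by
  intro n
  induction n with
  | zero => intro a s; simp
  | succ n IH =>
    intro a s
    have hsplit : (∏ j ∈ Finset.range s, (t - (j:ℝ))) * ∏ j ∈ Finset.range (n+1), (a + t + j)
        = (a + s) * ((∏ j ∈ Finset.range s, (t - (j:ℝ))) * ∏ j ∈ Finset.range n, ((a+1) + t + j))
          + (∏ j ∈ Finset.range (s+1), (t - (j:ℝ))) * ∏ j ∈ Finset.range n, ((a+1) + t + j) := by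
      rw [rise_succ' (a + t) n, Finset.prod_range_succ]
      have : ∀ j ∈ Finset.range n, (a + t + 1 + (j:ℝ)) = ((a+1) + t + j) := fun j _ => by ring
      rw [Finset.prod_congr rfl this]
      ring
    have key : ∀ k ∈ Finset.range (n+1),
        (((n+1).choose (k+1) : ℝ) * ∏ j ∈ Finset.range (n+1-(k+1)), (a + (s:ℝ) + ((k+1:ℕ):ℝ) + j)) *
            ∏ j ∈ Finset.range (s+(k+1)), (t - (j:ℝ))
        = (a + s) * (((n.choose (k+1) : ℝ) * ∏ j ∈ Finset.range (n-(k+1)), ((a+1) + (s:ℝ) + ((k+1:ℕ):ℝ) + j)) *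
            ∏ j ∈ Finset.range (s+(k+1)), (t - (j:ℝ)))
          + ((n.choose k : ℝ) * ∏ j ∈ Finset.range (n-k), ((a+1) + ((s+1:ℕ):ℝ) + k + j)) *
            ∏ j ∈ Finset.range ((s+1)+k), (t - (j:ℝ)) := by
      intro k hk
      rw [Finset.mem_range] at hk
      rw [show (s+1)+k = s+(k+1) from by omega]
      rcases Nat.lt_or_ge k n with hkn | hkn
      · obtain ⟨p, hp⟩ : ∃ p, n - k = p + 1 := ⟨n - k - 1, by omega⟩
        have h1 : n + 1 - (k+1) = p + 1 := by omega
        have h2 : n - (k+1) = p := by omega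
        have hcast : (p:ℝ) = (n:ℝ) - k - 1 := by
          have : k + 1 + p = n := by omega
          have := congrArg (Nat.cast (R := ℝ)) this
          push_cast at this
          linarith
        rw [h1, h2, hp]
        rw [rise_succ' (a + (s:ℝ) + ((k+1:ℕ):ℝ)) p, Finset.prod_range_succ]
        have e1 : ∀ j ∈ Finset.range p, (a + (s:ℝ) + ((k+1:ℕ):ℝ) + 1 + (j:ℝ)) = (a + s + k + 2 + j) := by
          intro j _; push_cast; ring
        have e2 : ∀ j ∈ Finset.range p, ((a+1) + (s:ℝ) + ((k+1:ℕ):ℝ) + (j:ℝ)) = (a + s + k + 2 + j) := by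
          intro j _; push_cast; ring
        have e3 : ∀ j ∈ Finset.range p, ((a+1) + ((s+1:ℕ):ℝ) + (k:ℝ) + (j:ℝ)) = (a + s + k + 2 + j) := by
          intro j _; push_cast; ring
        rw [Finset.prod_congr rfl e1, Finset.prod_congr rfl e2, Finset.prod_congr rfl e3]
        set Q := ∏ j ∈ Finset.range p, (a + (s:ℝ) + k + 2 + j) with hQ
        set F := ∏ j ∈ Finset.range (s+(k+1)), (t - (j:ℝ)) with hF
        have hp2 : ((a+1) + ((s+1:ℕ):ℝ) + (k:ℝ) + (p:ℝ)) = a + s + n + 1 := by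
          push_cast; linarith [hcast]
        rw [hp2]
        have hpas := pascal_real n k (a + (s:ℝ)) hkn
        push_cast
        linear_combination Q * F * hpas
      · have hk' : k = n := by omega
        subst hk'
        simp [Nat.choose_succ_self, Nat.sub_self]
    have hAex : ∑ k ∈ Finset.range (n+1), (a + (s:ℝ)) *
          (((n.choose (k+1) : ℝ) * ∏ j ∈ Finset.range (n-(k+1)), ((a+1) + (s:ℝ) + ((k+1:ℕ):ℝ) + j)) *
            ∏ j ∈ Finset.range (s+(k+1)), (t - (j:ℝ)))
        = ∑ k ∈ Finset.range n, (a + (s:ℝ)) *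
          (((n.choose (k+1) : ℝ) * ∏ j ∈ Finset.range (n-(k+1)), ((a+1) + (s:ℝ) + ((k+1:ℕ):ℝ) + j)) *
            ∏ j ∈ Finset.range (s+(k+1)), (t - (j:ℝ))) := by
      rw [Finset.sum_range_succ]
      simp [Nat.choose_succ_self]
    have h0 : (a + (s:ℝ)) * (((n.choose 0 : ℝ) * ∏ j ∈ Finset.range (n-0), ((a+1) + (s:ℝ) + ((0:ℕ):ℝ) + j)) *
          ∏ j ∈ Finset.range (s+0), (t - (j:ℝ)))
        = (((n+1).choose 0 : ℝ) * ∏ j ∈ Finset.range (n+1-0), (a + (s:ℝ) + ((0:ℕ):ℝ) + j)) *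
          ∏ j ∈ Finset.range (s+0), (t - (j:ℝ)) := by
      simp only [Nat.choose_zero_right, Nat.cast_one, one_mul, Nat.sub_zero, Nat.add_zero,
        Nat.cast_zero, add_zero]
      rw [rise_succ' (a + (s:ℝ)) n]
      have : ∀ j ∈ Finset.range n, (a + (s:ℝ) + 1 + (j:ℝ)) = ((a+1) + s + j) := fun j _ => by ring
      rw [Finset.prod_congr rfl this]
      ring
    calc (∏ j ∈ Finset.range s, (t - (j:ℝ))) * ∏ j ∈ Finset.range (n+1), (a + t + j)
        = (a + s) * ((∏ j ∈ Finset.range s, (t - (j:ℝ))) * ∏ j ∈ Finset.range n, ((a+1) + t + j))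
          + (∏ j ∈ Finset.range (s+1), (t - (j:ℝ))) * ∏ j ∈ Finset.range n, ((a+1) + t + j) := hsplit
      _ = (a + s) * (∑ k ∈ Finset.range (n+1), ((n.choose k : ℝ) *
              ∏ j ∈ Finset.range (n-k), ((a+1) + (s:ℝ) + k + j)) * ∏ j ∈ Finset.range (s+k), (t - (j:ℝ)))
          + ∑ k ∈ Finset.range (n+1), ((n.choose k : ℝ) *
              ∏ j ∈ Finset.range (n-k), ((a+1) + ((s+1:ℕ):ℝ) + k + j)) * ∏ j ∈ Finset.range ((s+1)+k), (t - (j:ℝ)) := by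
            rw [IH (a+1) s, IH (a+1) (s+1)]
      _ = (∑ k ∈ Finset.range (n+1), (a + (s:ℝ)) * (((n.choose k : ℝ) *
              ∏ j ∈ Finset.range (n-k), ((a+1) + (s:ℝ) + k + j)) * ∏ j ∈ Finset.range (s+k), (t - (j:ℝ))))
          + ∑ k ∈ Finset.range (n+1), ((n.choose k : ℝ) *
              ∏ j ∈ Finset.range (n-k), ((a+1) + ((s+1:ℕ):ℝ) + k + j)) * ∏ j ∈ Finset.range ((s+1)+k), (t - (j:ℝ)) := by
            rw [Finset.mul_sum]
      _ = ((∑ k ∈ Finset.range n, (a + (s:ℝ)) * (((n.choose (k+1) : ℝ) *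
              ∏ j ∈ Finset.range (n-(k+1)), ((a+1) + (s:ℝ) + ((k+1:ℕ):ℝ) + j)) *
              ∏ j ∈ Finset.range (s+(k+1)), (t - (j:ℝ))))
            + (a + (s:ℝ)) * (((n.choose 0 : ℝ) * ∏ j ∈ Finset.range (n-0), ((a+1) + (s:ℝ) + ((0:ℕ):ℝ) + j)) *
              ∏ j ∈ Finset.range (s+0), (t - (j:ℝ))))
          + ∑ k ∈ Finset.range (n+1), ((n.choose k : ℝ) *
              ∏ j ∈ Finset.range (n-k), ((a+1) + ((s+1:ℕ):ℝ) + k + j)) * ∏ j ∈ Finset.range ((s+1)+k), (t - (j:ℝ)) := by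
            rw [Finset.sum_range_succ' (fun k => (a + (s:ℝ)) * (((n.choose k : ℝ) *
              ∏ j ∈ Finset.range (n-k), ((a+1) + (s:ℝ) + (k:ℝ) + j)) *
              ∏ j ∈ Finset.range (s+k), (t - (j:ℝ)))) n]
      _ = ((∑ k ∈ Finset.range (n+1), (a + (s:ℝ)) * (((n.choose (k+1) : ℝ) *
              ∏ j ∈ Finset.range (n-(k+1)), ((a+1) + (s:ℝ) + ((k+1:ℕ):ℝ) + j)) *
              ∏ j ∈ Finset.range (s+(k+1)), (t - (j:ℝ))))
            + (a + (s:ℝ)) * (((n.choose 0 : ℝ) * ∏ j ∈ Finset.range (n-0), ((a+1) + (s:ℝ) + ((0:ℕ):ℝ) + j)) *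
              ∏ j ∈ Finset.range (s+0), (t - (j:ℝ))))
          + ∑ k ∈ Finset.range (n+1), ((n.choose k : ℝ) *
              ∏ j ∈ Finset.range (n-k), ((a+1) + ((s+1:ℕ):ℝ) + k + j)) * ∏ j ∈ Finset.range ((s+1)+k), (t - (j:ℝ)) := by
            rw [hAex]
      _ = (∑ k ∈ Finset.range (n+1), ((a + (s:ℝ)) * (((n.choose (k+1) : ℝ) *
              ∏ j ∈ Finset.range (n-(k+1)), ((a+1) + (s:ℝ) + ((k+1:ℕ):ℝ) + j)) *
              ∏ j ∈ Finset.range (s+(k+1)), (t - (j:ℝ)))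
            + ((n.choose k : ℝ) *
              ∏ j ∈ Finset.range (n-k), ((a+1) + ((s+1:ℕ):ℝ) + k + j)) * ∏ j ∈ Finset.range ((s+1)+k), (t - (j:ℝ))))
          + (a + (s:ℝ)) * (((n.choose 0 : ℝ) * ∏ j ∈ Finset.range (n-0), ((a+1) + (s:ℝ) + ((0:ℕ):ℝ) + j)) *
              ∏ j ∈ Finset.range (s+0), (t - (j:ℝ))) := by
            rw [Finset.sum_add_distrib]
            ring
      _ = (∑ k ∈ Finset.range (n+1), (((n+1).choose (k+1) : ℝ) *
              ∏ j ∈ Finset.range (n+1-(k+1)), (a + (s:ℝ) + ((k+1:ℕ):ℝ) + j)) *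
              ∏ j ∈ Finset.range (s+(k+1)), (t - (j:ℝ)))
          + (a + (s:ℝ)) * (((n.choose 0 : ℝ) * ∏ j ∈ Finset.range (n-0), ((a+1) + (s:ℝ) + ((0:ℕ):ℝ) + j)) *
              ∏ j ∈ Finset.range (s+0), (t - (j:ℝ))) := by
            rw [Finset.sum_congr rfl key]
      _ = (∑ k ∈ Finset.range (n+1), (((n+1).choose (k+1) : ℝ) *
              ∏ j ∈ Finset.range (n+1-(k+1)), (a + (s:ℝ) + ((k+1:ℕ):ℝ) + j)) *
              ∏ j ∈ Finset.range (s+(k+1)), (t - (j:ℝ)))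
          + (((n+1).choose 0 : ℝ) * ∏ j ∈ Finset.range (n+1-0), (a + (s:ℝ) + ((0:ℕ):ℝ) + j)) *
              ∏ j ∈ Finset.range (s+0), (t - (j:ℝ)) := by
            rw [h0]
      _ = ∑ k ∈ Finset.range (n+1+1), (((n+1).choose k : ℝ) *
              ∏ j ∈ Finset.range (n+1-k), (a + (s:ℝ) + (k:ℝ) + j)) *
              ∏ j ∈ Finset.range (s+k), (t - (j:ℝ)) :=
            (Finset.sum_range_succ' (fun k => (((n+1).choose k : ℝ) *
              ∏ j ∈ Finset.range (n+1-k), (a + (s:ℝ) + (k:ℝ) + j)) *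
              ∏ j ∈ Finset.range (s+k), (t - (j:ℝ))) (n+1)).symm


lemma sum_piFinset_snoc {M : Type*} [AddCommMonoid M] (r : ℕ) (t : Fin (r+1) → Finset ℕ)
    (f : (Fin (r+1) → ℕ) → M) :
    ∑ k ∈ Fintype.piFinset t, f k
    = ∑ k' ∈ Fintype.piFinset (fun i : Fin r => t i.castSucc), ∑ kl ∈ t (Fin.last r),
        f (Fin.snoc k' kl) := by
  rw [← Finset.sum_product']
  refine (Finset.sum_nbij' (fun k => (fun i : Fin r => k i.castSucc, k (Fin.last r)))
    (fun p => Fin.snoc p.1 p.2) ?_ ?_ ?_ ?_ ?_)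
  · intro k hk
    rw [Fintype.mem_piFinset] at hk
    simp only [Finset.mem_product, Fintype.mem_piFinset]
    exact ⟨fun i => hk _, hk _⟩
  · intro p hp
    rw [Finset.mem_product] at hp
    rw [Fintype.mem_piFinset]
    intro i
    refine Fin.lastCases ?_ (fun j => ?_) i
    · simpa [Fin.snoc_last] using hp.2
    · simpa [Fin.snoc_castSucc] using Fintype.mem_piFinset.mp hp.1 j
  · intro k hk
    funext i
    refine Fin.lastCases ?_ (fun j => ?_) i
    · simp [Fin.snoc_last]
    · simp [Fin.snoc_castSucc]
  · intro p hp
    simp [Fin.snoc_castSucc, Fin.snoc_last]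
  · intro k hk
    congr 1
    funext i
    refine Fin.lastCases ?_ (fun j => ?_) i
    · simp [Fin.snoc_last]
    · simp [Fin.snoc_castSucc]

lemma sum_filter_le_castSucc {r : ℕ} (i : Fin r) (h : Fin (r+1) → ℝ) :
    ∑ j' ∈ Finset.univ.filter (fun j' => j' ≤ Fin.castSucc i), h j'
    = ∑ j'' ∈ Finset.univ.filter (fun j'' => j'' ≤ i), h (Fin.castSucc j'') := by
  rw [Finset.sum_filter, Finset.sum_filter, Fin.sum_univ_castSucc]
  have hlast : (if (Fin.last r) ≤ Fin.castSucc i then h (Fin.last r) else 0) = 0 := by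
    rw [if_neg]
    exact not_le.2 (Fin.castSucc_lt_last i)
  rw [hlast, add_zero]
  apply Finset.sum_congr rfl
  intro j _
  congr 1

lemma expand_multi : ∀ (r : ℕ) (α : Fin r → ℝ) (n : Fin r → ℕ) (t : ℝ),
    (∏ i, ∏ j ∈ Finset.range (n i), (α i + 1 + t + j))
    = ∑ k ∈ Fintype.piFinset (fun i => Finset.range (n i + 1)),
        (∏ i, (((n i).choose (k i) : ℝ) *
          ∏ j ∈ Finset.range (n i - k i),
            (α i + 1 + (∑ j' ∈ Finset.univ.filter (fun j' => j' ≤ i), (k j' : ℝ)) + j))) *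
        ∏ j ∈ Finset.range (∑ i, k i), (t - (j:ℝ)) := by
  intro r
  induction r with
  | zero =>
    intro α n t
    simp
  | succ r IH =>
    intro α n t
    rw [sum_piFinset_snoc r _ (fun k => (∏ i, (((n i).choose (k i) : ℝ) *
          ∏ j ∈ Finset.range (n i - k i),
            (α i + 1 + (∑ j' ∈ Finset.univ.filter (fun j' => j' ≤ i), (k j' : ℝ)) + j))) *
        ∏ j ∈ Finset.range (∑ i, k i), (t - (j:ℝ)))]
    rw [Fin.prod_univ_castSucc (f := fun i => ∏ j ∈ Finset.range (n i), (α i + 1 + t + (j:ℝ)))]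
    rw [IH (fun i => α i.castSucc) (fun i => n i.castSucc) t]
    rw [Finset.sum_mul]
    apply Finset.sum_congr rfl
    intro k' hk'
    -- inner: expand the last factor with expand1
    rw [mul_assoc]
    rw [expand1 t (n (Fin.last r)) (α (Fin.last r) + 1) (∑ i, k' i)]
    rw [Finset.mul_sum]
    apply Finset.sum_congr rfl
    intro kl hkl
    -- now pointwise equality for k = snoc k' kl
    have hsnl : (Fin.snoc k' kl : Fin (r+1) → ℕ) (Fin.last r) = kl := Fin.snoc_last _ _
    have hsnc : ∀ j : Fin r, (Fin.snoc k' kl : Fin (r+1) → ℕ) j.castSucc = k' j :=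
      fun j => Fin.snoc_castSucc _ _ _
    have hsum : ∑ i, (Fin.snoc k' kl : Fin (r+1) → ℕ) i = (∑ i, k' i) + kl := by
      rw [Fin.sum_univ_castSucc]
      simp [hsnl, hsnc]
    have hprefix : ∀ i : Fin r,
        (∑ j' ∈ Finset.univ.filter (fun j' => j' ≤ Fin.castSucc i),
          ((Fin.snoc k' kl : Fin (r+1) → ℕ) j' : ℝ))
        = ∑ j' ∈ Finset.univ.filter (fun j' => j' ≤ i), (k' j' : ℝ) := by
      intro i
      rw [sum_filter_le_castSucc i (fun j' => ((Fin.snoc k' kl : Fin (r+1) → ℕ) j' : ℝ))]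
      apply Finset.sum_congr rfl
      intro j _
      rw [hsnc]
    have hfull : (∑ j' ∈ Finset.univ.filter (fun j' => j' ≤ Fin.last r),
          ((Fin.snoc k' kl : Fin (r+1) → ℕ) j' : ℝ))
        = ((∑ i, k' i : ℕ) : ℝ) + (kl : ℝ) := by
      have : Finset.univ.filter (fun j' : Fin (r+1) => j' ≤ Fin.last r) = Finset.univ := by
        apply Finset.filter_true_of_mem
        intro j _
        exact Fin.le_last j
      rw [this, Fin.sum_univ_castSucc]
      push_cast
      simp [hsnl, hsnc]
    -- expand product over Fin (r+1)
    rw [Fin.prod_univ_castSucc (f := fun i => (((n i).choose ((Fin.snoc k' kl : Fin (r+1) → ℕ) i) : ℝ) *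
          ∏ j ∈ Finset.range (n i - (Fin.snoc k' kl : Fin (r+1) → ℕ) i),
            (α i + 1 + (∑ j' ∈ Finset.univ.filter (fun j' => j' ≤ i),
              ((Fin.snoc k' kl : Fin (r+1) → ℕ) j' : ℝ)) + j)))]
    rw [hsum]
    have he1 : ∀ i : Fin r, (((n i.castSucc).choose ((Fin.snoc k' kl : Fin (r+1) → ℕ) i.castSucc) : ℝ) *
          ∏ j ∈ Finset.range (n i.castSucc - (Fin.snoc k' kl : Fin (r+1) → ℕ) i.castSucc),
            (α i.castSucc + 1 + (∑ j' ∈ Finset.univ.filter (fun j' => j' ≤ i.castSucc),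
              ((Fin.snoc k' kl : Fin (r+1) → ℕ) j' : ℝ)) + j))
        = (((n i.castSucc).choose (k' i) : ℝ) *
          ∏ j ∈ Finset.range (n i.castSucc - k' i),
            (α i.castSucc + 1 + (∑ j' ∈ Finset.univ.filter (fun j' => j' ≤ i), (k' j' : ℝ)) + j)) := by
      intro i
      rw [hsnc, hprefix]
    rw [Finset.prod_congr rfl (fun i _ => he1 i), hsnl, hfull]
    have he2 : ∏ j ∈ Finset.range (n (Fin.last r) - kl),
        (α (Fin.last r) + 1 + ((∑ i, k' i : ℕ):ℝ) + (kl:ℝ) + (j:ℝ))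
      = ∏ j ∈ Finset.range (n (Fin.last r) - kl),
        (α (Fin.last r) + 1 + (((∑ i, k' i : ℕ):ℝ) + (kl:ℝ)) + (j:ℝ)) :=
      Finset.prod_congr rfl fun j _ => by ring
    rw [he2]
    ring

lemma fall_cast (p m : ℕ) : ∏ j ∈ Finset.range p, (((m+p:ℕ):ℝ) - j) = (m+p).factorial / m.factorial := by
  induction p with
  | zero =>
    simp only [Nat.add_zero, Finset.range_zero, Finset.prod_empty]
    exact (div_self (by positivity)).symm
  | succ p IH =>
    rw [Finset.prod_range_succ']
    have h1 : ∀ j ∈ Finset.range p, (((m+(p+1):ℕ):ℝ) - ((j+1:ℕ):ℝ)) = (((m+p:ℕ):ℝ) - j) := by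
      intro j _; push_cast; ring
    rw [Finset.prod_congr rfl h1, IH]
    have h2 : (((m+(p+1):ℕ):ℝ) - ((0:ℕ):ℝ)) = ((m+p).factorial * (m+p+1)) / (m+p).factorial := by
      rw [mul_comm, mul_div_assoc, div_self (by positivity), mul_one]
      push_cast; ring
    rw [h2]
    rw [show m + (p+1) = (m+p)+1 from by omega, Nat.factorial_succ]
    push_cast
    field_simp

lemma fall_zero_of_lt (p m : ℕ) (h : m < p) : ∏ j ∈ Finset.range p, ((m:ℝ) - j) = 0 := by
  apply Finset.prod_eq_zero (Finset.mem_range.mpr h)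
  simp

lemma summable_fall (x : ℝ) (p : ℕ) :
    Summable (fun m : ℕ => x ^ m / m.factorial * ∏ j ∈ Finset.range p, ((m:ℝ) - j)) := by
  rw [← summable_nat_add_iff p]
  have he : ∀ m : ℕ, x ^ (m+p) / (m+p).factorial * ∏ j ∈ Finset.range p, (((m+p:ℕ):ℝ) - j)
      = x ^ p * (x ^ m / m.factorial) := by
    intro m
    rw [fall_cast p m]
    have h0 : ((m+p).factorial:ℝ) ≠ 0 := by positivity
    have h1 : ((m).factorial:ℝ) ≠ 0 := by positivity
    field_simp
    ring
  simp only [he]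
  exact (Real.summable_pow_div_factorial x).mul_left (x^p)

lemma tsum_fall (x : ℝ) (p : ℕ) :
    ∑' m : ℕ, x ^ m / m.factorial * ∏ j ∈ Finset.range p, ((m:ℝ) - j) = x ^ p * Real.exp x := by
  have hf := summable_fall x p
  have hshift := Summable.sum_add_tsum_nat_add (f := fun m : ℕ => x ^ m / m.factorial * ∏ j ∈ Finset.range p, ((m:ℝ) - j)) p hf
  have hzero : ∑ m ∈ Finset.range p, (x ^ m / m.factorial * ∏ j ∈ Finset.range p, ((m:ℝ) - j)) = 0 := by
    apply Finset.sum_eq_zero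
    intro m hm
    rw [fall_zero_of_lt p m (Finset.mem_range.mp hm), mul_zero]
  have he : ∀ m : ℕ, x ^ (m+p) / (m+p).factorial * ∏ j ∈ Finset.range p, (((m+p:ℕ):ℝ) - j)
      = x ^ p * (x ^ m / m.factorial) := by
    intro m
    rw [fall_cast p m]
    have h0 : ((m+p).factorial:ℝ) ≠ 0 := by positivity
    have h1 : ((m).factorial:ℝ) ≠ 0 := by positivity
    field_simp
    ring
  rw [hzero, zero_add] at hshift
  rw [← hshift]
  simp only [he]
  rw [tsum_mul_left]
  congr 1
  rw [Real.exp_eq_exp_ℝ, NormedSpace.exp_eq_tsum_div]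

lemma key_pointwise (r : ℕ) (α : Fin r → ℝ) (n : Fin r → ℕ) (x : ℝ) (m : ℕ) :
    x ^ m / m.factorial * ∏ i, ∏ j ∈ Finset.range (n i), (α i + 1 + (m:ℝ) + j)
    = ∑ k ∈ Fintype.piFinset (fun i => Finset.range (n i + 1)),
        (∏ i, (((n i).choose (k i) : ℝ) *
          ∏ j ∈ Finset.range (n i - k i),
            (α i + 1 + (∑ j' ∈ Finset.univ.filter (fun j' => j' ≤ i), (k j' : ℝ)) + j))) *
        (x ^ m / m.factorial * ∏ j ∈ Finset.range (∑ i, k i), ((m:ℝ) - j)) := by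
  rw [expand_multi r α n (m:ℝ), Finset.mul_sum]
  exact Finset.sum_congr rfl fun k _ => by ring

lemma key_summable (r : ℕ) (α : Fin r → ℝ) (n : Fin r → ℕ) (x : ℝ) :
    Summable (fun m : ℕ => x ^ m / m.factorial *
      ∏ i, ∏ j ∈ Finset.range (n i), (α i + 1 + (m:ℝ) + j)) := by
  have h : (fun m : ℕ => x ^ m / m.factorial *
      ∏ i, ∏ j ∈ Finset.range (n i), (α i + 1 + (m:ℝ) + j))
      = fun m : ℕ => ∑ k ∈ Fintype.piFinset (fun i => Finset.range (n i + 1)),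
        (∏ i, (((n i).choose (k i) : ℝ) *
          ∏ j ∈ Finset.range (n i - k i),
            (α i + 1 + (∑ j' ∈ Finset.univ.filter (fun j' => j' ≤ i), (k j' : ℝ)) + j))) *
        (x ^ m / m.factorial * ∏ j ∈ Finset.range (∑ i, k i), ((m:ℝ) - j)) := by
    funext m; exact key_pointwise r α n x m
  rw [h]
  apply summable_sum
  intro k _
  exact (summable_fall x (∑ i, k i)).mul_left _

set_option maxHeartbeats 1000000 in
lemma key_tsum (r : ℕ) (α : Fin r → ℝ) (n : Fin r → ℕ) (x : ℝ) :
    ∑' m : ℕ, x ^ m / m.factorial * ∏ i, ∏ j ∈ Finset.range (n i), (α i + 1 + (m:ℝ) + j)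
    = Real.exp x * ∑ k ∈ Fintype.piFinset (fun i => Finset.range (n i + 1)),
        (∏ i, (((n i).choose (k i) : ℝ) *
          ∏ j ∈ Finset.range (n i - k i),
            (α i + 1 + (∑ j' ∈ Finset.univ.filter (fun j' => j' ≤ i), (k j' : ℝ)) + j))) *
        x ^ (∑ i, k i) := by
  have h : ∀ m : ℕ, x ^ m / m.factorial * ∏ i, ∏ j ∈ Finset.range (n i), (α i + 1 + (m:ℝ) + j)
      = ∑ k ∈ Fintype.piFinset (fun i => Finset.range (n i + 1)),
        (∏ i, (((n i).choose (k i) : ℝ) *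
          ∏ j ∈ Finset.range (n i - k i),
            (α i + 1 + (∑ j' ∈ Finset.univ.filter (fun j' => j' ≤ i), (k j' : ℝ)) + j))) *
        (x ^ m / m.factorial * ∏ j ∈ Finset.range (∑ i, k i), ((m:ℝ) - j)) :=
    key_pointwise r α n x
  rw [tsum_congr h]
  rw [Summable.tsum_finsetSum (fun k _ => ((summable_fall x (∑ i, k i)).mul_left _))]
  rw [Finset.mul_sum]
  apply Finset.sum_congr rfl
  intro k _
  rw [tsum_mul_left, tsum_fall x (∑ i, k i)]
  ring


lemma Gamma_prod (a : ℝ) (ha : 0 < a) (k : ℕ) :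
    Real.Gamma (a + k) = Real.Gamma a * ∏ j ∈ Finset.range k, (a + j) := by
  induction k with
  | zero => simp
  | succ k IH =>
    have h1 : a + ((k+1 : ℕ) : ℝ) = (a + k) + 1 := by push_cast; ring
    rw [h1, Real.Gamma_add_one (by positivity), IH, Finset.prod_range_succ]
    ring

lemma one_dim_eqOn (a : ℝ) (ha : -1 < a) (N : ℕ) :
    Set.EqOn (fun y : ℝ => (Real.Gamma (a+1))⁻¹ * (Real.exp (-y) * y ^ (a + N + 1 - 1)))
      (fun y : ℝ => y ^ N * ((Real.Gamma (a+1))⁻¹ * y ^ a * Real.exp (-y))) (Set.Ioi 0) := by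
  intro y hy
  have hy' : (0:ℝ) < y := hy
  simp only
  rw [show a + (N:ℝ) + 1 - 1 = a + N from by ring]
  rw [Real.rpow_add hy', Real.rpow_natCast]
  ring

lemma one_dim_integrable (a : ℝ) (ha : -1 < a) (N : ℕ) :
    IntegrableOn (fun y : ℝ => y ^ N * ((Real.Gamma (a+1))⁻¹ * y ^ a * Real.exp (-y)))
      (Set.Ioi 0) := by
  have hN : (0:ℝ) ≤ N := Nat.cast_nonneg N
  have hs : (0:ℝ) < a + N + 1 := by linarith
  have h := (Real.GammaIntegral_convergent hs).const_mul (Real.Gamma (a+1))⁻¹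
  exact MeasureTheory.IntegrableOn.congr_fun h (one_dim_eqOn a ha N) measurableSet_Ioi

lemma one_dim_integral (a : ℝ) (ha : -1 < a) (N : ℕ) :
    ∫ y in Set.Ioi (0:ℝ), y ^ N * ((Real.Gamma (a+1))⁻¹ * y ^ a * Real.exp (-y))
      = ∏ j ∈ Finset.range N, (a + 1 + j) := by
  have hN : (0:ℝ) ≤ N := Nat.cast_nonneg N
  have hs : (0:ℝ) < a + N + 1 := by linarith
  rw [← setIntegral_congr_fun measurableSet_Ioi (one_dim_eqOn a ha N)]
  rw [MeasureTheory.integral_const_mul]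
  rw [← Real.Gamma_eq_integral hs]
  have h1 : a + (N:ℝ) + 1 = (a + 1) + N := by ring
  rw [h1, Gamma_prod (a+1) (by linarith) N]
  rw [← mul_assoc, inv_mul_cancel₀ (ne_of_gt (Real.Gamma_pos_of_pos (by linarith))), one_mul]

lemma pi_indicator_prod (r : ℕ) (f : Fin r → ℝ → ℝ) (y : Fin r → ℝ) :
    ∏ i, (Set.Ioi (0:ℝ)).indicator (f i) (y i)
      = (Set.univ.pi fun _ : Fin r => Set.Ioi (0:ℝ)).indicator
          (fun y : Fin r → ℝ => ∏ i, f i (y i)) y := by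
  by_cases h : y ∈ Set.univ.pi fun _ : Fin r => Set.Ioi (0:ℝ)
  · rw [Set.indicator_of_mem h]
    exact Finset.prod_congr rfl fun i _ => Set.indicator_of_mem (h i (Set.mem_univ i)) _
  · rw [Set.indicator_of_notMem h]
    rw [Set.mem_pi] at h
    push_neg at h
    obtain ⟨i, _, hi⟩ := h
    apply Finset.prod_eq_zero (Finset.mem_univ i)
    exact Set.indicator_of_notMem hi _

lemma pi_prod_integrableOn (r : ℕ) (f : Fin r → ℝ → ℝ)
    (hf : ∀ i, IntegrableOn (f i) (Set.Ioi 0)) :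
    IntegrableOn (fun y : Fin r → ℝ => ∏ i, f i (y i))
      (Set.univ.pi fun _ : Fin r => Set.Ioi (0:ℝ)) := by
  have hmeas : MeasurableSet (Set.univ.pi fun _ : Fin r => Set.Ioi (0:ℝ)) :=
    MeasurableSet.univ_pi fun i => measurableSet_Ioi
  refine (integrable_indicator_iff hmeas).mp ?_
  have : Integrable (fun y : Fin r → ℝ => ∏ i, (Set.Ioi (0:ℝ)).indicator (f i) (y i)) :=
    Integrable.fintype_prod fun i => (integrable_indicator_iff measurableSet_Ioi).2 (hf i)
  exact this.congr (Filter.Eventually.of_forall fun y => pi_indicator_prod r f y)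

lemma pi_prod_integral (r : ℕ) (f : Fin r → ℝ → ℝ)
    (hf : ∀ i, IntegrableOn (f i) (Set.Ioi 0)) :
    ∫ y in Set.univ.pi (fun _ : Fin r => Set.Ioi (0:ℝ)), ∏ i, f i (y i)
      = ∏ i, ∫ z in Set.Ioi (0:ℝ), f i z := by
  have hmeas : MeasurableSet (Set.univ.pi fun _ : Fin r => Set.Ioi (0:ℝ)) :=
    MeasurableSet.univ_pi fun i => measurableSet_Ioi
  rw [← integral_indicator hmeas]
  rw [← integral_congr_ae (Filter.Eventually.of_forall fun y => pi_indicator_prod r f y)]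
  rw [MeasureTheory.integral_fintype_prod_volume_eq_prod
    (fun i => (Set.Ioi (0:ℝ)).indicator (f i))]
  exact Finset.prod_congr rfl fun i _ => integral_indicator measurableSet_Ioi

section MainAux

variable (r : ℕ) (α : Fin r → ℝ) (n : Fin r → ℕ) (x : ℝ)

lemma integrand_tsum_eq (y : Fin r → ℝ) :
    (∏ i, y i ^ n i) *
      (Real.exp (-x) *
        (∑' m : ℕ, (x * ∏ i, y i) ^ m /
          ((m.factorial : ℝ) * ∏ i, ∏ j ∈ Finset.range m, (α i + 1 + (j : ℝ)))) *
        ∏ i, ((Real.Gamma (α i + 1))⁻¹ * y i ^ (α i) * Real.exp (-(y i))))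
    = ∑' m : ℕ, (Real.exp (-x) * x ^ m /
          ((m.factorial : ℝ) * ∏ i, ∏ j ∈ Finset.range m, (α i + 1 + (j : ℝ)))) *
        ∏ i, ((y i) ^ (n i + m) *
          ((Real.Gamma (α i + 1))⁻¹ * (y i) ^ (α i) * Real.exp (-(y i)))) := by
  symm
  have hterm : ∀ m : ℕ, (Real.exp (-x) * x ^ m /
          ((m.factorial : ℝ) * ∏ i, ∏ j ∈ Finset.range m, (α i + 1 + (j : ℝ)))) *
        ∏ i, ((y i) ^ (n i + m) *
          ((Real.Gamma (α i + 1))⁻¹ * (y i) ^ (α i) * Real.exp (-(y i))))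
      = (∏ i, y i ^ n i) *
        ((Real.exp (-x) * ((x * ∏ i, y i) ^ m /
          ((m.factorial : ℝ) * ∏ i, ∏ j ∈ Finset.range m, (α i + 1 + (j : ℝ))))) *
          ∏ i, ((Real.Gamma (α i + 1))⁻¹ * y i ^ (α i) * Real.exp (-(y i)))) := by
    intro m
    rw [mul_pow]
    rw [← Finset.prod_pow Finset.univ m (fun i => y i)]
    simp only [pow_add, Finset.prod_mul_distrib]
    ring
  rw [tsum_congr hterm, tsum_mul_left, tsum_mul_right, tsum_mul_left]

lemma prodD_pos (hα : ∀ i, -1 < α i) (m : ℕ) :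
    (0:ℝ) < ∏ i, ∏ j ∈ Finset.range m, (α i + 1 + (j : ℝ)) := by
  apply Finset.prod_pos
  intro i _
  apply Finset.prod_pos
  intro j _
  have : (0:ℝ) ≤ j := Nat.cast_nonneg j
  linarith [hα i]

lemma Gm_integral (hα : ∀ i, -1 < α i) (m : ℕ) :
    ∫ y in Set.univ.pi (fun _ : Fin r => Set.Ioi (0 : ℝ)),
        (Real.exp (-x) * x ^ m /
          ((m.factorial : ℝ) * ∏ i, ∏ j ∈ Finset.range m, (α i + 1 + (j : ℝ)))) *
        ∏ i, ((y i) ^ (n i + m) *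
          ((Real.Gamma (α i + 1))⁻¹ * (y i) ^ (α i) * Real.exp (-(y i))))
    = Real.exp (-x) * (x ^ m / m.factorial *
        ∏ i, ∏ j ∈ Finset.range (n i), (α i + 1 + (m:ℝ) + j)) := by
  rw [MeasureTheory.integral_const_mul]
  rw [pi_prod_integral r (fun i => fun z => z ^ (n i + m) *
      ((Real.Gamma (α i + 1))⁻¹ * z ^ (α i) * Real.exp (-z)))
    (fun i => one_dim_integrable (α i) (hα i) (n i + m))]
  have hval : ∀ i : Fin r, (∫ z in Set.Ioi (0:ℝ), z ^ (n i + m) *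
      ((Real.Gamma (α i + 1))⁻¹ * z ^ (α i) * Real.exp (-z)))
      = (∏ j ∈ Finset.range m, (α i + 1 + (j:ℝ))) *
        ∏ j ∈ Finset.range (n i), (α i + 1 + (m:ℝ) + j) := by
    intro i
    rw [one_dim_integral (α i) (hα i) (n i + m)]
    rw [show n i + m = m + n i from by omega, Finset.prod_range_add]
    congr 1
    apply Finset.prod_congr rfl
    intro j _
    push_cast
    ring
  rw [Finset.prod_congr rfl (fun i _ => hval i), Finset.prod_mul_distrib]
  have hD : (0:ℝ) < ∏ i, ∏ j ∈ Finset.range m, (α i + 1 + (j : ℝ)) := prodD_pos r α hα m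
  have hM : ((m.factorial : ℝ)) ≠ 0 := by positivity
  field_simp

lemma Gm_integrableOn (hα : ∀ i, -1 < α i) (m : ℕ) :
    Integrable (fun y : Fin r → ℝ =>
        (Real.exp (-x) * x ^ m /
          ((m.factorial : ℝ) * ∏ i, ∏ j ∈ Finset.range m, (α i + 1 + (j : ℝ)))) *
        ∏ i, ((y i) ^ (n i + m) *
          ((Real.Gamma (α i + 1))⁻¹ * (y i) ^ (α i) * Real.exp (-(y i)))))
      ((volume : Measure (Fin r → ℝ)).restrict
        (Set.univ.pi (fun _ : Fin r => Set.Ioi (0 : ℝ)))) := by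
  apply Integrable.const_mul
  exact pi_prod_integrableOn r (fun i => fun z => z ^ (n i + m) *
      ((Real.Gamma (α i + 1))⁻¹ * z ^ (α i) * Real.exp (-z)))
    (fun i => one_dim_integrable (α i) (hα i) (n i + m))

lemma Gm_nonneg (hα : ∀ i, -1 < α i) (hx : 0 ≤ x) (m : ℕ) (y : Fin r → ℝ)
    (hy : y ∈ Set.univ.pi (fun _ : Fin r => Set.Ioi (0 : ℝ))) :
    0 ≤ (Real.exp (-x) * x ^ m /
          ((m.factorial : ℝ) * ∏ i, ∏ j ∈ Finset.range m, (α i + 1 + (j : ℝ)))) *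
        ∏ i, ((y i) ^ (n i + m) *
          ((Real.Gamma (α i + 1))⁻¹ * (y i) ^ (α i) * Real.exp (-(y i)))) := by
  have hD : (0:ℝ) < ∏ i, ∏ j ∈ Finset.range m, (α i + 1 + (j : ℝ)) := prodD_pos r α hα m
  apply mul_nonneg
  · apply div_nonneg
    · exact mul_nonneg (Real.exp_pos _).le (pow_nonneg hx m)
    · positivity
  · apply Finset.prod_nonneg
    intro i _
    have hyi : (0:ℝ) < y i := hy i (Set.mem_univ i)
    have h1 : (0:ℝ) < Real.Gamma (α i + 1) := Real.Gamma_pos_of_pos (by linarith [hα i])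
    have h2 : (0:ℝ) ≤ (y i) ^ (α i) := Real.rpow_nonneg hyi.le _
    positivity

end MainAux

/-- for `α_1,...,α_r > -1` and `x ≥ 0`, the multidimensional
Stieltjes moment representation
`ℒ_n^{(α)}(x) = ∫_{[0,∞)^r} y_1^{n_1}···y_r^{n_r} dμ_{α,x}(y)` where
`dμ_{α,x}(y) = e^{-x} ₀F_r(α_1+1,...,α_r+1; x y_1···y_r)
   Π_i y_i^{α_i} e^{-y_i}/Γ(α_i+1) dy_i` is a positive measure on `[0,∞)^r`. -/
theorem unsignedMultipleLaguerre_stieltjes (r : ℕ) (α : Fin r → ℝ)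
    (hα : ∀ i, -1 < α i) (x : ℝ) (hx : 0 ≤ x) (n : Fin r → ℕ) :
    unsignedMultipleLaguerreVal r α n x
      = ∫ y in Set.univ.pi (fun _ : Fin r => Set.Ioi (0 : ℝ)),
          (∏ i, y i ^ n i) *
            (Real.exp (-x) *
              (∑' m : ℕ, (x * ∏ i, y i) ^ m /
                ((m.factorial : ℝ) * ∏ i, ∏ j ∈ Finset.range m, (α i + 1 + (j : ℝ)))) *
              ∏ i, ((Real.Gamma (α i + 1))⁻¹ * y i ^ (α i) * Real.exp (-(y i)))) := by
  symm
  have hSmeas : MeasurableSet (Set.univ.pi (fun _ : Fin r => Set.Ioi (0 : ℝ))) :=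
    MeasurableSet.univ_pi fun i => measurableSet_Ioi
  set μ := (volume : Measure (Fin r → ℝ)).restrict
    (Set.univ.pi (fun _ : Fin r => Set.Ioi (0 : ℝ))) with hμ
  -- the m-th term
  set G : ℕ → (Fin r → ℝ) → ℝ := fun m y =>
      (Real.exp (-x) * x ^ m /
          ((m.factorial : ℝ) * ∏ i, ∏ j ∈ Finset.range m, (α i + 1 + (j : ℝ)))) *
        ∏ i, ((y i) ^ (n i + m) *
          ((Real.Gamma (α i + 1))⁻¹ * (y i) ^ (α i) * Real.exp (-(y i)))) with hGdef
  have hstep1 : (∫ y in Set.univ.pi (fun _ : Fin r => Set.Ioi (0 : ℝ)),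
      (∏ i, y i ^ n i) *
        (Real.exp (-x) *
          (∑' m : ℕ, (x * ∏ i, y i) ^ m /
            ((m.factorial : ℝ) * ∏ i, ∏ j ∈ Finset.range m, (α i + 1 + (j : ℝ)))) *
          ∏ i, ((Real.Gamma (α i + 1))⁻¹ * y i ^ (α i) * Real.exp (-(y i)))))
      = ∫ y in Set.univ.pi (fun _ : Fin r => Set.Ioi (0 : ℝ)), ∑' m : ℕ, G m y :=
    integral_congr_ae (Filter.Eventually.of_forall fun y => integrand_tsum_eq r α n x y)
  -- summable bound
  have hu : Summable (fun m : ℕ => Real.exp (-x) * (x ^ m / m.factorial *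
      ∏ i, ∏ j ∈ Finset.range (n i), (α i + 1 + (m:ℝ) + j))) := by
    apply Summable.mul_left
    exact key_summable r α n x
  have hu_nonneg : ∀ m : ℕ, 0 ≤ Real.exp (-x) * (x ^ m / m.factorial *
      ∏ i, ∏ j ∈ Finset.range (n i), (α i + 1 + (m:ℝ) + j)) := by
    intro m
    apply mul_nonneg (Real.exp_pos _).le
    apply mul_nonneg (by positivity)
    apply Finset.prod_nonneg
    intro i _
    apply Finset.prod_nonneg
    intro j _
    have h1 : (0:ℝ) ≤ j := Nat.cast_nonneg j
    have h2 : (0:ℝ) ≤ m := Nat.cast_nonneg m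
    linarith [hα i]
  have hGmeas : ∀ m : ℕ, AEStronglyMeasurable (G m) μ := fun m =>
    (Gm_integrableOn r α n x hα m).aestronglyMeasurable
  have hGlint : ∀ m : ℕ, (∫⁻ y, ‖G m y‖₊ ∂μ)
      = ENNReal.ofReal (Real.exp (-x) * (x ^ m / m.factorial *
        ∏ i, ∏ j ∈ Finset.range (n i), (α i + 1 + (m:ℝ) + j))) := by
    intro m
    simp only [← enorm_eq_nnnorm]
    rw [← MeasureTheory.ofReal_integral_norm_eq_lintegral_enorm (Gm_integrableOn r α n x hα m)]
    congr 1
    have : ∫ y, ‖G m y‖ ∂μ = ∫ y, G m y ∂μ := by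
      rw [hμ]
      apply setIntegral_congr_fun hSmeas
      intro y hy
      exact Real.norm_of_nonneg (Gm_nonneg r α n x hα hx m y hy)
    rw [this, hμ]
    exact Gm_integral r α n x hα m
  have hbound : (∑' m : ℕ, ∫⁻ y, ‖G m y‖₊ ∂μ) ≠ ⊤ := by
    rw [tsum_congr hGlint]
    rw [← ENNReal.ofReal_tsum_of_nonneg hu_nonneg hu]
    exact ENNReal.ofReal_ne_top
  have hstep2 : (∫ y in Set.univ.pi (fun _ : Fin r => Set.Ioi (0 : ℝ)), ∑' m : ℕ, G m y)
      = ∑' m : ℕ, ∫ y in Set.univ.pi (fun _ : Fin r => Set.Ioi (0 : ℝ)), G m y :=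
    MeasureTheory.integral_tsum hGmeas hbound
  rw [hstep1, hstep2]
  have hstep3 : ∀ m : ℕ, (∫ y in Set.univ.pi (fun _ : Fin r => Set.Ioi (0 : ℝ)), G m y)
      = Real.exp (-x) * (x ^ m / m.factorial *
        ∏ i, ∏ j ∈ Finset.range (n i), (α i + 1 + (m:ℝ) + j)) := fun m =>
    Gm_integral r α n x hα m
  rw [tsum_congr hstep3, tsum_mul_left]
  have hform : ∀ m : ℕ, x ^ m / (m.factorial : ℝ) *
      ∏ i, ∏ j ∈ Finset.range (n i), (α i + 1 + (m:ℝ) + j)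
      = x ^ m / (m.factorial : ℝ) *
      ∏ i, ∏ j ∈ Finset.range (n i), (α i + 1 + (m:ℝ) + j) := fun m => rfl
  rw [key_tsum r α n x]
  rw [unsignedMultipleLaguerreVal]
  rw [← mul_assoc, ← Real.exp_add, neg_add_cancel, Real.exp_zero, one_mul]
end

section
/- For α_1,...,α_r ≥ -1, x ≥ 0 and any fixed k ∈ ℕ^r, the sequence (ℒ_{n·k}^{(α)}(x))_{n≥0} is a Stieltjes moment sequence: there exists a positive measure μ on [0,∞) with ℒ_{n k}^{(α)}(x) = ∫_0^∞ y^n dμ(y) for all n ≥ 0, where n·k = (n k_1,...,n k_r). -/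
open Finset MeasureTheory

open scoped ENNReal NNReal

namespace MLagAux

/-- ascending factorial `a(a+1)···(a+N-1)` for real `a`. -/
noncomputable def asc (a : ℝ) (N : ℕ) : ℝ := ∏ j ∈ Finset.range N, (a + j)

/-- falling factorial `t(t-1)···(t-N+1)` for real `t`. -/
noncomputable def fall (t : ℝ) (N : ℕ) : ℝ := ∏ j ∈ Finset.range N, (t - j)

@[simp] lemma asc_zero (a : ℝ) : asc a 0 = 1 := by simp [asc]

@[simp] lemma fall_zero (t : ℝ) : fall t 0 = 1 := by simp [fall]

lemma asc_succ (a : ℝ) (N : ℕ) : asc a (N + 1) = asc a N * (a + N) := by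
  simp [asc, Finset.prod_range_succ]

lemma fall_succ' (t : ℝ) (N : ℕ) : fall t (N + 1) = t * fall (t - 1) N := by
  rw [fall, Finset.prod_range_succ']
  simp only [Nat.cast_zero, sub_zero, fall]
  rw [mul_comm]
  congr 1
  exact Finset.prod_congr rfl fun j _ => by push_cast; ring

lemma asc_nonneg {a : ℝ} (ha : 0 ≤ a) (N : ℕ) : 0 ≤ asc a N :=
  Finset.prod_nonneg fun j _ => by positivity

lemma fall_add (t : ℝ) (P K : ℕ) : fall t (P + K) = fall t P * fall (t - P) K := by
  rw [fall, Finset.prod_range_add]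
  congr 1
  exact Finset.prod_congr rfl fun j _ => by push_cast; ring

lemma fall_natCast (m K : ℕ) : fall (m : ℝ) K = (m.descFactorial K : ℝ) := by
  induction K with
  | zero => simp
  | succ K ih =>
    rw [fall, Finset.prod_range_succ, ← fall, ih, Nat.descFactorial_succ]
    rcases le_or_gt K m with h | h
    · push_cast [h]; ring
    · rw [Nat.descFactorial_of_lt h]
      simp

lemma fall_natCast_eq_zero {m K : ℕ} (h : m < K) : fall (m : ℝ) K = 0 := by
  rw [fall_natCast, Nat.descFactorial_of_lt h, Nat.cast_zero]

/-- Vandermonde-type identity: `asc (c+t) n = ∑ⱼ C(n,j) asc(c+j, n-j) fall(t,j)`. -/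
lemma asc_add_eq_sum (n : ℕ) : ∀ (c t : ℝ),
    asc (c + t) n = ∑ j ∈ Finset.range (n + 1),
      (n.choose j : ℝ) * asc (c + j) (n - j) * fall t j := by
  induction n with
  | zero => intro c t; simp
  | succ n ih =>
    intro c t
    rw [Finset.sum_range_succ']
    have step1 : ∑ i ∈ Finset.range (n + 1),
        (((n+1).choose (i+1) : ℝ)) * asc (c + ↑(i+1)) (n + 1 - (i+1)) * fall t (i+1)
        = t * (∑ i ∈ Finset.range (n + 1),
            (n.choose i : ℝ) * asc ((c+1) + i) (n - i) * fall (t-1) i)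
          + ∑ i ∈ Finset.range (n + 1),
            (n.choose (i+1) : ℝ) * asc (c + ↑(i+1)) (n + 1 - (i+1)) * fall t (i+1) := by
      rw [Finset.mul_sum, ← Finset.sum_add_distrib]
      refine Finset.sum_congr rfl fun i _ => ?_
      simp only [Nat.succ_sub_succ]
      rw [Nat.choose_succ_succ, fall_succ' t i]
      have harg : c + ((i:ℝ)+1) = (c+1) + i := by ring
      push_cast
      rw [harg]
      ring
    rw [step1]
    have step2 : (∑ i ∈ Finset.range (n + 1),
          (n.choose (i+1) : ℝ) * asc (c + ↑(i+1)) (n + 1 - (i+1)) * fall t (i+1))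
          + ((n+1).choose 0 : ℝ) * asc (c + (0:ℕ)) (n + 1 - 0) * fall t 0
        = ∑ j ∈ Finset.range (n + 1 + 1),
            (n.choose j : ℝ) * asc (c + j) (n + 1 - j) * fall t j := by
      rw [Finset.sum_range_succ' (fun j => (n.choose j : ℝ) * asc (c + j) (n + 1 - j) * fall t j)]
      simp
    have step3 : ∑ j ∈ Finset.range (n + 1 + 1),
          (n.choose j : ℝ) * asc (c + j) (n + 1 - j) * fall t j
        = (∑ j ∈ Finset.range (n + 1),
            (n.choose j : ℝ) * asc (c + j) (n - j) * fall t j) * (c + n) := by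
      rw [Finset.sum_range_succ]
      simp only [Nat.choose_succ_self, Nat.cast_zero, zero_mul]
      rw [Finset.sum_mul]
      simp only [add_zero]
      refine Finset.sum_congr rfl fun j hj => ?_
      have hjn : j ≤ n := Nat.lt_succ_iff.mp (Finset.mem_range.mp hj)
      rw [show n + 1 - j = (n - j) + 1 from by omega, asc_succ]
      have : c + (j:ℝ) + ((n - j : ℕ) : ℝ) = c + n := by
        rw [Nat.cast_sub hjn]; ring
      rw [this]
      ring
    rw [add_assoc, step2, step3, ← ih c t]
    have h1 : (c + 1) + (t - 1) = c + t := by ring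
    rw [← ih (c+1) (t-1), h1, asc_succ]
    ring


lemma filter_le_zero_sum {r : ℕ} (g : Fin (r+1) → ℝ) :
    ∑ j' ∈ Finset.univ.filter (fun j' => j' ≤ (0 : Fin (r+1))), g j' = g 0 := by
  rw [Finset.sum_filter, Fin.sum_univ_succ]
  simp [Fin.le_zero_iff, Fin.succ_ne_zero]

lemma filter_le_succ_sum {r : ℕ} (g : Fin (r+1) → ℝ) (i : Fin r) :
    ∑ j' ∈ Finset.univ.filter (fun j' => j' ≤ i.succ), g j'
      = g 0 + ∑ j' ∈ Finset.univ.filter (fun j' => j' ≤ i), g j'.succ := by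
  rw [Finset.sum_filter, Finset.sum_filter, Fin.sum_univ_succ]
  simp [Fin.succ_le_succ_iff, Fin.zero_le]

lemma sum_piFinset_succ {r : ℕ} (n : Fin (r+1) → ℕ) (F : (Fin (r+1) → ℕ) → ℝ) :
    ∑ k ∈ Fintype.piFinset (fun i => Finset.range (n i + 1)), F k
      = ∑ k0 ∈ Finset.range (n 0 + 1),
          ∑ k' ∈ Fintype.piFinset (fun i : Fin r => Finset.range (n i.succ + 1)),
            F (Fin.cons k0 k') := by
  rw [← Finset.sum_product']
  refine (Finset.sum_nbij' (fun p => Fin.cons p.1 p.2) (fun k => (k 0, fun i => k i.succ))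
    ?_ ?_ ?_ ?_ ?_).symm
  · intro p hp
    simp only [Finset.mem_product, Fintype.mem_piFinset, Finset.mem_range] at hp ⊢
    intro i
    refine Fin.cases ?_ ?_ i
    · simpa using hp.1
    · intro j; simpa using hp.2 j
  · intro k hk
    simp only [Finset.mem_product, Fintype.mem_piFinset, Finset.mem_range] at hk ⊢
    exact ⟨hk 0, fun i => hk i.succ⟩
  · intro p _; simp
  · intro k _; exact Fin.cons_self_tail k
  · intro p _; rfl

/-- Key expansion: the multiple-Laguerre coefficient sum expands products of
ascending factorials in the falling-factorial basis. -/
lemma dagger : ∀ (r : ℕ) (a : Fin r → ℝ) (n : Fin r → ℕ) (m : ℝ),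
    ∑ k ∈ Fintype.piFinset (fun i => Finset.range (n i + 1)),
      (∏ i, (((n i).choose (k i) : ℝ) *
        asc (a i + (∑ j' ∈ Finset.univ.filter (fun j' => j' ≤ i), (k j' : ℝ))) (n i - k i)))
        * fall m (∑ i, k i)
      = ∏ i, asc (a i + m) (n i) := by
  intro r
  induction r with
  | zero =>
    intro a n m
    simp
  | succ r ih =>
    intro a n m
    rw [sum_piFinset_succ]
    have step1 : ∀ k0 ∈ Finset.range (n 0 + 1),
        (∑ k' ∈ Fintype.piFinset (fun i : Fin r => Finset.range (n i.succ + 1)),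
          (∏ i, (((n i).choose ((Fin.cons k0 k' : Fin (r+1) → ℕ) i) : ℝ) *
            asc (a i + (∑ j' ∈ Finset.univ.filter (fun j' => j' ≤ i),
              ((Fin.cons k0 k' : Fin (r+1) → ℕ) j' : ℝ))) (n i - (Fin.cons k0 k' : Fin (r+1) → ℕ) i)))
            * fall m (∑ i, (Fin.cons k0 k' : Fin (r+1) → ℕ) i))
        = ((n 0).choose k0 : ℝ) * asc (a 0 + k0) (n 0 - k0) * fall m k0 *
            ∏ i : Fin r, asc ((a i.succ + k0) + (m - k0)) (n i.succ) := by
      intro k0 _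
      have inner : ∀ k' ∈ Fintype.piFinset (fun i : Fin r => Finset.range (n i.succ + 1)),
          (∏ i, (((n i).choose ((Fin.cons k0 k' : Fin (r+1) → ℕ) i) : ℝ) *
            asc (a i + (∑ j' ∈ Finset.univ.filter (fun j' => j' ≤ i),
              ((Fin.cons k0 k' : Fin (r+1) → ℕ) j' : ℝ))) (n i - (Fin.cons k0 k' : Fin (r+1) → ℕ) i)))
            * fall m (∑ i, (Fin.cons k0 k' : Fin (r+1) → ℕ) i)
          = ((n 0).choose k0 : ℝ) * asc (a 0 + k0) (n 0 - k0) * fall m k0 *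
            ((∏ i : Fin r, (((n i.succ).choose (k' i) : ℝ) *
              asc ((a i.succ + k0) + (∑ j' ∈ Finset.univ.filter (fun j' => j' ≤ i), (k' j' : ℝ)))
                (n i.succ - k' i)))
              * fall (m - k0) (∑ i, k' i)) := by
        intro k' _
        rw [Fin.prod_univ_succ, Fin.sum_univ_succ]
        simp only [Fin.cons_zero, Fin.cons_succ, filter_le_zero_sum, filter_le_succ_sum,
          fall_add]
        simp only [← add_assoc]
        ring
      rw [Finset.sum_congr rfl inner, ← Finset.mul_sum]
      congr 1
      exact ih (fun i => a i.succ + k0) (fun i => n i.succ) (m - k0)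
    rw [Finset.sum_congr rfl step1]
    have harg : ∀ k0 : ℕ, (fun i : Fin r => asc ((a i.succ + k0) + (m - k0)) (n i.succ))
        = fun i => asc (a i.succ + m) (n i.succ) := by
      intro k0
      funext i
      congr 1
      ring
    have : ∀ k0 ∈ Finset.range (n 0 + 1),
        ((n 0).choose k0 : ℝ) * asc (a 0 + k0) (n 0 - k0) * fall m k0 *
            ∏ i : Fin r, asc ((a i.succ + k0) + (m - k0)) (n i.succ)
        = (((n 0).choose k0 : ℝ) * asc (a 0 + k0) (n 0 - k0) * fall m k0) *
            ∏ i : Fin r, asc (a i.succ + m) (n i.succ) := by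
      intro k0 _
      rw [harg k0]
    rw [Finset.sum_congr rfl this, ← Finset.sum_mul, ← asc_add_eq_sum (n 0) (a 0) m,
      Fin.prod_univ_succ]


lemma hasSum_poisson_fall (x : ℝ) (K : ℕ) :
    HasSum (fun m : ℕ => Real.exp (-x) * x ^ m / (m.factorial : ℝ) * fall (m : ℝ) K)
      (x ^ K) := by
  set f : ℕ → ℝ := fun m => Real.exp (-x) * x ^ m / (m.factorial : ℝ) * fall (m : ℝ) K with hf
  have hexp : HasSum (fun d : ℕ => x ^ d / (d.factorial : ℝ)) (Real.exp x) := by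
    rw [Real.exp_eq_exp_ℝ]; exact NormedSpace.expSeries_div_hasSum_exp x
  have h2 : HasSum (fun d : ℕ => (x ^ K * Real.exp (-x)) * (x ^ d / (d.factorial : ℝ)))
      ((x ^ K * Real.exp (-x)) * Real.exp x) := hexp.mul_left _
  have h3 : (x ^ K * Real.exp (-x)) * Real.exp x = x ^ K := by
    rw [mul_assoc, ← Real.exp_add]; simp
  rw [h3] at h2
  have hfun : (fun d : ℕ => (x ^ K * Real.exp (-x)) * (x ^ d / (d.factorial : ℝ)))
      = fun d : ℕ => f (d + K) := by
    funext d
    rw [hf]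
    simp only
    rw [fall_natCast]
    have hfac : ((d + K).descFactorial K : ℝ) = ((d + K).factorial : ℝ) / (d.factorial : ℝ) := by
      rw [eq_div_iff (by exact_mod_cast d.factorial_ne_zero)]
      rw [← Nat.cast_mul]
      norm_cast
      rw [mul_comm]
      simpa using Nat.factorial_mul_descFactorial (show K ≤ d + K by omega)
    rw [hfac, pow_add]
    have h1 : ((d + K).factorial : ℝ) ≠ 0 := by exact_mod_cast (d + K).factorial_ne_zero
    have h2' : (d.factorial : ℝ) ≠ 0 := by exact_mod_cast d.factorial_ne_zero
    field_simp
  rw [hfun] at h2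
  have h5 := (hasSum_nat_add_iff (f := f) K).mp h2
  have h6 : ∑ i ∈ Finset.range K, f i = 0 := by
    refine Finset.sum_eq_zero fun i hi => ?_
    rw [hf]
    simp only
    rw [fall_natCast_eq_zero (Finset.mem_range.mp hi), mul_zero]
  rw [h6, add_zero] at h5
  exact h5

open MeasureTheory

/-- The density of the Gamma distribution with shape `a` and rate 1. -/
noncomputable def gammaDens (a : ℝ) : ℝ → ℝ≥0∞ := fun y =>
  ENNReal.ofReal ((Set.Ioi (0:ℝ)).indicator
    (fun y => y ^ (a - 1) * Real.exp (-y) / Real.Gamma a) y)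

lemma measurable_gammaDens (a : ℝ) : Measurable (gammaDens a) := by
  apply Measurable.ennreal_ofReal
  apply Measurable.indicator _ measurableSet_Ioi
  apply Measurable.div _ measurable_const
  exact (measurable_id'.pow_const _).mul (measurable_id.neg.exp)

/-- Gamma distribution with shape `a ≥ 0` and rate 1; for `a = 0` it degenerates to `δ_0`. -/
noncomputable def gamma1 (a : ℝ) : Measure ℝ :=
  if a = 0 then Measure.dirac 0 else volume.withDensity (gammaDens a)

lemma Gamma_asc {a : ℝ} (ha : 0 < a) (N : ℕ) :
    Real.Gamma (a + N) = asc a N * Real.Gamma a := by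
  induction N with
  | zero => simp
  | succ N ih =>
    have h : a + ((N:ℕ) + 1 : ℕ) = (a + N) + 1 := by push_cast; ring
    rw [h, Real.Gamma_add_one (by positivity : (0:ℝ) < a + N).ne', ih, asc_succ]
    ring

lemma gamma1_Iio {a : ℝ} : gamma1 a (Set.Iio 0) = 0 := by
  unfold gamma1
  split_ifs
  · rw [Measure.dirac_apply' _ measurableSet_Iio]
    simp
  · rw [withDensity_apply _ measurableSet_Iio]
    have hz : ∀ y ∈ Set.Iio (0:ℝ), gammaDens a y = (fun _ => (0:ℝ≥0∞)) y := by
      intro y hy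
      simp only [Set.mem_Iio] at hy
      unfold gammaDens
      rw [Set.indicator_of_notMem (by simp only [Set.mem_Ioi, not_lt]; linarith)]
      simp
    rw [setLIntegral_congr_fun measurableSet_Iio hz, lintegral_zero]

lemma gamma1_moment {a : ℝ} (ha : 0 ≤ a) (N : ℕ) :
    ∫⁻ y, ENNReal.ofReal (y ^ N) ∂gamma1 a = ENNReal.ofReal (asc a N) := by
  unfold gamma1
  rcases eq_or_lt_of_le ha with h0 | hpos
  · rw [if_pos h0.symm, lintegral_dirac]
    cases N with
    | zero => simp
    | succ N =>
      rw [zero_pow (Nat.succ_ne_zero N)]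
      have hz : asc a (N+1) = 0 := by
        refine Finset.prod_eq_zero (Finset.mem_range.mpr (Nat.succ_pos N)) ?_
        rw [← h0]; simp
      rw [hz]
  · rw [if_neg hpos.ne']
    have hΓ : 0 < Real.Gamma a := Real.Gamma_pos_of_pos hpos
    have hmN : Measurable fun y : ℝ => ENNReal.ofReal (y ^ N) :=
      (measurable_id.pow_const N).ennreal_ofReal
    rw [lintegral_withDensity_eq_lintegral_mul volume (measurable_gammaDens a) hmN]
    have hpt : (fun y => (gammaDens a * fun y => ENNReal.ofReal (y ^ N)) y)
        = (Set.Ioi (0:ℝ)).indicator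
            (fun y => ENNReal.ofReal (Real.exp (-y) * y ^ ((a + N : ℝ) - 1))
              * ENNReal.ofReal (1 / Real.Gamma a)) := by
      funext y
      simp only [Pi.mul_apply, gammaDens]
      by_cases hy : y ∈ Set.Ioi (0:ℝ)
      · have hy0 : (0:ℝ) < y := hy
        rw [Set.indicator_of_mem hy, Set.indicator_of_mem hy]
        rw [← ENNReal.ofReal_mul (by positivity), ← ENNReal.ofReal_mul (by positivity)]
        congr 1
        have hN : (y : ℝ) ^ (N:ℕ) = y ^ ((N:ℕ):ℝ) := (Real.rpow_natCast y N).symm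
        rw [hN, show (a + (N:ℝ)) - 1 = (a-1) + (N:ℝ) by ring, Real.rpow_add hy0]
        field_simp
      · rw [Set.indicator_of_notMem hy, Set.indicator_of_notMem hy]
        simp
    have hstep : ∫⁻ y, (gammaDens a * fun y => ENNReal.ofReal (y ^ N)) y ∂volume
        = ∫⁻ y, (Set.Ioi (0:ℝ)).indicator
            (fun y => ENNReal.ofReal (Real.exp (-y) * y ^ ((a + N : ℝ) - 1))
              * ENNReal.ofReal (1 / Real.Gamma a)) y ∂volume :=
      lintegral_congr fun y => congrFun hpt y
    rw [hstep, lintegral_indicator measurableSet_Ioi]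
    rw [lintegral_mul_const _ (by
      exact (measurable_id.neg.exp.mul (measurable_id'.pow_const _)).ennreal_ofReal)]
    have hGint : ∫⁻ y in Set.Ioi (0:ℝ),
        ENNReal.ofReal (Real.exp (-y) * y ^ ((a + N : ℝ) - 1))
        = ENNReal.ofReal (Real.Gamma (a + N)) := by
      have haN : (0:ℝ) < a + N := by positivity
      rw [Real.Gamma_eq_integral haN]
      rw [← ofReal_integral_eq_lintegral_ofReal (Real.GammaIntegral_convergent haN)
        ((ae_restrict_iff' measurableSet_Ioi).mpr (ae_of_all _ fun y hy =>
          mul_nonneg (Real.exp_pos _).le (Real.rpow_nonneg (le_of_lt hy) _)))]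
    rw [hGint, ← ENNReal.ofReal_mul (Real.Gamma_nonneg_of_nonneg (by positivity))]
    congr 1
    rw [Gamma_asc hpos]
    field_simp

lemma gamma1_univ {a : ℝ} (ha : 0 ≤ a) : gamma1 a Set.univ = 1 := by
  have h := gamma1_moment ha 0
  simp only [pow_zero, ENNReal.ofReal_one, asc_zero, lintegral_one] at h
  exact h

lemma gamma1_isProb {a : ℝ} (ha : 0 ≤ a) : IsProbabilityMeasure (gamma1 a) :=
  ⟨gamma1_univ ha⟩

lemma lintegral_pi_prod : ∀ (r : ℕ) (μ : Fin r → Measure ℝ), (∀ i, SigmaFinite (μ i)) →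
    ∀ (f : Fin r → ℝ → ℝ≥0∞), (∀ i, Measurable (f i)) →
    ∫⁻ y, ∏ i, f i (y i) ∂Measure.pi μ = ∏ i, ∫⁻ t, f i t ∂μ i := by
  intro r
  induction r with
  | zero =>
    intro μ _ f _
    simp [Measure.pi_empty_univ]
  | succ r ih =>
    intro μ hσ f hf
    haveI := hσ
    have hmp := (measurePreserving_piFinSuccAbove μ 0).symm
    rw [← hmp.lintegral_comp_emb (MeasurableEquiv.measurableEmbedding _)
      (fun y => ∏ i, f i (y i))]
    simp_rw [MeasurableEquiv.piFinSuccAbove_symm_apply, Fin.insertNthEquiv, Equiv.coe_fn_mk,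
      Fin.insertNth_zero, Fin.prod_univ_succ, Fin.cons_zero, Fin.cons_succ, Fin.zero_succAbove,
      cast_eq]
    have hg : Measurable fun z : Fin r → ℝ => ∏ i, f i.succ (z i) :=
      Finset.measurable_prod Finset.univ fun i _ => (hf i.succ).comp (measurable_pi_apply i)
    rw [lintegral_prod_mul (hf 0).aemeasurable hg.aemeasurable]
    rw [ih (fun i => μ i.succ) (fun i => hσ i.succ) (fun i => f i.succ) (fun i => hf i.succ)]

end MLagAux

open MLagAux in
/-- for `α_1,...,α_r ≥ -1`, `x ≥ 0` and any fixed `k ∈ ℕ^r`, the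
sequence `(ℒ_{n·k}^{(α)}(x))_{n≥0}` is a Stieltjes moment sequence: there is a
positive measure `μ` on `[0,∞)` with all moments finite such that
`ℒ_{nk}^{(α)}(x) = ∫_0^∞ y^n dμ(y)` for all `n ≥ 0`. -/
theorem unsignedMultipleLaguerre_diagonal_stieltjes (r : ℕ) (α : Fin r → ℝ)
    (hα : ∀ i, -1 ≤ α i) (x : ℝ) (hx : 0 ≤ x) (k : Fin r → ℕ) :
    ∃ μ : Measure ℝ, μ (Set.Iio 0) = 0 ∧
      (∀ n : ℕ, Integrable (fun y => y ^ n) μ) ∧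
      ∀ n : ℕ, unsignedMultipleLaguerreVal r α (fun i => n * k i) x = ∫ y, y ^ n ∂μ := by
  classical
  have ha : ∀ (i : Fin r) (m : ℕ), (0:ℝ) ≤ α i + 1 + m :=
    fun i m => add_nonneg (by linarith [hα i]) (Nat.cast_nonneg m)
  have hσ : ∀ (m : ℕ) (i : Fin r), SigmaFinite (gamma1 (α i + 1 + m)) :=
    fun m i => by haveI := gamma1_isProb (ha i m); infer_instance
  have hT : Measurable (fun y : Fin r → ℝ => ∏ i, y i ^ k i) :=
    Finset.measurable_prod _ fun i _ => (measurable_pi_apply i).pow_const (k i)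
  set c : ℕ → ℝ := fun m => Real.exp (-x) * x ^ m / m.factorial with hc
  have hcnn : ∀ m, 0 ≤ c m := fun m => by positivity
  set ν : ℕ → Measure (Fin r → ℝ) :=
    fun m => Measure.pi (fun i => gamma1 (α i + 1 + m)) with hν
  set P : ℕ → ℕ → ℝ := fun n m => c m * ∏ i, asc (α i + 1 + m) (n * k i) with hP
  have hPnn : ∀ n m, 0 ≤ P n m := fun n m =>
    mul_nonneg (hcnn m) (Finset.prod_nonneg fun i _ => asc_nonneg (ha i m) _)
  have hmom : ∀ (m n : ℕ),
      ∫⁻ y, ENNReal.ofReal (y ^ n) ∂((ν m).map (fun y : Fin r → ℝ => ∏ i, y i ^ k i))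
        = ENNReal.ofReal (∏ i, asc (α i + 1 + m) (n * k i)) := by
    intro m n
    have hfm : Measurable fun y : ℝ => ENNReal.ofReal (y ^ n) :=
      (measurable_id.pow_const n).ennreal_ofReal
    rw [lintegral_map hfm hT]
    haveI := fun i => hσ m i
    have hae : ∀ᵐ y ∂ν m, ∀ i, 0 ≤ y i := by
      rw [ae_iff]
      simp only [hν]
      refine measure_mono_null (fun y hy => ?_)
        (measure_iUnion_null
          (s := fun i => (Function.eval i : (Fin r → ℝ) → ℝ) ⁻¹' Set.Iio (0:ℝ))
          fun i => Measure.pi_eval_preimage_null _ gamma1_Iio)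
      simp only [Set.mem_setOf_eq, not_forall, not_le] at hy
      obtain ⟨i, hi⟩ := hy
      exact Set.mem_iUnion.mpr ⟨i, hi⟩
    have hcong : ∫⁻ y : Fin r → ℝ, ENNReal.ofReal ((∏ i, y i ^ k i) ^ n) ∂ν m
        = ∫⁻ y : Fin r → ℝ, ∏ i, ENNReal.ofReal (y i ^ (n * k i)) ∂ν m := by
      refine lintegral_congr_ae (hae.mono fun y hy => ?_)
      show ENNReal.ofReal ((∏ i, y i ^ k i) ^ n) = ∏ i, ENNReal.ofReal (y i ^ (n * k i))
      rw [← Finset.prod_pow]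
      rw [ENNReal.ofReal_prod_of_nonneg (fun i _ => pow_nonneg (pow_nonneg (hy i) _) _)]
      exact Finset.prod_congr rfl fun i _ => by rw [← pow_mul, mul_comm (k i) n]
    rw [hcong, hν, lintegral_pi_prod r _ (hσ m)
      (fun i => fun t : ℝ => ENNReal.ofReal (t ^ (n * k i)))
      (fun i => (measurable_id.pow_const (n * k i)).ennreal_ofReal)]
    rw [Finset.prod_congr rfl (fun i _ => gamma1_moment (ha i m) (n * k i))]
    rw [← ENNReal.ofReal_prod_of_nonneg (fun i _ => asc_nonneg (ha i m) _)]
  have hkey : ∀ n : ℕ, HasSum (P n) (unsignedMultipleLaguerreVal r α (fun i => n * k i) x) := by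
    intro n
    have hrw : P n = fun m => ∑ kk ∈ Fintype.piFinset (fun i => Finset.range (n * k i + 1)),
        (∏ i, (((n * k i).choose (kk i) : ℝ) *
          asc (α i + 1 + (∑ j' ∈ Finset.univ.filter (fun j' => j' ≤ i), (kk j' : ℝ)))
            (n * k i - kk i)))
          * (c m * fall (m : ℝ) (∑ i, kk i)) := by
      funext m
      rw [hP]
      simp only
      rw [← dagger r (fun i => α i + 1) (fun i => n * k i) (m : ℝ), Finset.mul_sum]
      exact Finset.sum_congr rfl fun kk _ => by ring
    have hval : unsignedMultipleLaguerreVal r α (fun i => n * k i) x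
        = ∑ kk ∈ Fintype.piFinset (fun i => Finset.range (n * k i + 1)),
        (∏ i, (((n * k i).choose (kk i) : ℝ) *
          asc (α i + 1 + (∑ j' ∈ Finset.univ.filter (fun j' => j' ≤ i), (kk j' : ℝ)))
            (n * k i - kk i)))
          * x ^ (∑ i, kk i) := rfl
    rw [hval, hrw]
    exact hasSum_sum fun kk _ => (hasSum_poisson_fall x (∑ i, kk i)).mul_left _
  have hLnn : ∀ n : ℕ, 0 ≤ unsignedMultipleLaguerreVal r α (fun i => n * k i) x := by
    intro n
    rw [← (hkey n).tsum_eq]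
    exact tsum_nonneg (hPnn n)
  refine ⟨Measure.sum (fun m => ENNReal.ofReal (c m) •
      (ν m).map (fun y : Fin r → ℝ => ∏ i, y i ^ k i)), ?_, ?_, ?_⟩
  · -- vanishing on the negative half-line
    rw [Measure.sum_apply _ measurableSet_Iio]
    have hz : ∀ m : ℕ, (ENNReal.ofReal (c m) •
        (ν m).map (fun y : Fin r → ℝ => ∏ i, y i ^ k i)) (Set.Iio 0) = 0 := by
      intro m
      haveI := fun i => hσ m i
      rw [Measure.smul_apply, Measure.map_apply hT measurableSet_Iio, hν]
      have hsub : (fun y : Fin r → ℝ => ∏ i, y i ^ k i) ⁻¹' Set.Iio 0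
          ⊆ ⋃ i, (Function.eval i : (Fin r → ℝ) → ℝ) ⁻¹' Set.Iio (0:ℝ) := by
        intro y hy
        by_contra hcon
        simp only [Set.mem_iUnion, Set.mem_preimage, Set.mem_Iio, not_exists, not_lt] at hcon
        have : 0 ≤ ∏ i, y i ^ k i :=
          Finset.prod_nonneg fun i _ => pow_nonneg (hcon i) _
        exact absurd hy (by simp [Set.mem_Iio, not_lt, this])
      rw [measure_mono_null hsub
        (measure_iUnion_null fun i => Measure.pi_eval_preimage_null _ gamma1_Iio)]
      simp
    simp [hz]
  all_goals {
    have hIio : (Measure.sum (fun m => ENNReal.ofReal (c m) •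
        (ν m).map (fun y : Fin r → ℝ => ∏ i, y i ^ k i))) (Set.Iio 0) = 0 := by
      rw [Measure.sum_apply _ measurableSet_Iio]
      have hz : ∀ m : ℕ, (ENNReal.ofReal (c m) •
          (ν m).map (fun y : Fin r → ℝ => ∏ i, y i ^ k i)) (Set.Iio 0) = 0 := by
        intro m
        haveI := fun i => hσ m i
        rw [Measure.smul_apply, Measure.map_apply hT measurableSet_Iio, hν]
        have hsub : (fun y : Fin r → ℝ => ∏ i, y i ^ k i) ⁻¹' Set.Iio 0
            ⊆ ⋃ i, (Function.eval i : (Fin r → ℝ) → ℝ) ⁻¹' Set.Iio (0:ℝ) := by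
          intro y hy
          by_contra hcon
          simp only [Set.mem_iUnion, Set.mem_preimage, Set.mem_Iio, not_exists, not_lt] at hcon
          have : 0 ≤ ∏ i, y i ^ k i :=
            Finset.prod_nonneg fun i _ => pow_nonneg (hcon i) _
          exact absurd hy (by simp [Set.mem_Iio, not_lt, this])
        rw [measure_mono_null hsub
          (measure_iUnion_null fun i => Measure.pi_eval_preimage_null _ gamma1_Iio)]
        simp
      simp [hz]
    have hae : ∀ᵐ y ∂(Measure.sum (fun m => ENNReal.ofReal (c m) •
        (ν m).map (fun y : Fin r → ℝ => ∏ i, y i ^ k i))), 0 ≤ y := by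
      rw [ae_iff]
      convert hIio using 2
      ext y
      simp [not_le]
    have hμmom : ∀ n : ℕ, ∫⁻ y, ENNReal.ofReal (y ^ n)
        ∂(Measure.sum (fun m => ENNReal.ofReal (c m) •
          (ν m).map (fun y : Fin r → ℝ => ∏ i, y i ^ k i)))
        = ENNReal.ofReal (unsignedMultipleLaguerreVal r α (fun i => n * k i) x) := by
      intro n
      rw [lintegral_sum_measure]
      have hterm : ∀ m : ℕ, ∫⁻ y, ENNReal.ofReal (y ^ n)
          ∂(ENNReal.ofReal (c m) • (ν m).map (fun y : Fin r → ℝ => ∏ i, y i ^ k i))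
          = ENNReal.ofReal (P n m) := by
        intro m
        rw [lintegral_smul_measure, hmom m n, smul_eq_mul, ← ENNReal.ofReal_mul (hcnn m)]
      rw [tsum_congr hterm,
        ← ENNReal.ofReal_tsum_of_nonneg (hPnn n) (hkey n).summable, (hkey n).tsum_eq]
    first
    | · -- integrability of all moments
        intro n
        constructor
        · exact (measurable_id.pow_const n).aestronglyMeasurable
        · rw [hasFiniteIntegral_iff_ofReal (hae.mono fun y hy => pow_nonneg hy n)]
          rw [hμmom n]
          exact ENNReal.ofReal_lt_top
    | · -- the moments
        intro n
        rw [integral_eq_lintegral_of_nonneg_ae (hae.mono fun y hy => pow_nonneg hy n)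
          (measurable_id.pow_const n).aestronglyMeasurable]
        rw [hμmom n, ENNReal.toReal_ofReal (hLnn n)]
  }
end

section
/- For α ≥ -1 and x ≥ 0, every 2×2 Hankel determinant ℒ_n^{(α)}(x) ℒ_{n+2}^{(α)}(x) − ℒ_{n+1}^{(α)}(x)^2 of the unsigned monic Laguerre polynomials is nonnegative, for all n ≥ 0. -/
open Finset

/-- Rising-factorial-type product `(α+1+k)(α+2+k)⋯(α+m+k)`. -/
noncomputable def lagP (α : ℝ) (k m : ℕ) : ℝ :=
  ∏ j ∈ Finset.range m, (α + 1 + (k : ℝ) + (j : ℝ))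

lemma lagP_succ (α : ℝ) (k m : ℕ) :
    lagP α k (m + 1) = (α + 1 + k + m) * lagP α k m := by
  rw [lagP, prod_range_succ, lagP]; ring

lemma lagP_succ' (α : ℝ) (k m : ℕ) :
    lagP α k (m + 1) = (α + 1 + k) * lagP α (k + 1) m := by
  rw [lagP, prod_range_succ', lagP, mul_comm]
  congr 1
  · push_cast; ring_nf
  · push_cast; ring_nf

lemma lagP_shift (α : ℝ) (k m : ℕ) :
    lagP α (k + 1) (m + 1) = lagP α k (m + 1) + (m + 1) * lagP α (k + 1) m := by
  rw [lagP_succ, lagP_succ']; push_cast; ring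

lemma lagP_nonneg (α : ℝ) (hα : -1 ≤ α) (k m : ℕ) : 0 ≤ lagP α k m :=
  Finset.prod_nonneg fun j _ => by
    have h1 : (0:ℝ) ≤ (k : ℝ) := Nat.cast_nonneg k
    have h2 : (0:ℝ) ≤ (j : ℝ) := Nat.cast_nonneg j
    linarith

/-- Auxiliary sum `T_n = Σ_k C(n,k) (α+2+k)^{rising (n-k)} x^{k+1}`. -/
noncomputable def lagT (α x : ℝ) (n : ℕ) : ℝ :=
  ∑ k ∈ Finset.range (n + 1), (n.choose k : ℝ) * lagP α (k + 1) (n - k) * x ^ (k + 1)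

lemma lag_repr (α x : ℝ) (n : ℕ) :
    unsignedLaguerreVal α x n
      = ∑ k ∈ Finset.range (n + 1), (n.choose k : ℝ) * lagP α k (n - k) * x ^ k := rfl

lemma lagA (α x : ℝ) (n : ℕ) :
    unsignedLaguerreVal α x (n + 1)
      = (α + n + 1) * unsignedLaguerreVal α x n + lagT α x n := by
  rw [lag_repr, lag_repr, lagT]
  rw [Finset.sum_range_succ'
    (fun k => ((n+1).choose k : ℝ) * lagP α k (n + 1 - k) * x ^ k)]
  simp only [Nat.succ_sub_succ, Nat.choose_succ_succ, Nat.choose_zero_right,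
    Nat.sub_zero, Nat.cast_add, Nat.cast_one, pow_zero, mul_one, one_mul]
  rw [show (∑ k ∈ range (n+1), ((n.choose k : ℝ) + (n.choose (k+1) : ℝ)) * lagP α (k+1) (n - k) * x ^ (k+1))
      = (∑ k ∈ range (n+1), (n.choose k : ℝ) * lagP α (k+1) (n - k) * x ^ (k+1))
        + ∑ k ∈ range (n+1), (n.choose (k+1) : ℝ) * lagP α (k+1) (n - k) * x ^ (k+1) by
    rw [← Finset.sum_add_distrib]; exact Finset.sum_congr rfl fun k _ => by ring]
  rw [Finset.mul_sum, Finset.sum_range_succ'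
    (fun k => (α + n + 1) * ((n.choose k : ℝ) * lagP α k (n - k) * x ^ k))]
  rw [Finset.sum_range_succ
    (fun k => (n.choose (k+1) : ℝ) * lagP α (k+1) (n - k) * x ^ (k+1))]
  simp only [Nat.choose_self, Nat.choose_succ_self, Nat.cast_zero, zero_mul, add_zero,
    Nat.choose_zero_right, Nat.cast_one, pow_zero, mul_one, one_mul, Nat.sub_zero,
    Nat.succ_sub_succ]
  have h1 : ∀ k ∈ range n, ((n.choose (k+1) : ℝ) * lagP α (k+1) (n - k) * x ^ (k+1))
      = (α + n + 1) * ((n.choose (k+1) : ℝ) * lagP α (k+1) (n - (k+1)) * x ^ (k+1)) := by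
    intro k hk
    have hk' : k < n := mem_range.mp hk
    have : n - k = (n - (k+1)) + 1 := by omega
    rw [this, lagP_succ]
    have : ((n - (k+1) : ℕ) : ℝ) = (n : ℝ) - (k : ℝ) - 1 := by
      have : k + 1 ≤ n := hk'
      push_cast [Nat.cast_sub this]; ring
    rw [this]; push_cast; ring
  rw [Finset.sum_congr rfl h1]
  have h2 : lagP α 0 (n + 1) = (α + n + 1) * lagP α 0 n := by
    rw [lagP_succ]; push_cast; ring
  rw [h2]
  ring

lemma lagC (α x : ℝ) (n : ℕ) :
    lagT α x (n + 1)
      = x * unsignedLaguerreVal α x (n + 1) + (n + 1) * lagT α x n := by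
  rw [lagT, lag_repr, lagT]
  have key : ∀ k ∈ range (n + 2),
      (((n+1).choose k : ℝ) * lagP α (k + 1) (n + 1 - k) * x ^ (k + 1))
        = x * (((n+1).choose k : ℝ) * lagP α k (n + 1 - k) * x ^ k)
          + (n + 1) * ((n.choose k : ℝ) * lagP α (k + 1) (n - k) * x ^ (k + 1)) := by
    intro k hk
    have hk2 : k < n + 2 := mem_range.mp hk
    by_cases h : k ≤ n
    · have hm : n + 1 - k = (n - k) + 1 := by omega
      rw [hm, lagP_shift]
      have hnat : (n+1).choose k * (n + 1 - k) = (n + 1) * n.choose k := by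
        have h1 := Nat.add_one_mul_choose_eq n k
        have h2 := Nat.choose_succ_right_eq (n+1) k
        omega
      have hc : ((n+1).choose k : ℝ) * (((n - k : ℕ) : ℝ) + 1) = (n + 1 : ℝ) * (n.choose k : ℝ) := by
        have : (((n - k : ℕ) : ℝ) + 1) = ((n + 1 - k : ℕ) : ℝ) := by
          rw [hm]; push_cast; ring
        rw [this]
        exact_mod_cast congrArg (Nat.cast : ℕ → ℝ) hnat
      linear_combination (lagP α (k + 1) (n - k) * x ^ (k + 1)) * hc
    · have hk1 : k = n + 1 := by omega
      subst hk1
      simp [Nat.choose_succ_self, lagP, pow_succ]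
      ring
  rw [Finset.sum_congr rfl key, Finset.sum_add_distrib, Finset.mul_sum, Finset.mul_sum]
  congr 1
  rw [Finset.sum_range_succ]
  simp [Nat.choose_succ_self]

/-- Three-term recurrence. -/
lemma lag_rec (α x : ℝ) (n : ℕ) :
    unsignedLaguerreVal α x (n + 2)
      = (x + 2 * n + α + 3) * unsignedLaguerreVal α x (n + 1)
        - (n + 1) * (n + 1 + α) * unsignedLaguerreVal α x n := by
  have hA1 := lagA α x (n + 1)
  have hA0 := lagA α x n
  have hC := lagC α x n
  push_cast at hA1
  linear_combination hA1 + hC - ((n : ℝ) + 1) * hA0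

lemma lag_nonneg (α : ℝ) (hα : -1 ≤ α) (x : ℝ) (hx : 0 ≤ x) (n : ℕ) :
    0 ≤ unsignedLaguerreVal α x n := by
  rw [lag_repr]
  refine Finset.sum_nonneg fun k _ => ?_
  have := lagP_nonneg α hα k (n - k)
  positivity

lemma lag_zero (α x : ℝ) : unsignedLaguerreVal α x 0 = 1 := by
  simp [unsignedLaguerreVal]

lemma lag_one (α x : ℝ) : unsignedLaguerreVal α x 1 = x + α + 1 := by
  rw [lagA, lag_zero, lagT]
  simp [lagP]
  ring

/-- Growth estimate: `ℒ_{n+1} ≥ (x+n+α+1) ℒ_n`. -/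
lemma lag_mono (α : ℝ) (hα : -1 ≤ α) (x : ℝ) (hx : 0 ≤ x) (n : ℕ) :
    (x + n + α + 1) * unsignedLaguerreVal α x n ≤ unsignedLaguerreVal α x (n + 1) := by
  induction n with
  | zero => rw [lag_zero, lag_one]; push_cast; linarith
  | succ n ih =>
    have hrec := lag_rec α x n
    have h0 := lag_nonneg α hα x hx n
    have h1 := lag_nonneg α hα x hx (n + 1)
    have step : (n + 1 + α) * unsignedLaguerreVal α x n ≤ unsignedLaguerreVal α x (n + 1) := by
      nlinarith [ih]
    push_cast
    nlinarith [mul_le_mul_of_nonneg_left step (show (0:ℝ) ≤ (n:ℝ) + 1 by positivity)]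

/-- for `α ≥ -1` and `x ≥ 0`, every 2×2 Hankel determinant
`ℒ_n^{(α)}(x) ℒ_{n+2}^{(α)}(x) − ℒ_{n+1}^{(α)}(x)²` is nonnegative. -/
theorem unsignedLaguerre_hankel_2x2 (α : ℝ) (hα : -1 ≤ α) (x : ℝ) (hx : 0 ≤ x) (n : ℕ) :
    0 ≤ unsignedLaguerreVal α x n * unsignedLaguerreVal α x (n + 2)
          - unsignedLaguerreVal α x (n + 1) ^ 2 := by
  induction n with
  | zero =>
    have hrec := lag_rec α x 0
    rw [lag_zero, lag_one] at *
    push_cast at hrec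
    rw [hrec]
    nlinarith
  | succ n ih =>
    have hrec0 := lag_rec α x n
    have hrec1 := lag_rec α x (n + 1)
    have hm := lag_mono α hα x hx (n + 1)
    simp only [show n + 1 + 2 = n + 3 from rfl, show n + 1 + 1 = n + 2 from rfl] at hrec1 hm
    push_cast at hrec0 hrec1 hm ⊢
    have h0 := lag_nonneg α hα x hx n
    have h1 := lag_nonneg α hα x hx (n + 1)
    have h2 := lag_nonneg α hα x hx (n + 2)
    have hcn : (0:ℝ) ≤ (n:ℝ) := Nat.cast_nonneg n
    have hcoef : (0:ℝ) ≤ ((n:ℝ)+1) * ((n:ℝ)+1+α) := by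
      apply mul_nonneg <;> linarith
    have hIH : unsignedLaguerreVal α x (n+1) ^ 2
        ≤ unsignedLaguerreVal α x n * unsignedLaguerreVal α x (n+2) := by linarith
    have e1 : ((n:ℝ)+1) * ((n:ℝ)+1+α) * unsignedLaguerreVal α x (n+1) ^ 2
        ≤ ((n:ℝ)+1) * ((n:ℝ)+1+α)
            * (unsignedLaguerreVal α x n * unsignedLaguerreVal α x (n+2)) :=
      mul_le_mul_of_nonneg_left hIH hcoef
    have e2 : 2 * unsignedLaguerreVal α x (n+1)
          * ((x + ((n:ℝ)+1) + α + 1) * unsignedLaguerreVal α x (n+1))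
        ≤ 2 * unsignedLaguerreVal α x (n+1) * unsignedLaguerreVal α x (n+2) :=
      mul_le_mul_of_nonneg_left hm (by linarith)
    have key : unsignedLaguerreVal α x (n+1) * unsignedLaguerreVal α x (n+3)
          - unsignedLaguerreVal α x (n+2) ^ 2
        = 2 * unsignedLaguerreVal α x (n+1) * unsignedLaguerreVal α x (n+2)
          + ((n:ℝ)+1) * ((n:ℝ)+1+α)
            * (unsignedLaguerreVal α x n * unsignedLaguerreVal α x (n+2))
          - (((n:ℝ)+2) * ((n:ℝ)+2+α)) * unsignedLaguerreVal α x (n+1) ^ 2 := by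
      rw [hrec1, hrec0]; ring
    rw [key]
    nlinarith [e1, e2, sq_nonneg (unsignedLaguerreVal α x (n+1))]
end
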